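/- arXiv:2212.01931 — 10 statements merged into one kernel-verified Lean document; each statement's English description precedes it below -/
import Mathlib

section
/- Let m be a positive integer, let q = 2^{3m}, and fix δ ∈ F_q. Let s be a positive integer such that either s = 2^{2m}+1, or s = 2^{im−1} + 2^{m−1} for some i ∈ {2,3} with gcd((i−1)m − 1, 3m) = 1. Then the polynomial map F(x) = (x^{2^m} + x + δ)^s + x is a permutation of F_q (i.e., x ↦ F(x) is a bijection of F_q). -/
/-!
Let `σ x = x ^ 2 ^ m`, a field automorphism of order 3, and `g t = t ^ s`. If
`g (σ x + x + δ) + x = g (σ y + y + δ) + y`, then `a = σ x + x + δ`, `b = σ y + y + δ` and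
`z = x + y` satisfy `a + b = σ z + z` and `g a + g b = z`, so `d = a + b` has trace
`d + σ d + σ² d = 0`; we show `d = 0`. For each admissible `s`, `g a` or `(g a)²` is a product of
two conjugates of `a`, and adding the equation to its conjugate under `σ` eliminates everything but
`d` and the `σ`-invariant `c = a + σ a + σ² a`: one gets `d (d + c + 1) = 0` for `s = 2^(2m) + 1`
and `d² = c σ^(i-1) d` otherwise. In characteristic 2 a `σ`-invariant element of trace zero
vanishes, which settles the first case. In the second, `w = d / c` satisfies
`w ^ 2 ^ ((i-1) m) = w²`, so `w` is a periodic point of squaring of periods `(i-1) m - 1` and `3m`,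
hence of period `1` by the gcd condition; then `d = c` is `σ`-invariant, so again `d = 0`.
-/

open Function

section

variable {F : Type*} [Field F]

theorem map_trace (σ : F →+* F) (hσ : ∀ a, σ (σ (σ a)) = a) (a : F) :
    σ (a + σ a + σ (σ a)) = a + σ a + σ (σ a) := by
  rw [map_add, map_add, hσ]; ring

variable [CharP F 2]

theorem eq_zero_or_eq_one_of_pow_two_pow_eq_sq [Fintype F] {n k : ℕ}
    (hF : Fintype.card F = 2 ^ n) (hk : 0 < k) (hkn : Nat.Coprime (k - 1) n) {w : F}
    (hw : w ^ 2 ^ k = w ^ 2) : w = 0 ∨ w = 1 := by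
  have hpn : IsPeriodicPt (frobenius F 2) n w := by
    rw [IsPeriodicPt, IsFixedPt, iterate_frobenius, ← hF, FiniteField.pow_card]
  have hpk : IsPeriodicPt (frobenius F 2) (k - 1) w := by
    apply frobenius_inj F 2
    rw [← iterate_succ_apply' (frobenius F 2), Nat.succ_eq_add_one, Nat.sub_add_cancel hk,
      iterate_frobenius, hw, frobenius_def]
  have h1 := hpk.gcd hpn
  rw [hkn.gcd_eq_one, IsPeriodicPt, IsFixedPt, iterate_one, frobenius_def] at h1
  exact eq_zero_or_one_of_sq_eq_self h1

theorem eq_zero_of_map_eq_self_of_trace_eq_zero (τ : F →+* F) {d : F} (hd : τ d = d)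
    (htr : d + τ d + τ (τ d) = 0) : d = 0 := by
  rwa [hd, hd, CharTwo.add_self_eq_zero, zero_add] at htr

theorem eq_zero_of_sq_eq_mul_map (τ : F →+* F) (hτ : ∀ w, τ w = w ^ 2 → w = 0 ∨ w = 1)
    {c d : F} (hc : τ c = c) (htr : d + τ d + τ (τ d) = 0) (h : d ^ 2 = c * τ d) : d = 0 := by
  rcases eq_or_ne c 0 with rfl | hc0
  · simpa using h
  have hw : τ (d / c) = (d / c) ^ 2 := by
    rw [map_div₀, hc, div_pow, h]; field_simp
  rcases hτ _ hw with hw0 | hw1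
  · simpa [hc0] using hw0
  · obtain rfl : d = c := (div_eq_one_iff_eq hc0).1 hw1
    exact eq_zero_of_map_eq_self_of_trace_eq_zero τ hc htr

variable (σ : F →+* F)

theorem trace_eq_zero_of_eq_coboundary (hσ : ∀ a, σ (σ (σ a)) = a) {d z : F}
    (hd : d = σ z + z) : d + σ d + σ (σ d) = 0 := by
  simp only [hd, map_add, hσ]; grind

theorem eq_of_mul_map_map (hσ : ∀ a, σ (σ (σ a)) = a) {a b z : F}
    (hab : a + b = σ z + z) (h : a * σ (σ a) + b * σ (σ b) = z) : a = b := by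
  have htr := trace_eq_zero_of_eq_coboundary σ hσ hab
  have hσh : σ a * a + σ b * b = σ z := by simpa [hσ] using congrArg σ h
  have key : (a + b) * (a + b + (a + σ a + σ (σ a)) + 1) = 0 := by
    simp only [map_add] at htr
    -- `grind` normalises modulo the characteristic, which `ring` does not.
    linear_combination (norm := grind) h + hσh
  rw [← CharTwo.add_eq_zero]
  refine eq_zero_of_map_eq_self_of_trace_eq_zero σ ?_ htr
  rcases mul_eq_zero.1 key with hd | hd
  · rw [hd, map_zero]
  · rw [add_assoc, CharTwo.add_eq_zero] at hd
    rw [hd, map_add, map_one, map_trace σ hσ]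

theorem eq_of_map_mul_map_map (hσ : ∀ a, σ (σ (σ a)) = a)
    (hw : ∀ w, σ w = w ^ 2 → w = 0 ∨ w = 1) {a b z : F}
    (hab : a + b = σ z + z) (h : σ (σ a) * σ a + σ (σ b) * σ b = z ^ 2) : a = b := by
  have htr := trace_eq_zero_of_eq_coboundary σ hσ hab
  have hσh : a * σ (σ a) + b * σ (σ b) = σ z ^ 2 := by simpa [hσ] using congrArg σ h
  have hσσh : σ a * a + σ b * b = σ (σ z) ^ 2 := by simpa [hσ] using congrArg σ hσh
  rw [← CharTwo.add_eq_zero]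
  refine eq_zero_of_sq_eq_mul_map σ hw (map_trace σ hσ a) htr ?_
  simp only [map_add] at htr ⊢
  linear_combination (norm := grind) h + hσh + hσσh

theorem eq_of_mul_map (hσ : ∀ a, σ (σ (σ a)) = a)
    (hw : ∀ w, σ (σ w) = w ^ 2 → w = 0 ∨ w = 1) {a b z : F}
    (hab : a + b = σ z + z) (h : a * σ a + b * σ b = z ^ 2) : a = b := by
  have htr := trace_eq_zero_of_eq_coboundary σ hσ hab
  have hσh : σ a * σ (σ a) + σ b * σ (σ b) = σ z ^ 2 := by simpa [hσ] using congrArg σ h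
  have hσσh : σ (σ a) * a + σ (σ b) * b = σ (σ z) ^ 2 := by simpa [hσ] using congrArg σ hσh
  rw [← CharTwo.add_eq_zero]
  refine eq_zero_of_sq_eq_mul_map (σ.comp σ) hw (c := a + σ a + σ (σ a))
    (by rw [RingHom.comp_apply, map_trace σ hσ, map_trace σ hσ])
    (by simpa only [RingHom.comp_apply, hσ, add_right_comm _ (σ (σ _))] using htr) ?_
  simp only [map_add, RingHom.comp_apply] at htr ⊢
  linear_combination (norm := grind) h + hσh + hσσh

theorem injective_apply_map_add_add {g : F → F}
    (hg : ∀ a b z, a + b = σ z + z → g a + g b = z → a = b) (δ : F) :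
    Injective fun x => g (σ x + x + δ) + x := by
  intro x y hxy
  have huv : σ x + x + δ = σ y + y + δ :=
    hg _ _ (x + y) (by rw [map_add]; grind) (by grind)
  simpa [huv] using hxy

end

theorem pow_pow_two_mul_add_one {R : Type*} [CommSemiring R] (p : ℕ) [ExpChar R p] (m : ℕ)
    (a : R) : a ^ (p ^ (2 * m) + 1) = a * iterateFrobenius R p m (iterateFrobenius R p m a) := by
  rw [← iterateFrobenius_add_apply, iterateFrobenius_def, pow_add, pow_one, two_mul, mul_comm]

theorem sq_pow_two_pow_sub_one_add {M : Type*} [Monoid M] {k m : ℕ} (hk : 0 < k) (hm : 0 < m)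
    (a : M) : (a ^ (2 ^ (k - 1) + 2 ^ (m - 1))) ^ 2 = a ^ 2 ^ k * a ^ 2 ^ m := by
  rw [← pow_mul, add_mul, ← pow_succ, ← pow_succ, Nat.sub_add_cancel hk, Nat.sub_add_cancel hm,
    pow_add]

theorem stmt_0_general (m : ℕ) (F : Type*) [Field F] [Fintype F]
    (hF : Fintype.card F = 2 ^ (3 * m)) (δ : F) (s : ℕ)
    (h : s = 2 ^ (2 * m) + 1 ∨
      ∃ i, (i = 2 ∨ i = 3) ∧ s = 2 ^ (i * m - 1) + 2 ^ (m - 1) ∧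
        Nat.gcd ((i - 1) * m - 1) (3 * m) = 1) :
    Function.Bijective (fun x : F => (x ^ (2 ^ m) + x + δ) ^ s + x) := by
  have : CharP F 2 := charP_of_card_eq_prime_pow hF
  have hm : 0 < m := by
    have := Nat.one_lt_two_pow_iff.1 (hF ▸ Fintype.one_lt_card (α := F))
    omega
  set σ := iterateFrobenius F 2 m
  have hσσ : ∀ a, σ (σ a) = a ^ 2 ^ (2 * m) := fun a => by
    rw [← iterateFrobenius_add_apply, two_mul]; rfl
  have hσ : ∀ a, σ (σ (σ a)) = a := fun a => by
    rw [← iterateFrobenius_add_apply, ← iterateFrobenius_add_apply, iterateFrobenius_def,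
      show m + m + m = 3 * m by ring, ← hF, FiniteField.pow_card]
  refine Finite.injective_iff_bijective.mp
    (injective_apply_map_add_add σ (g := (· ^ s)) (fun a b z hab h' => ?_) δ)
  rcases h with rfl | ⟨i, rfl | rfl, rfl, hgcd⟩
  · refine eq_of_mul_map_map σ hσ hab ?_
    simpa only [pow_pow_two_mul_add_one] using h'
  · refine eq_of_map_mul_map_map σ hσ
      (fun w hw => eq_zero_or_eq_one_of_pow_two_pow_eq_sq hF hm (by simpa using hgcd) hw) hab ?_
    rw [← h', CharTwo.add_sq, sq_pow_two_pow_sub_one_add (by omega) hm,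
      sq_pow_two_pow_sub_one_add (by omega) hm, ← hσσ, ← hσσ]
    rfl
  · refine eq_of_mul_map σ hσ (fun w hw => eq_zero_or_eq_one_of_pow_two_pow_eq_sq hF (k := 2 * m)
      (by omega) (by simpa using hgcd) (hσσ w ▸ hw)) hab ?_
    rw [← h', CharTwo.add_sq, sq_pow_two_pow_sub_one_add (by omega) hm,
      sq_pow_two_pow_sub_one_add (by omega) hm, ← hF, FiniteField.pow_card, FiniteField.pow_card]
    rfl

theorem stmt_0 (m : ℕ) (hm : 0 < m) (F : Type*) [Field F] [Fintype F]
    (hF : Fintype.card F = 2 ^ (3 * m)) (δ : F) (s : ℕ) (hs : 0 < s)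
    (h : s = 2 ^ (2 * m) + 1 ∨
      ∃ i, (i = 2 ∨ i = 3) ∧ s = 2 ^ (i * m - 1) + 2 ^ (m - 1) ∧
        Nat.gcd ((i - 1) * m - 1) (3 * m) = 1) :
    Function.Bijective (fun x : F => (x ^ (2 ^ m) + x + δ) ^ s + x) :=
  stmt_0_general m F hF δ s h
end

section
/- Let m be an even positive integer, let q = 3^{2m}, and fix δ ∈ F_q. Then the polynomial map F(x) = (x^{3^m} − x + δ)^{3^{2m−1} + 2·3^{m−1}} + x is a permutation of F_q (i.e., x ↦ F(x) is a bijection of F_q). -/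
/-!
Write `Q = 3^m`, `y = x^Q - x + δ` and `c = δ^Q + δ`. Since `x^(Q^2) = x`, every such `y`
satisfies `y^Q = c - y`, and the exponent `3^(2m-1) + 2·3^(m-1)` turns `y` into
`((c - y) y²)^(3^(m-1))`. Applying the additive map `z ↦ z^Q - z` to `F(x)` and using
`y (c - y)² - (c - y) y² = c² y - y³` in characteristic 3 gives
`(c² y)^(3^(m-1)) + 2y - c - δ`. So if `F(x₁) = F(x₂)`, the difference `u = y₁ - y₂`
satisfies `u^Q = -u` and `(c² u)^(3^(m-1)) = u`, whence `c² u = -u³`. For `u ≠ 0` the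
element `v = c / u` then has `v² = -1` and `v^Q = -v`, which is impossible because
`Q ≡ 1 (mod 4)` for even `m`. Finally `y₁ = y₂` and `F(x₁) = F(x₂)` force `x₁ = x₂`.
-/

lemma FiniteField.charP_of_card_eq_prime_pow {F : Type*} [Field F] [Fintype F] {p n : ℕ}
    (hp : p.Prime) (h : Fintype.card F = p ^ n) : CharP F p := by
  obtain ⟨r, hr, k, hr_prime, hk⟩ := FiniteField.card' F
  obtain rfl : r = p := eq_of_prime_pow_eq hr_prime.prime hp.prime k.pos (hk.symm.trans h)
  exact hr

lemma Nat.three_pow_mod_four_of_even {m : ℕ} (hm : Even m) : 3 ^ m % 4 = 1 := by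
  obtain ⟨j, rfl⟩ := hm
  rw [← two_mul, pow_mul, Nat.pow_mod]
  norm_num

lemma pow_ne_neg_self_of_sq_eq_neg_one {R : Type*} [Ring R] [Nontrivial R] [NoZeroDivisors R]
    (hR : ringChar R ≠ 2) {v : R} (hv : v ^ 2 = -1) {N : ℕ} (hN : N % 4 = 1) :
    v ^ N ≠ -v := by
  have hv4 : v ^ 4 = 1 := by rw [show 4 = 2 * 2 from rfl, pow_mul, hv, neg_one_sq]
  rw [← Nat.div_add_mod N 4, hN, pow_add, pow_mul, hv4, one_pow, one_mul, pow_one]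
  intro h
  rw [(Ring.eq_self_iff_eq_zero_of_char_ne_two hR).mp h.symm, zero_pow two_ne_zero,
    zero_eq_neg] at hv
  exact one_ne_zero hv

lemma pow_sub_add_pow_eq {F : Type*} [Field F] {p n : ℕ} [Fact p.Prime] [CharP F p]
    (hinv : ∀ a : F, (a ^ p ^ n) ^ p ^ n = a) (x δ : F) :
    (x ^ p ^ n - x + δ) ^ p ^ n = (δ ^ p ^ n + δ) - (x ^ p ^ n - x + δ) := by
  rw [add_pow_char_pow, sub_pow_char_pow, hinv]
  ring

lemma add_pow_self_pow_eq {F : Type*} [Field F] {p n : ℕ} [Fact p.Prime] [CharP F p]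
    (hinv : ∀ a : F, (a ^ p ^ n) ^ p ^ n = a) (δ : F) :
    (δ ^ p ^ n + δ) ^ p ^ n = δ ^ p ^ n + δ := by
  rw [add_pow_char_pow, hinv, add_comm]

lemma pow_add_two_mul_eq_of_pow_eq {M : Type*} [CommMonoid M] {p k : ℕ} {y z : M}
    (hy : y ^ p ^ (k + 1) = z) : y ^ (p ^ (2 * k + 1) + 2 * p ^ k) = (z * y ^ 2) ^ p ^ k := by
  rw [pow_add, mul_pow, show 2 * k + 1 = (k + 1) + k by ring, pow_add, pow_mul, hy,
    ← pow_mul, mul_comm 2]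

section CharThree

variable {F : Type*} [Field F] [CharP F 3] {k : ℕ}

lemma mul_sub_sq_sub_sub_mul_sq (c y : F) :
    y * (c - y) ^ 2 - (c - y) * y ^ 2 = c ^ 2 * y - y ^ 3 := by
  linear_combination (y ^ 3 - c * y ^ 2) * CharP.cast_eq_zero F 3

lemma pow_pow_sub_pow_of_pow_eq_sub {c y : F} (hc : c ^ 3 ^ (k + 1) = c)
    (hy : y ^ 3 ^ (k + 1) = c - y) :
    (y ^ (3 ^ (2 * k + 1) + 2 * 3 ^ k)) ^ 3 ^ (k + 1) - y ^ (3 ^ (2 * k + 1) + 2 * 3 ^ k)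
      = (c ^ 2 * y) ^ 3 ^ k - c + y := by
  have hcy : (c - y) ^ 3 ^ (k + 1) = y := by rw [sub_pow_char_pow, hc, hy]; ring
  have hy3 : (y ^ 3) ^ 3 ^ k = c - y := by rw [← pow_mul, ← pow_succ', hy]
  have hfrob : ((c - y) * y ^ 2) ^ 3 ^ (k + 1) = y * (c - y) ^ 2 := by
    rw [mul_pow, hcy, ← pow_mul, mul_comm 2, pow_mul, hy, mul_comm]
  rw [pow_add_two_mul_eq_of_pow_eq hy, ← pow_mul, mul_comm (3 ^ k), pow_mul, hfrob,
    ← sub_pow_char_pow, mul_sub_sq_sub_sub_mul_sq, sub_pow_char_pow, hy3]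
  ring

lemma eq_of_mul_pow_add_two_mul_eq (hk : 3 ^ (k + 1) % 4 = 1)
    (hinv : ∀ a : F, (a ^ 3 ^ (k + 1)) ^ 3 ^ (k + 1) = a) {c y₁ y₂ : F}
    (hc : c ^ 3 ^ (k + 1) = c)
    (h₁ : y₁ ^ 3 ^ (k + 1) = c - y₁) (h₂ : y₂ ^ 3 ^ (k + 1) = c - y₂)
    (h : (c ^ 2 * y₁) ^ 3 ^ k + 2 * y₁ = (c ^ 2 * y₂) ^ 3 ^ k + 2 * y₂) : y₁ = y₂ := by
  by_contra hne
  obtain ⟨u, hu_def⟩ : ∃ u, y₁ - y₂ = u := ⟨_, rfl⟩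
  have hu : u ≠ 0 := hu_def ▸ sub_ne_zero.mpr hne
  have huQ : u ^ 3 ^ (k + 1) = -u := by rw [← hu_def, sub_pow_char_pow, h₁, h₂]; ring
  have hcu : (c ^ 2 * u) ^ 3 ^ k = u := by
    rw [← hu_def, mul_sub, sub_pow_char_pow]
    linear_combination h + (y₂ - y₁) * CharP.cast_eq_zero F 3
  have hc2u : c ^ 2 * u = -u ^ 3 := calc
    c ^ 2 * u = ((c ^ 2 * u) ^ 3 ^ (k + 1)) ^ 3 ^ (k + 1) := (hinv _).symm
    _ = ((c ^ 2 * u) ^ 3 ^ k) ^ 3 ^ (k + 2) := by rw [← pow_mul, ← pow_mul]; ring_nf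
    _ = (u ^ 3 ^ (k + 1)) ^ 3 := by rw [hcu, ← pow_mul, ← pow_succ]
    _ = -u ^ 3 := by rw [huQ]; ring
  have hv : (c / u) ^ 2 = -1 := by
    rw [div_pow, div_eq_iff (pow_ne_zero 2 hu)]
    exact mul_right_cancel₀ hu (by linear_combination hc2u)
  have hvQ : (c / u) ^ 3 ^ (k + 1) = -(c / u) := by rw [div_pow, hc, huQ, div_neg]
  exact pow_ne_neg_self_of_sq_eq_neg_one (by rw [ringChar.eq F 3]; norm_num) hv hk hvQ

lemma pow_sub_self_of_pow_sub_add (hinv : ∀ a : F, (a ^ 3 ^ (k + 1)) ^ 3 ^ (k + 1) = a)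
    (x δ : F) :
    ((x ^ 3 ^ (k + 1) - x + δ) ^ (3 ^ (2 * k + 1) + 2 * 3 ^ k) + x) ^ 3 ^ (k + 1)
        - ((x ^ 3 ^ (k + 1) - x + δ) ^ (3 ^ (2 * k + 1) + 2 * 3 ^ k) + x)
      = ((δ ^ 3 ^ (k + 1) + δ) ^ 2 * (x ^ 3 ^ (k + 1) - x + δ)) ^ 3 ^ k
        + 2 * (x ^ 3 ^ (k + 1) - x + δ) - (δ ^ 3 ^ (k + 1) + δ) - δ := by
  rw [add_pow_char_pow]
  linear_combination
    pow_pow_sub_pow_of_pow_eq_sub (add_pow_self_pow_eq hinv δ) (pow_sub_add_pow_eq hinv x δ)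

theorem injective_pow_sub_add_pow_add_self (hk : 3 ^ (k + 1) % 4 = 1)
    (hinv : ∀ a : F, (a ^ 3 ^ (k + 1)) ^ 3 ^ (k + 1) = a) (δ : F) :
    Function.Injective (fun x : F =>
      (x ^ 3 ^ (k + 1) - x + δ) ^ (3 ^ (2 * k + 1) + 2 * 3 ^ k) + x) := by
  intro x₁ x₂ h
  have hL := congrArg (fun z => z ^ 3 ^ (k + 1) - z) h
  simp only [pow_sub_self_of_pow_sub_add hinv] at hL
  have hy : x₁ ^ 3 ^ (k + 1) - x₁ + δ = x₂ ^ 3 ^ (k + 1) - x₂ + δ :=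
    eq_of_mul_pow_add_two_mul_eq hk hinv (add_pow_self_pow_eq hinv δ)
      (pow_sub_add_pow_eq hinv x₁ δ) (pow_sub_add_pow_eq hinv x₂ δ) (by linear_combination hL)
  simpa only [hy, add_right_inj] using h

end CharThree

theorem stmt_1 (m : ℕ) (hm : 0 < m) (hme : Even m) (F : Type*) [Field F] [Fintype F]
    (hF : Fintype.card F = 3 ^ (2 * m)) (δ : F) :
    Function.Bijective (fun x : F =>
      (x ^ (3 ^ m) - x + δ) ^ (3 ^ (2 * m - 1) + 2 * 3 ^ (m - 1)) + x) := by
  obtain ⟨k, rfl⟩ : ∃ k, m = k + 1 := ⟨m - 1, by omega⟩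
  have := FiniteField.charP_of_card_eq_prime_pow Nat.prime_three hF
  have hinv (a : F) : (a ^ 3 ^ (k + 1)) ^ 3 ^ (k + 1) = a := by
    rw [← pow_mul, ← pow_add, ← two_mul, ← hF, FiniteField.pow_card]
  rw [show 2 * (k + 1) - 1 = 2 * k + 1 by omega, Nat.add_sub_cancel]
  exact Finite.injective_iff_bijective.mp
    (injective_pow_sub_add_pow_add_self (Nat.three_pow_mod_four_of_even hme) hinv δ)
end

section
/- Let m be a positive integer, n = 3m, q = 2^n, and let a ∈ F_q. Let δ ∈ F_q satisfy Tr_m^{3m}(δ) ≠ 1, and let c ∈ F_q be an element not in the subfield F_{2^m} (i.e., c^{2^m} ≠ c). Then the number of x ∈ F_q satisfying both Tr_m^{3m}((1+c)x) = 0 and ((1+c)x)^{2^{3m−1}} + (1+c)(1 + Tr_m^{3m}(δ))x + (a^{2^{2m}} + a^{2^m})·Tr_m^{3m}(x) = 0 is at most 4. -/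
/-!
Write `σ = (·) ^ 2 ^ m`, a field automorphism of order 3, `u = (1 + c) x`, `s = 1 + Tr δ` and
`b = a ^ 2 ^ (2m) + a ^ 2 ^ m`. On the hyperplane `Tr u = 0` the trace `Tr x` is a linear form
`α u + β σu`, with `β ≠ 0` exactly because `1 + c ∉ 𝔽_{2^m}`. Squaring the second equation gives
`u = ((s + bα) u + bβ σu)²`, and applying `σ` (which fixes `s` and `Tr x`) gives a relation of
the same shape for `σu`. In characteristic 2 eliminating `σu` leaves a linearized quartic in `u`
whose linear coefficient `(bβ)²` is nonzero (for `b = 0` the first relation is already a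
quadratic), so there are at most four solutions.
-/

open Polynomial in
theorem ncard_le_four_of_quartic_eq_zero {F : Type*} [Field F] {e₄ e₂ e₁ : F} (he₁ : e₁ ≠ 0)
    {S : Set F} (hS : ∀ x ∈ S, e₄ * x ^ 4 + e₂ * x ^ 2 + e₁ * x = 0) : S.ncard ≤ 4 := by
  set P : F[X] := C e₄ * X ^ 4 + C e₂ * X ^ 2 + C e₁ * X
  have hP : P ≠ 0 := fun h => he₁ (by simpa [P] using congrArg (coeff · 1) h)
  calc S.ncard ≤ (P.rootSet F).ncard :=
        Set.ncard_le_ncard (fun x hx => (mem_rootSet.2 ⟨hP, by simpa [P] using hS x hx⟩))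
          (P.rootSet_finite F)
    _ ≤ P.natDegree := P.ncard_rootSet_le F
    _ ≤ 4 := by simp only [P]; compute_degree

theorem quartic_eq_zero_of_eq_sq_of_eq_sq {R : Type*} [CommRing R] [CharP R 2] {u v p q r w : R}
    (hu : u = (p * u + q * v) ^ 2) (hv : v = (r * u + w * v) ^ 2) :
    (q * r + w * p) ^ 4 * u ^ 4 + (w ^ 4 + p ^ 2 * q ^ 2) * u ^ 2 + q ^ 2 * u = 0 := by
  -- `q² · hv` with `q² v²` taken from `hu`; squaring it and using `hu` once more eliminates `v`
  have hqv : q ^ 2 * v = w ^ 2 * u + (q * r + w * p) ^ 2 * u ^ 2 := by grind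
  grind

section RelTrace

variable {F : Type*} [Field F]

def relTrace (σ : F →+* F) (x : F) : F := x + σ x + σ (σ x)

variable {σ : F →+* F}

theorem map_relTrace (hσ : ∀ z, σ (σ (σ z)) = z) (x : F) : σ (relTrace σ x) = relTrace σ x := by
  simp only [relTrace, map_add, hσ]
  ring

theorem eq_sq_and_map_eq_sq_of_relTrace_eq (hσ : ∀ z, σ (σ (σ z)) = z) {s b u α β x : F}
    (hs : σ s = s) (ht : relTrace σ x = α * u + β * σ u) (hQ : u = (s * u + b * relTrace σ x) ^ 2) :
    u = ((s + b * α) * u + b * β * σ u) ^ 2 ∧ σ u = (σ b * α * u + (s + σ b * β) * σ u) ^ 2 := by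
  have hσQ := congrArg σ hQ
  rw [map_pow, map_add, map_mul, map_mul, hs, map_relTrace hσ, ht] at hσQ
  rw [ht] at hQ
  exact ⟨by linear_combination hQ, by linear_combination hσQ⟩

variable [CharP F 2]

theorem exists_relTrace_eq_of_relTrace_mul_eq_zero {d : F} (hd : σ d ≠ d) :
    ∃ α β : F, β ≠ 0 ∧ ∀ x, relTrace σ (d * x) = 0 →
      relTrace σ x = α * (d * x) + β * σ (d * x) := by
  have hd₀ : d ≠ 0 := by rintro rfl; simp at hd
  have hd₁ : σ d ≠ 0 := (map_ne_zero σ).2 hd₀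
  have hd₂ : σ (σ d) ≠ 0 := (map_ne_zero σ).2 hd₁
  refine ⟨d⁻¹ + (σ (σ d))⁻¹, (σ d)⁻¹ + (σ (σ d))⁻¹, ?_, fun x hT => ?_⟩
  · rw [Ne, CharTwo.add_eq_zero, inv_inj]
    exact fun h => hd (σ.injective h).symm
  simp only [relTrace, map_mul] at hT ⊢
  field_simp
  grind

theorem exists_quartic_of_relTrace_eq_zero (hσ : ∀ z, σ (σ (σ z)) = z) {d s b : F} (hd : σ d ≠ d)
    (hs : σ s = s) :
    ∃ e₄ e₂ e₁ : F, e₁ ≠ 0 ∧ ∀ x, relTrace σ (d * x) = 0 →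
      d * x = (d * s * x + b * relTrace σ x) ^ 2 → e₄ * x ^ 4 + e₂ * x ^ 2 + e₁ * x = 0 := by
  have hd₀ : d ≠ 0 := by rintro rfl; simp at hd
  obtain ⟨α, β, hβ, ht⟩ := exists_relTrace_eq_of_relTrace_mul_eq_zero hd
  rcases eq_or_ne b 0 with rfl | hb
  · refine ⟨0, (s * d) ^ 2, d, hd₀, fun x _ hQ => ?_⟩
    grind
  refine ⟨(b * β * (σ b * α) + (s + σ b * β) * (s + b * α)) ^ 4 * d ^ 4,
    ((s + σ b * β) ^ 4 + (s + b * α) ^ 2 * (b * β) ^ 2) * d ^ 2, (b * β) ^ 2 * d,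
    by positivity, fun x hT hQ => ?_⟩
  obtain ⟨h₀, h₁⟩ :=
    eq_sq_and_map_eq_sq_of_relTrace_eq (b := b) hσ hs (ht x hT) (by linear_combination hQ)
  linear_combination quartic_eq_zero_of_eq_sq_of_eq_sq h₀ h₁

end RelTrace

section FiniteField

variable {F : Type*} [Field F] [Fintype F]

theorem iterateFrobenius_apply_three {p m : ℕ} [Fact p.Prime] [CharP F p]
    (hF : Fintype.card F = p ^ (3 * m)) (z : F) :
    iterateFrobenius F p m (iterateFrobenius F p m (iterateFrobenius F p m z)) = z := by
  simp only [iterateFrobenius_def, ← pow_mul, ← pow_add]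
  rw [show m + m + m = 3 * m by ring, ← hF, FiniteField.pow_card]

theorem sq_pow_two_pow_pred {k : ℕ} (hF : Fintype.card F = 2 ^ k) (hk : 0 < k) (z : F) :
    (z ^ 2 ^ (k - 1)) ^ 2 = z := by
  rw [← pow_mul, ← pow_succ, Nat.sub_add_cancel hk, ← hF, FiniteField.pow_card]

end FiniteField

theorem stmt_4_general (m : ℕ) (hm : 0 < m) (F : Type*) [Field F] [Fintype F]
    (hF : Fintype.card F = 2 ^ (3 * m)) (a δ c : F)
    (hc : c ^ (2 ^ m) ≠ c) :
    {x : F |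
      ((1 + c) * x) + ((1 + c) * x) ^ (2 ^ m) + ((1 + c) * x) ^ (2 ^ (2 * m)) = 0 ∧
      ((1 + c) * x) ^ (2 ^ (3 * m - 1)) +
        (1 + c) * (1 + (δ + δ ^ (2 ^ m) + δ ^ (2 ^ (2 * m)))) * x +
        (a ^ (2 ^ (2 * m)) + a ^ (2 ^ m)) * (x + x ^ (2 ^ m) + x ^ (2 ^ (2 * m))) = 0
      }.ncard ≤ 4 := by
  have : Fact (Nat.Prime 2) := ⟨Nat.prime_two⟩
  have : CharP F 2 := charP_of_card_eq_prime_pow hF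
  have hσ := iterateFrobenius_apply_three hF
  set σ := iterateFrobenius F 2 m
  have hpow : ∀ z : F, z ^ 2 ^ m = σ z := fun z => rfl
  have hpow₂ : ∀ z : F, z ^ 2 ^ (2 * m) = σ (σ z) := fun z => by
    rw [two_mul, pow_add, pow_mul, hpow, hpow]
  simp only [hpow, hpow₂] at hc ⊢
  obtain ⟨e₄, e₂, e₁, he₁, hquartic⟩ :=
    exists_quartic_of_relTrace_eq_zero (d := 1 + c) (s := 1 + relTrace σ δ) (b := σ (σ a) + σ a) hσ
      (by simpa using hc) (by rw [map_add, map_one, map_relTrace hσ])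
  refine ncard_le_four_of_quartic_eq_zero he₁ fun x ⟨hT, hQ⟩ => hquartic x hT ?_
  have hsqrt := sq_pow_two_pow_pred hF (by omega) ((1 + c) * x)
  rw [add_assoc] at hQ
  rw [← hsqrt, eq_neg_of_add_eq_zero_left hQ, neg_sq]
  rfl

theorem stmt_4 (m : ℕ) (hm : 0 < m) (F : Type*) [Field F] [Fintype F]
    (hF : Fintype.card F = 2 ^ (3 * m)) (a δ c : F)
    (hδ : δ + δ ^ (2 ^ m) + δ ^ (2 ^ (2 * m)) ≠ 1)
    (hc : c ^ (2 ^ m) ≠ c) :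
    {x : F |
      ((1 + c) * x) + ((1 + c) * x) ^ (2 ^ m) + ((1 + c) * x) ^ (2 ^ (2 * m)) = 0 ∧
      ((1 + c) * x) ^ (2 ^ (3 * m - 1)) +
        (1 + c) * (1 + (δ + δ ^ (2 ^ m) + δ ^ (2 ^ (2 * m)))) * x +
        (a ^ (2 ^ (2 * m)) + a ^ (2 ^ m)) * (x + x ^ (2 ^ m) + x ^ (2 ^ (2 * m))) = 0
      }.ncard ≤ 4 :=
  stmt_4_general m hm F hF a δ c hc
end

section
/- Let m be a positive integer, n = 3m, q = 2^n, and δ ∈ F_q. Define F : F_q → F_q by F(x) = (x^{2^m} + x + δ)^{2^{2m}+1} + x. Then for every c in the subfield F_{2^m} of F_q with c ≠ 1 (i.e., c^{2^m} = c and c ≠ 1), F is PcN: for all a, b ∈ F_q, the equation F(x+a) + c·F(x) = b has exactly one solution x ∈ F_q. -/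
theorem stmt_5 (m : ℕ) (hm : 0 < m) (F : Type*) [Field F] [Fintype F]
    (hF : Fintype.card F = 2 ^ (3 * m)) (δ c : F)
    (hc : c ^ (2 ^ m) = c) (hc1 : c ≠ 1)
    (G : F → F) (hG : ∀ x, G x = (x ^ (2 ^ m) + x + δ) ^ (2 ^ (2 * m) + 1) + x) :
    ∀ a b : F, ∃! x : F, G (x + a) + c * G x = b := by
  classical
  obtain ⟨p, hpI⟩ := CharP.exists F
  haveI := hpI
  have hp2 : p = 2 := by
    obtain ⟨n, hp, hcard⟩ := FiniteField.card F p
    have hdvd : p ∣ 2 ^ (3 * m) := by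
      rw [← hF, hcard]
      exact dvd_pow_self p n.ne_zero
    have := hp.dvd_of_dvd_pow hdvd
    exact (Nat.prime_dvd_prime_iff_eq hp Nat.prime_two).mp this
  subst hp2
  haveI : Fact (Nat.Prime 2) := ⟨Nat.prime_two⟩
  let φ : F →+* F := iterateFrobenius F 2 m
  have phidef : ∀ z : F, φ z = z ^ 2 ^ m := fun _ => rfl
  have phidef' : ∀ z : F, z ^ 2 ^ m = φ z := fun _ => rfl
  have hmul : 2 ^ m * (2 ^ m * 2 ^ m) = 2 ^ (3 * m) := by
    rw [← pow_add, ← pow_add]; congr 1; ring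
  have h3 : ∀ z : F, φ (φ (φ z)) = z := by
    intro z
    rw [phidef, phidef, phidef, ← pow_mul, ← pow_mul, hmul, ← hF]
    exact FiniteField.pow_card z
  have hc' : φ c = c := by rw [phidef]; exact hc
  have htwo : (2 : F) = 0 := by
    have h := CharP.cast_eq_zero F 2
    exact_mod_cast h
  have hne : (1 : F) + c ≠ 0 := by
    intro h0
    apply hc1
    linear_combination h0 - htwo
  have pow_e : ∀ z : F, z ^ (2 ^ (2 * m) + 1) = φ (φ z) * z := by
    intro z
    rw [pow_succ, phidef, phidef, ← pow_mul, ← pow_add, two_mul]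
  intro a b
  have hinj : Function.Injective (fun x : F => G (x + a) + c * G x) := by
    intro x y h
    simp only [hG, pow_e] at h
    simp only [phidef'] at h
    simp only [map_add] at h
    simp only [h3] at h
    have h1 := congrArg φ h
    simp only [map_add, map_mul, h3, hc'] at h1
    have key1 : ((1:F) + c) * ((φ x + x + φ y + y) *
        (φ x + x + φ y + y + 1 + δ + φ δ + φ (φ δ))) = 0 := by
      linear_combination h + h1 + ((φ (φ y)) * δ + (φ (φ y)) * δ * c + (φ (φ y)) * (φ a) + (φ (φ y)) * a + (φ y) + (φ y) * c + (φ y) * (φ (φ δ)) + (φ y) * (φ (φ δ)) * c + (φ y) * (φ δ) + (φ y) * (φ δ) * c + (φ y) * δ + (φ y) * δ * c + (φ y) * (φ (φ a)) + (φ y) * (φ a) + (φ y) * a + (φ y) * (φ (φ y)) + (φ y) * (φ (φ y)) * c + (φ y) * (φ y) + (φ y) * (φ y) * c + y + y * c + y * (φ (φ δ)) + y * (φ (φ δ)) * c + y * (φ δ) + y * (φ δ) * c + y * δ + y * δ * c + y * (φ (φ a)) + y * (φ a) + y * a + y * (φ (φ y)) + y * (φ (φ y)) * c + (2:F) * y *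 (φ y) + (2:F) * y * (φ y) * c + y * y + y * y * c + ((-1:F)) * (φ (φ x)) * δ + ((-1:F)) * (φ (φ x)) * δ * c + ((-1:F)) * (φ (φ x)) * (φ a) + ((-1:F)) * (φ (φ x)) * a + ((-1:F)) * (φ x) * (φ (φ a)) + ((-1:F)) * (φ x) * (φ a) + ((-1:F)) * (φ x) * a + (φ x) * (φ y) + (φ x) * (φ y) * c + (φ x) * y + (φ x) * y * c + ((-1:F)) * (φ x) * (φ (φ x)) + ((-1:F)) * (φ x) * (φ (φ x)) * c + ((-1:F)) * x * (φ (φ a)) + ((-1:F)) * x * (φ a) + ((-1:F)) * x * a + x * (φ y) + x * (φ y) * c + x * y + x * y * c + ((-1:F)) * x * (φ (φ x)) + ((-1:F)) * x * (φ (φ x)) * c) * htwo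
    have key2 : (φ x + x + φ y + y) *
        (φ x + x + φ y + y + 1 + δ + φ δ + φ (φ δ)) = 0 :=
      (mul_eq_zero.mp key1).resolve_left hne
    have hv : φ x + x + φ y + y = 0 := by
      rcases mul_eq_zero.mp key2 with h0 | hq
      · exact h0
      · have hq1 := congrArg φ hq
        simp only [map_add, map_one, map_zero, h3, hc'] at hq1
        have hq2 := congrArg φ hq1
        simp only [map_add, map_one, map_zero, h3, hc'] at hq2
        linear_combination hq1 + hq2 + (((-1:F)) + ((-1:F)) * (φ (φ δ)) + ((-1:F)) * (φ δ) + ((-1:F)) * δ + ((-1:F)) * (φ (φ y)) + ((-1:F)) * (φ (φ x))) * htwo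
    have hv1 := congrArg φ hv
    simp only [map_add, map_zero, h3] at hv1
    have hfin : ((1:F) + c) * x = ((1:F) + c) * y := by
      linear_combination h + ((φ (φ δ)) + (φ (φ δ)) * c + δ + δ * c + (φ (φ a)) + (φ a) + (φ y) + (φ y) * c + y + y * c + (φ (φ x)) + (φ (φ x)) * c + x + x * c) * hv + (δ + δ * c + (φ a) + a + (φ y) + (φ y) * c + y + y * c) * hv1 + (((-1:F)) * (φ y) * δ + ((-1:F)) * (φ y) * δ * c + ((-1:F)) * (φ y) * (φ a) + ((-1:F)) * (φ y) * (φ y) + ((-1:F)) * (φ y) * (φ y) * c + y * a + ((-1:F)) * y * (φ y) + ((-1:F)) * y * (φ y) * c + ((-1:F)) * (φ (φ x)) * δ + ((-1:F)) * (φ (φ x)) * δ * c + ((-1:F)) * (φ (φ x)) * (φ a) + ((-1:F)) * (φ (φ x)) * a + ((-1:F)) * (φ (φ x)) * (φ y) + ((-1:F)) * (φ (φ x)) * (φ y) * c + ((-1:F)) * (φ (φ x)) * y + ((-1:F)) * (φ (φ x)) * y * c + ((-1:F)) * (φ x) * (φ (φ δ)) + ((-1:F)) * (φ x) * (φ (φ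 δ)) * c + ((-1:F)) * (φ x) * δ + ((-1:F)) * (φ x) * δ * c + ((-1:F)) * (φ x) * (φ (φ a)) + ((-1:F)) * (φ x) * (φ a) + ((-1:F)) * (φ x) * a + ((-1:F)) * (φ x) * (φ y) + ((-1:F)) * (φ x) * (φ y) * c + ((-1:F)) * (φ x) * y + ((-1:F)) * (φ x) * y * c + ((-1:F)) * (φ x) * (φ (φ x)) + ((-1:F)) * (φ x) * (φ (φ x)) * c + ((-1:F)) * x * (φ (φ δ)) + ((-1:F)) * x * (φ (φ δ)) * c + ((-1:F)) * x * δ + ((-1:F)) * x * δ * c + ((-1:F)) * x * (φ (φ a)) + ((-1:F)) * x * (φ a) + ((-1:F)) * x * a + ((-1:F)) * x * (φ y) + ((-1:F)) * x * (φ y) * c + ((-1:F)) * x * y + ((-1:F)) * x * y * c + ((-1:F)) * x * (φ (φ x)) + ((-1:F)) * x * (φ (φ x)) * c + ((-1:F)) * x * (φ x) + ((-1:F)) * x * (φ x) * c + ((-1:F)) * x * x + ((-1:F)) * x * x * c) * htwo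
    exact mul_left_cancel₀ hne hfin
  have hbij := Finite.injective_iff_bijective.mp hinj
  obtain ⟨x, hx⟩ := hbij.surjective b
  exact ⟨x, hx, fun z hz => hinj (hz.trans hx.symm)⟩
end

section
/- Let m be a positive integer, n = 3m, q = 2^n, and let δ ∈ F_q satisfy Tr_m^{3m}(δ) ≠ 1. Define F : F_q → F_q by F(x) = (x^{2^m} + x + δ)^{2^{2m}+1} + x. Then for every c ∈ F_q not in the subfield F_{2^m} (i.e., c^{2^m} ≠ c), the c-differential uniformity of F is at most 4: for all a, b ∈ F_q, the equation F(x+a) + c·F(x) = b has at most four solutions x ∈ F_q. -/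
open Polynomial

set_option maxHeartbeats 4000000

theorem stmt_7 (m : ℕ) (hm : 0 < m) (F : Type*) [Field F] [Fintype F]
    (hF : Fintype.card F = 2 ^ (3 * m)) (δ c : F)
    (hδ : δ + δ ^ (2 ^ m) + δ ^ (2 ^ (2 * m)) ≠ 1)
    (hc : c ^ (2 ^ m) ≠ c)
    (G : F → F) (hG : ∀ x, G x = (x ^ (2 ^ m) + x + δ) ^ (2 ^ (2 * m) + 1) + x) :
    ∀ a b : F, {x : F | G (x + a) + c * G x = b}.ncard ≤ 4 := by
  intro a b
  haveI : DecidableEq F := Classical.decEq F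
  have hchar2 : CharP F 2 := by
    obtain ⟨p, hp⟩ := CharP.exists F
    haveI := hp
    obtain ⟨n, hprime, hcard⟩ := FiniteField.card F p
    have h2 : (2 : ℕ) ^ (3 * m) = p ^ (n : ℕ) := by rw [← hF, hcard]
    have hdvd : p ∣ 2 ^ (3 * m) := by rw [h2]; exact dvd_pow_self p n.pos.ne'
    have hp2 : p = 2 :=
      (Nat.prime_dvd_prime_iff_eq hprime Nat.prime_two).mp (hprime.dvd_of_dvd_pow hdvd)
    exact hp2 ▸ hp
  haveI := hchar2
  haveI : ExpChar F 2 := ExpChar.prime Nat.prime_two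
  have htwo : (2 : F) = 0 := by
    have := CharP.cast_eq_zero F 2
    exact_mod_cast this
  set φ : F →+* F := iterateFrobenius F 2 m with hφs
  have hφdef : ∀ y : F, φ y = y ^ 2 ^ m := by intro y; rw [hφs]; rfl
  have hφ3 : ∀ y : F, φ (φ (φ y)) = y := by
    intro y
    have h1 : (2 : ℕ) ^ m * 2 ^ m * 2 ^ m = 2 ^ (3 * m) := by ring
    calc φ (φ (φ y)) = ((y ^ 2 ^ m) ^ 2 ^ m) ^ 2 ^ m := by rw [hφdef, hφdef, hφdef]
      _ = y ^ (2 ^ m * (2 ^ m * 2 ^ m)) := by rw [← pow_mul, ← pow_mul]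
      _ = y ^ (2 ^ m * 2 ^ m * 2 ^ m) := by rw [mul_assoc]
      _ = y ^ 2 ^ (3 * m) := by rw [h1]
      _ = y := by rw [← hF]; exact FiniteField.pow_card y
  have hGrw : ∀ z : F, G z = φ (φ (φ z + z + δ)) * (φ z + z + δ) + z := by
    intro z
    have h2m : (2 : ℕ) ^ (2 * m) = 2 ^ m * 2 ^ m := by rw [two_mul, pow_add]
    have e1 : φ (φ (φ z + z + δ)) = (φ z + z + δ) ^ 2 ^ (2 * m) := by
      rw [hφdef, hφdef, ← pow_mul, ← h2m]
    rw [hG z, ← hφdef z, e1, ← pow_succ]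
  have hφc : φ c ≠ c := by rw [hφdef]; exact hc
  have hne0 : (1 : F) + c ≠ 0 := by
    intro h
    have hc1 : c = 1 := by linear_combination h - htwo
    exact hφc (by rw [hc1, map_one])
  have hne1 : (1 : F) + φ c ≠ 0 := by
    intro h
    have h1 : φ c = 1 := by linear_combination h - htwo
    have h3 := hφ3 c
    rw [h1, map_one, map_one] at h3
    exact hφc (by rw [← h3, map_one])
  have hne2 : (1 : F) + φ (φ c) ≠ 0 := by
    intro h
    have h1 : φ (φ c) = 1 := by linear_combination h - htwo
    have h3 := hφ3 c
    rw [h1, map_one] at h3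
    exact hφc (by rw [← h3, map_one])
  obtain ⟨PP, hPP⟩ : ∃ z : F, z = (1 : F) * (a) * (c) + (1 : F) * (a) * (φ c) + (1 : F) * (φ a) * (c) + (1 : F) * (φ a) * (φ c) := ⟨_, rfl⟩
  obtain ⟨QQ, hQQ⟩ : ∃ z : F, z = (1 : F) + (1 : F) * (φ a) * (c) + (1 : F) * (φ a) * (φ c) + (1 : F) * (φ (φ a)) * (c) + (1 : F) * (φ (φ a)) * (φ c) + (1 : F) * (c) + (1 : F) * (c) * (δ) + (1 : F) * (c) * (δ) * (φ c) + (1 : F) * (c) * (φ δ) + (1 : F) * (c) * (φ δ) * (φ c) + (1 : F) * (c) * (φ (φ δ)) + (1 : F) * (c) * (φ (φ δ)) * (φ c) + (1 : F) * (c) * (φ c) + (1 : F) * (δ) + (1 : F) * (δ) * (φ c) + (1 : F) * (φ δ) + (1 : F) * (φ δ) * (φ c) + (1 : F) * (φ (φ δ)) + (1 : F) * (φ (φ δ)) * (φ c) + (1 : F) * (φ c) := ⟨_, rfl⟩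
  obtain ⟨ka, hka⟩ : ∃ z : F, z = (1 : F) * (a) + (2 : F) * (a) * (φ a) + (1 : F) * (a) * (φ a) * (c) + (1 : F) * (a) * (φ a) * (φ c) + (2 : F) * (a) * (φ (φ a)) + (1 : F) * (a) * (φ (φ a)) * (c) + (1 : F) * (a) * (φ (φ a)) * (φ c) + (1 : F) * (a) * (c) * (φ δ) + (1 : F) * (a) * (δ) + (1 : F) * (a) * (δ) * (φ c) + (1 : F) * (a) * (φ δ) + (1 : F) * (a) * (φ (φ δ)) + (1 : F) * (a) * (φ (φ δ)) * (φ c) + (1 : F) * (a) * (φ c) + (1 : F) * (a) ^ 2 + (1 : F) * (a) ^ 2 * (φ c) + (1 : F) * (φ a) + (2 : F) * (φ a) * (φ (φ a)) + (1 : F) * (φ a) * (φ (φ a)) * (c) + (1 : F) * (φ a) * (φ (φ a)) * (φ c) + (1 : F) * (φ a) * (c) + (1 : F) * (φ a) * (c) * (δ) + (1 : F) * (φ a) * (c) * (φ δ) + (1 : F) * (φ a) * (δ) + (1 : F) * (φ a) * (φ δ) + (1 : F) * (φ a) * (φ (φ δ)) + (1 : F) * (φ a) * (φ (φ δ)) *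 (φ c) + (1 : F) * (φ a) ^ 2 + (1 : F) * (φ a) ^ 2 * (c) + (1 : F) * (φ (φ a)) * (c) * (δ) + (2 : F) * (φ (φ a)) * (δ) + (1 : F) * (φ (φ a)) * (δ) * (φ c) + (1 : F) * (b) + (1 : F) * (b) * (φ c) + (1 : F) * (φ b) + (1 : F) * (φ b) * (c) + (1 : F) * (c) * (δ) * (φ δ) + (1 : F) * (c) * (δ) * (φ δ) * (φ c) + (1 : F) * (c) * (δ) * (φ (φ δ)) + (1 : F) * (c) * (δ) * (φ (φ δ)) * (φ c) + (1 : F) * (δ) * (φ δ) + (1 : F) * (δ) * (φ δ) * (φ c) + (1 : F) * (δ) * (φ (φ δ)) + (1 : F) * (δ) * (φ (φ δ)) * (φ c) := ⟨_, rfl⟩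
  obtain ⟨PP1, hPP1⟩ : ∃ z : F, z = (1 : F) * (φ a) * (φ c) + (1 : F) * (φ a) * (φ (φ c)) + (1 : F) * (φ (φ a)) * (φ c) + (1 : F) * (φ (φ a)) * (φ (φ c)) := ⟨_, rfl⟩
  obtain ⟨QQ1, hQQ1⟩ : ∃ z : F, z = (1 : F) + (1 : F) * (a) * (φ c) + (1 : F) * (a) * (φ (φ c)) + (1 : F) * (φ (φ a)) * (φ c) + (1 : F) * (φ (φ a)) * (φ (φ c)) + (1 : F) * (δ) + (1 : F) * (δ) * (φ c) + (1 : F) * (δ) * (φ c) * (φ (φ c)) + (1 : F) * (δ) * (φ (φ c)) + (1 : F) * (φ δ) + (1 : F) * (φ δ) * (φ c) + (1 : F) * (φ δ) * (φ c) * (φ (φ c)) + (1 : F) * (φ δ) * (φ (φ c)) + (1 : F) * (φ (φ δ)) + (1 : F) * (φ (φ δ)) * (φ c) + (1 : F) * (φ (φ δ)) * (φ c) * (φ (φ c)) + (1 : F) * (φ (φ δ)) * (φ (φ c)) + (1 : F) * (φ c) + (1 : F) * (φ c) * (φ (φ c)) + (1 : F) * (φ (φ c)) := ⟨_, rfl⟩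
  obtain ⟨ka1, hka1⟩ : ∃ z : F, z = (2 : F) * (a) * (φ a) + (1 : F) * (a) * (φ a) * (φ c) + (1 : F) * (a) * (φ a) * (φ (φ c)) + (2 : F) * (a) * (φ (φ a)) + (1 : F) * (a) * (φ (φ a)) * (φ c) + (1 : F) * (a) * (φ (φ a)) * (φ (φ c)) + (2 : F) * (a) * (φ δ) + (1 : F) * (a) * (φ δ) * (φ c) + (1 : F) * (a) * (φ δ) * (φ (φ c)) + (1 : F) * (φ a) + (2 : F) * (φ a) * (φ (φ a)) + (1 : F) * (φ a) * (φ (φ a)) * (φ c) + (1 : F) * (φ a) * (φ (φ a)) * (φ (φ c)) + (1 : F) * (φ a) * (δ) + (1 : F) * (φ a) * (δ) * (φ (φ c)) + (1 : F) * (φ a) * (φ δ) + (1 : F) * (φ a) * (φ δ) * (φ (φ c)) + (1 : F) * (φ a) * (φ (φ δ)) + (1 : F) * (φ a) * (φ (φ δ)) * (φ c) + (1 : F) * (φ a) * (φ (φ c)) + (1 : F) * (φ a) ^ 2 + (1 : F) * (φ a) ^ 2 * (φ (φ c)) + (1 : F) * (φ (φ a)) + (1 : F) * (φ (φ a)) *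 (δ) + (1 : F) * (φ (φ a)) * (δ) * (φ (φ c)) + (1 : F) * (φ (φ a)) * (φ δ) + (1 : F) * (φ (φ a)) * (φ δ) * (φ c) + (1 : F) * (φ (φ a)) * (φ (φ δ)) + (1 : F) * (φ (φ a)) * (φ (φ δ)) * (φ c) + (1 : F) * (φ (φ a)) * (φ c) + (1 : F) * (φ (φ a)) ^ 2 + (1 : F) * (φ (φ a)) ^ 2 * (φ c) + (1 : F) * (φ b) + (1 : F) * (φ b) * (φ (φ c)) + (1 : F) * (φ (φ b)) + (1 : F) * (φ (φ b)) * (φ c) + (1 : F) * (δ) * (φ δ) + (1 : F) * (δ) * (φ δ) * (φ c) + (1 : F) * (δ) * (φ δ) * (φ c) * (φ (φ c)) + (1 : F) * (δ) * (φ δ) * (φ (φ c)) + (1 : F) * (φ δ) * (φ (φ δ)) + (1 : F) * (φ δ) * (φ (φ δ)) * (φ c) + (1 : F) * (φ δ) * (φ (φ δ)) * (φ c) * (φ (φ c)) + (1 : F) * (φ δ) * (φ (φ δ)) * (φ (φ c)) := ⟨_, rfl⟩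
  obtain ⟨B4, hB4⟩ : ∃ z : F, z = (1 + c) ^ 2 * (1 + φ c) ^ 3 * (1 + φ (φ c)) := ⟨_, rfl⟩
  obtain ⟨B2, hB2⟩ : ∃ z : F, z =
      (1 + φ c) * (1 + φ (φ c)) * QQ ^ 2 + PP * (PP1 + QQ1) * ((1 + c) * (1 + φ c)) := ⟨_, rfl⟩
  obtain ⟨B1, hB1⟩ : ∃ z : F, z = PP1 * PP ^ 2 + PP * (PP1 + QQ1) * QQ := ⟨_, rfl⟩
  obtain ⟨B0, hB0⟩ : ∃ z : F, z =
      (1 + φ c) * (1 + φ (φ c)) * ka ^ 2 + PP * (PP1 + QQ1) * ka + PP ^ 2 * ka1 := ⟨_, rfl⟩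
  obtain ⟨p, hp⟩ : ∃ p : Polynomial F,
      p = C B4 * X ^ 4 + C B2 * X ^ 2 + C B1 * X + C B0 := ⟨_, rfl⟩
  have hpcoeff : p.coeff 4 = B4 := by rw [hp]; simp
  have hB4ne : B4 ≠ 0 := by
    rw [hB4]
    exact mul_ne_zero (mul_ne_zero (pow_ne_zero _ hne0) (pow_ne_zero _ hne1)) hne2
  have hpne : p ≠ 0 := fun h => hB4ne (by rw [← hpcoeff, h, Polynomial.coeff_zero])
  have hdeg : p.natDegree ≤ 4 := by rw [hp]; compute_degree
  have hdet : ∀ x : F, G (x + a) + c * G x = b →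
      (1 + c) * x = b + a
        + ((x + φ x) + (φ x + φ (φ x)) + φ (φ a) + a + φ (φ δ)) * ((x + φ x) + (a + φ a + δ))
        + c * (((x + φ x) + (φ x + φ (φ x)) + φ (φ δ)) * ((x + φ x) + δ)) := by
    intro x hx
    rw [hGrw, hGrw] at hx
    simp only [map_add, map_mul, hφ3] at hx
    linear_combination hx + ((-1 : F) * (a) + (-1 : F) * (a) * (φ a) + (-1 : F) * (a) * (φ (φ a)) + (-1 : F) * (a) * (δ) + (-1 : F) * (a) * (φ (φ δ)) + (-2 : F) * (a) * (x) + (-2 : F) * (a) * (φ x) + (-1 : F) * (a) * (φ (φ x)) + (-1 : F) * (a) ^ 2 + (-1 : F) * (φ a) * (φ (φ a)) + (-1 : F) * (φ a) * (φ (φ δ)) + (-1 : F) * (φ a) * (x) + (-1 : F) * (φ a) * (φ x) + (-1 : F) * (φ a) * (φ (φ x)) + (-1 : F) * (φ (φ a)) * (δ) + (-1 : F) * (φ (φ a)) * (x) + (-1 : F) * (φ (φ a)) * (φ x) + (-1 : F) * (c) * (δ) * (φ (φ δ)) + (-1 : F) * (c) * (δ) * (x) + (-1 : F) * (c) * (δ)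 * (φ x) + (-1 : F) * (c) * (δ) * (φ (φ x)) + (-1 : F) * (c) * (φ (φ δ)) * (x) + (-1 : F) * (c) * (φ (φ δ)) * (φ x) + (-2 : F) * (c) * (x) * (φ x) + (-1 : F) * (c) * (x) * (φ (φ x)) + (-1 : F) * (c) * (x) ^ 2 + (-1 : F) * (c) * (φ x) * (φ (φ x)) + (-1 : F) * (c) * (φ x) ^ 2 + (-1 : F) * (δ) * (φ (φ δ)) + (-1 : F) * (δ) * (x) + (-1 : F) * (δ) * (φ x) + (-1 : F) * (δ) * (φ (φ x)) + (-1 : F) * (φ (φ δ)) * (x) + (-1 : F) * (φ (φ δ)) * (φ x) + (-2 : F) * (x) * (φ x) + (-1 : F) * (x) * (φ (φ x)) + (-1 : F) * (x) ^ 2 + (-1 : F) * (φ x) * (φ (φ x)) + (-1 : F) * (φ x) ^ 2) * htwo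
  have hroots : ∀ x : F, G (x + a) + c * G x = b → (x + φ x) ∈ p.roots := by
    intro x hx
    rw [hGrw, hGrw] at hx
    simp only [map_add, map_mul, hφ3] at hx
    have hx1 := congrArg (⇑φ) hx
    simp only [map_add, map_mul, hφ3] at hx1
    have hx2 := congrArg (⇑φ) hx1
    simp only [map_add, map_mul, hφ3] at hx2
    have heq1 : (1 + c) * (1 + φ c) * (x + φ x) ^ 2 + PP * (φ x + φ (φ x))
        + QQ * (x + φ x) + ka = 0 := by
      rw [hPP, hQQ, hka]
      linear_combination ((1 : F) + φ c) * hx + ((1 : F) + c) * hx1 + ((-1 : F) * (a) * (φ c) * (x) + (-1 : F) * (a) * (x) + (-1 : F) * (a) * (φ x) + (-1 : F) * (a) * (φ (φ x)) + (1 : F) * (φ a) * (φ c) * (φ x) + (-1 : F) * (φ a) * (x) + (-1 : F) * (φ a) * (φ x) + (-1 : F) * (φ a) * (φ (φ x)) + (-1 : F) * (φ (φ a)) * (x) + (-1 : F) * (φ (φ a)) * (φ x) + (1 : F) * (b) + (1 : F) * (b) * (φ c) + (1 : F) * (φ b) + (1 : F) * (φ b) * (c) + (-1 : F) * (c) * (δ)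 * (φ c) * (φ (φ x)) + (-1 : F) * (c) * (δ) * (φ (φ x)) + (-1 : F) * (c) * (φ c) * (x) * (φ (φ x)) + (-1 : F) * (c) * (φ c) * (φ x) * (φ (φ x)) + (-1 : F) * (c) * (x) * (φ (φ x)) + (-1 : F) * (c) * (φ x) * (φ (φ x)) + (-1 : F) * (δ) * (φ c) * (φ (φ x)) + (-1 : F) * (δ) * (φ (φ x)) + (-1 : F) * (φ c) * (x) * (φ (φ x)) + (-1 : F) * (φ c) * (φ x) * (φ (φ x)) + (-1 : F) * (x) * (φ (φ x)) + (-1 : F) * (φ x) * (φ (φ x))) * htwo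
    have heq2 : (1 + φ c) * (1 + φ (φ c)) * (φ x + φ (φ x)) ^ 2
        + PP1 * ((x + φ x) + (φ x + φ (φ x))) + QQ1 * (φ x + φ (φ x)) + ka1 = 0 := by
      rw [hPP1, hQQ1, hka1]
      linear_combination ((1 : F) + φ (φ c)) * hx1 + ((1 : F) + φ c) * hx2 + ((-1 : F) * (a) * (φ x) + (-1 : F) * (a) * (φ (φ x)) + (1 : F) * (φ a) * (φ c) * (φ x) + (-1 : F) * (φ a) * (x) + (-1 : F) * (φ a) * (φ x) + (-1 : F) * (φ a) * (φ (φ x)) + (1 : F) * (φ (φ a)) * (φ c) * (φ x) + (1 : F) * (φ (φ a)) * (φ (φ c)) * (φ x) + (1 : F) * (φ (φ a)) * (φ (φ c)) * (φ (φ x)) + (-1 : F) * (φ (φ a)) * (x) + (-1 : F) * (φ (φ a)) * (φ x) + (-1 : F) * (φ (φ a)) * (φ (φ x)) + (1 : F) * (φ b) + (1 : F) * (φ b) * (φ (φ c)) + (1 : F) * (φ (φ b)) + (1 : F) * (φ (φ b)) * (φ c) + (-1 : F) * (φ δ) * (φ c) * (φ (φ c)) * (x) + (-1 : F) * (φ δ)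 * (φ c) * (x) + (-1 : F) * (φ δ) * (φ (φ c)) * (x) + (-1 : F) * (φ δ) * (x) + (-1 : F) * (φ c) * (φ (φ c)) * (x) * (φ x) + (-1 : F) * (φ c) * (φ (φ c)) * (x) * (φ (φ x)) + (-1 : F) * (φ c) * (x) * (φ x) + (-1 : F) * (φ c) * (x) * (φ (φ x)) + (-1 : F) * (φ (φ c)) * (x) * (φ x) + (-1 : F) * (φ (φ c)) * (x) * (φ (φ x)) + (-1 : F) * (x) * (φ x) + (-1 : F) * (x) * (φ (φ x))) * htwo
    have hquart : B4 * (x + φ x) ^ 4 + B2 * (x + φ x) ^ 2 + B1 * (x + φ x) + B0 = 0 := by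
      rw [hB4, hB2, hB1, hB0]
      linear_combination PP ^ 2 * heq2 + ((1 : F) * (PP) * (PP1) + (1 : F) * (PP) * (QQ1) + (1 : F) * (PP) * (φ c) * (φ (φ c)) * (φ x) + (1 : F) * (PP) * (φ c) * (φ (φ c)) * (φ (φ x)) + (1 : F) * (PP) * (φ c) * (φ x) + (1 : F) * (PP) * (φ c) * (φ (φ x)) + (1 : F) * (PP) * (φ (φ c)) * (φ x) + (1 : F) * (PP) * (φ (φ c)) * (φ (φ x)) + (1 : F) * (PP) * (φ x) + (1 : F) * (PP) * (φ (φ x)) + (1 : F) * (QQ) * (φ c) * (φ (φ c)) * (x) + (1 : F) * (QQ) * (φ c) * (φ (φ c)) * (φ x) + (1 : F) * (QQ) * (φ c) * (x) + (1 : F) * (QQ) * (φ c) * (φ x) + (1 : F) * (QQ) * (φ (φ c)) * (x) + (1 : F) * (QQ) * (φ (φ c)) * (φ x) + (1 : F) * (QQ) * (x) + (1 : F) * (QQ) * (φ x) + (4 : F) * (c) * (φ c) * (φ (φ c)) * (x) * (φ x) + (2 : F) * (c) * (φ c) * (φ (φ c)) * (x) ^ 2 + (2 : F) * (c) * (φ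 c) * (φ (φ c)) * (φ x) ^ 2 + (4 : F) * (c) * (φ c) * (x) * (φ x) + (2 : F) * (c) * (φ c) * (x) ^ 2 + (2 : F) * (c) * (φ c) * (φ x) ^ 2 + (2 : F) * (c) * (φ c) ^ 2 * (φ (φ c)) * (x) * (φ x) + (1 : F) * (c) * (φ c) ^ 2 * (φ (φ c)) * (x) ^ 2 + (1 : F) * (c) * (φ c) ^ 2 * (φ (φ c)) * (φ x) ^ 2 + (2 : F) * (c) * (φ c) ^ 2 * (x) * (φ x) + (1 : F) * (c) * (φ c) ^ 2 * (x) ^ 2 + (1 : F) * (c) * (φ c) ^ 2 * (φ x) ^ 2 + (2 : F) * (c) * (φ (φ c)) * (x) * (φ x) + (1 : F) * (c) * (φ (φ c)) * (x) ^ 2 + (1 : F) * (c) * (φ (φ c)) * (φ x) ^ 2 + (2 : F) * (c) * (x) * (φ x) + (1 : F) * (c) * (x) ^ 2 + (1 : F) * (c) * (φ x) ^ 2 + (1 : F) * (φ c) * (φ (φ c)) * (ka) + (4 : F) * (φ c) * (φ (φ c)) * (x) * (φ x) + (2 : F) * (φ c) * (φ (φ c)) * (x) ^ 2 + (2 : F)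 * (φ c) * (φ (φ c)) * (φ x) ^ 2 + (1 : F) * (φ c) * (ka) + (4 : F) * (φ c) * (x) * (φ x) + (2 : F) * (φ c) * (x) ^ 2 + (2 : F) * (φ c) * (φ x) ^ 2 + (2 : F) * (φ c) ^ 2 * (φ (φ c)) * (x) * (φ x) + (1 : F) * (φ c) ^ 2 * (φ (φ c)) * (x) ^ 2 + (1 : F) * (φ c) ^ 2 * (φ (φ c)) * (φ x) ^ 2 + (2 : F) * (φ c) ^ 2 * (x) * (φ x) + (1 : F) * (φ c) ^ 2 * (x) ^ 2 + (1 : F) * (φ c) ^ 2 * (φ x) ^ 2 + (1 : F) * (φ (φ c)) * (ka) + (2 : F) * (φ (φ c)) * (x) * (φ x) + (1 : F) * (φ (φ c)) * (x) ^ 2 + (1 : F) * (φ (φ c)) * (φ x) ^ 2 + (1 : F) * (ka) + (2 : F) * (x) * (φ x) + (1 : F) * (x) ^ 2 + (1 : F) * (φ x) ^ 2) * heq1 + ((-1 : F) * (PP) * (QQ) * (φ c) * (φ (φ c)) * (x) * (φ x) + (-1 : F) * (PP) * (QQ) * (φ c) * (φ (φ c)) * (x) * (φ (φ x)) + (-1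 : F) * (PP) * (QQ) * (φ c) * (φ (φ c)) * (φ x) * (φ (φ x)) + (-1 : F) * (PP) * (QQ) * (φ c) * (φ (φ c)) * (φ x) ^ 2 + (-1 : F) * (PP) * (QQ) * (φ c) * (x) * (φ x) + (-1 : F) * (PP) * (QQ) * (φ c) * (x) * (φ (φ x)) + (-1 : F) * (PP) * (QQ) * (φ c) * (φ x) * (φ (φ x)) + (-1 : F) * (PP) * (QQ) * (φ c) * (φ x) ^ 2 + (-1 : F) * (PP) * (QQ) * (φ (φ c)) * (x) * (φ x) + (-1 : F) * (PP) * (QQ) * (φ (φ c)) * (x) * (φ (φ x)) + (-1 : F) * (PP) * (QQ) * (φ (φ c)) * (φ x) * (φ (φ x)) + (-1 : F) * (PP) * (QQ) * (φ (φ c)) * (φ x) ^ 2 + (-1 : F) * (PP) * (QQ) * (x) * (φ x) + (-1 : F) * (PP) * (QQ) * (x) * (φ (φ x)) + (-1 : F) * (PP) * (QQ) * (φ x) * (φ (φ x)) + (-1 : F) * (PP) * (QQ) * (φ x) ^ 2 + (-4 : F) * (PP) * (c) * (φ c) * (φ (φ c)) * (x) * (φ x) * (φ (φ x)) + (-4 :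 F) * (PP) * (c) * (φ c) * (φ (φ c)) * (x) * (φ x) ^ 2 + (-2 : F) * (PP) * (c) * (φ c) * (φ (φ c)) * (x) ^ 2 * (φ x) + (-2 : F) * (PP) * (c) * (φ c) * (φ (φ c)) * (x) ^ 2 * (φ (φ x)) + (-2 : F) * (PP) * (c) * (φ c) * (φ (φ c)) * (φ x) ^ 2 * (φ (φ x)) + (-2 : F) * (PP) * (c) * (φ c) * (φ (φ c)) * (φ x) ^ 3 + (-4 : F) * (PP) * (c) * (φ c) * (x) * (φ x) * (φ (φ x)) + (-4 : F) * (PP) * (c) * (φ c) * (x) * (φ x) ^ 2 + (-2 : F) * (PP) * (c) * (φ c) * (x) ^ 2 * (φ x) + (-2 : F) * (PP) * (c) * (φ c) * (x) ^ 2 * (φ (φ x)) + (-2 : F) * (PP) * (c) * (φ c) * (φ x) ^ 2 * (φ (φ x)) + (-2 : F) * (PP) * (c) * (φ c) * (φ x) ^ 3 + (-2 : F) * (PP) * (c) * (φ c) ^ 2 * (φ (φ c)) * (x) * (φ x) * (φ (φ x)) + (-2 : F) * (PP) * (c) * (φ c) ^ 2 * (φ (φ c)) * (x) * (φ x) ^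 2 + (-1 : F) * (PP) * (c) * (φ c) ^ 2 * (φ (φ c)) * (x) ^ 2 * (φ x) + (-1 : F) * (PP) * (c) * (φ c) ^ 2 * (φ (φ c)) * (x) ^ 2 * (φ (φ x)) + (-1 : F) * (PP) * (c) * (φ c) ^ 2 * (φ (φ c)) * (φ x) ^ 2 * (φ (φ x)) + (-1 : F) * (PP) * (c) * (φ c) ^ 2 * (φ (φ c)) * (φ x) ^ 3 + (-2 : F) * (PP) * (c) * (φ c) ^ 2 * (x) * (φ x) * (φ (φ x)) + (-2 : F) * (PP) * (c) * (φ c) ^ 2 * (x) * (φ x) ^ 2 + (-1 : F) * (PP) * (c) * (φ c) ^ 2 * (x) ^ 2 * (φ x) + (-1 : F) * (PP) * (c) * (φ c) ^ 2 * (x) ^ 2 * (φ (φ x)) + (-1 : F) * (PP) * (c) * (φ c) ^ 2 * (φ x) ^ 2 * (φ (φ x)) + (-1 : F) * (PP) * (c) * (φ c) ^ 2 * (φ x) ^ 3 + (-2 : F) * (PP) * (c) * (φ (φ c)) * (x) * (φ x) * (φ (φ x)) + (-2 : F) * (PP) * (c) * (φ (φ c)) * (x) * (φ x) ^ 2 +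 (-1 : F) * (PP) * (c) * (φ (φ c)) * (x) ^ 2 * (φ x) + (-1 : F) * (PP) * (c) * (φ (φ c)) * (x) ^ 2 * (φ (φ x)) + (-1 : F) * (PP) * (c) * (φ (φ c)) * (φ x) ^ 2 * (φ (φ x)) + (-1 : F) * (PP) * (c) * (φ (φ c)) * (φ x) ^ 3 + (-2 : F) * (PP) * (c) * (x) * (φ x) * (φ (φ x)) + (-2 : F) * (PP) * (c) * (x) * (φ x) ^ 2 + (-1 : F) * (PP) * (c) * (x) ^ 2 * (φ x) + (-1 : F) * (PP) * (c) * (x) ^ 2 * (φ (φ x)) + (-1 : F) * (PP) * (c) * (φ x) ^ 2 * (φ (φ x)) + (-1 : F) * (PP) * (c) * (φ x) ^ 3 + (-1 : F) * (PP) * (φ c) * (φ (φ c)) * (ka) * (φ x) + (-1 : F) * (PP) * (φ c) * (φ (φ c)) * (ka) * (φ (φ x)) + (-4 : F) * (PP) * (φ c) * (φ (φ c)) * (x) * (φ x) * (φ (φ x)) + (-4 : F) * (PP) * (φ c) * (φ (φ c)) * (x) * (φ x) ^ 2 + (-2 : F) * (PP) * (φ c) * (φ (φ c)) * (x) ^ 2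 * (φ x) + (-2 : F) * (PP) * (φ c) * (φ (φ c)) * (x) ^ 2 * (φ (φ x)) + (-2 : F) * (PP) * (φ c) * (φ (φ c)) * (φ x) ^ 2 * (φ (φ x)) + (-2 : F) * (PP) * (φ c) * (φ (φ c)) * (φ x) ^ 3 + (-1 : F) * (PP) * (φ c) * (ka) * (φ x) + (-1 : F) * (PP) * (φ c) * (ka) * (φ (φ x)) + (-4 : F) * (PP) * (φ c) * (x) * (φ x) * (φ (φ x)) + (-4 : F) * (PP) * (φ c) * (x) * (φ x) ^ 2 + (-2 : F) * (PP) * (φ c) * (x) ^ 2 * (φ x) + (-2 : F) * (PP) * (φ c) * (x) ^ 2 * (φ (φ x)) + (-2 : F) * (PP) * (φ c) * (φ x) ^ 2 * (φ (φ x)) + (-2 : F) * (PP) * (φ c) * (φ x) ^ 3 + (-2 : F) * (PP) * (φ c) ^ 2 * (φ (φ c)) * (x) * (φ x) * (φ (φ x)) + (-2 : F) * (PP) * (φ c) ^ 2 * (φ (φ c)) * (x) * (φ x) ^ 2 + (-1 : F) * (PP) * (φ c) ^ 2 * (φ (φ c)) * (x) ^ 2 * (φ x) + (-1 : F) * (PP)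 * (φ c) ^ 2 * (φ (φ c)) * (x) ^ 2 * (φ (φ x)) + (-1 : F) * (PP) * (φ c) ^ 2 * (φ (φ c)) * (φ x) ^ 2 * (φ (φ x)) + (-1 : F) * (PP) * (φ c) ^ 2 * (φ (φ c)) * (φ x) ^ 3 + (-2 : F) * (PP) * (φ c) ^ 2 * (x) * (φ x) * (φ (φ x)) + (-2 : F) * (PP) * (φ c) ^ 2 * (x) * (φ x) ^ 2 + (-1 : F) * (PP) * (φ c) ^ 2 * (x) ^ 2 * (φ x) + (-1 : F) * (PP) * (φ c) ^ 2 * (x) ^ 2 * (φ (φ x)) + (-1 : F) * (PP) * (φ c) ^ 2 * (φ x) ^ 2 * (φ (φ x)) + (-1 : F) * (PP) * (φ c) ^ 2 * (φ x) ^ 3 + (-1 : F) * (PP) * (φ (φ c)) * (ka) * (φ x) + (-1 : F) * (PP) * (φ (φ c)) * (ka) * (φ (φ x)) + (-2 : F) * (PP) * (φ (φ c)) * (x) * (φ x) * (φ (φ x)) + (-2 : F) * (PP) * (φ (φ c)) * (x) * (φ x) ^ 2 + (-1 : F) * (PP) * (φ (φ c)) * (x) ^ 2 * (φ x) + (-1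 : F) * (PP) * (φ (φ c)) * (x) ^ 2 * (φ (φ x)) + (-1 : F) * (PP) * (φ (φ c)) * (φ x) ^ 2 * (φ (φ x)) + (-1 : F) * (PP) * (φ (φ c)) * (φ x) ^ 3 + (-1 : F) * (PP) * (ka) * (φ x) + (-1 : F) * (PP) * (ka) * (φ (φ x)) + (-2 : F) * (PP) * (x) * (φ x) * (φ (φ x)) + (-2 : F) * (PP) * (x) * (φ x) ^ 2 + (-1 : F) * (PP) * (x) ^ 2 * (φ x) + (-1 : F) * (PP) * (x) ^ 2 * (φ (φ x)) + (-1 : F) * (PP) * (φ x) ^ 2 * (φ (φ x)) + (-1 : F) * (PP) * (φ x) ^ 3 + (-1 : F) * (PP) ^ 2 * (PP1) * (φ x) + (-1 : F) * (PP) ^ 2 * (PP1) * (φ (φ x)) + (-1 : F) * (PP) ^ 2 * (QQ1) * (φ x) + (-1 : F) * (PP) ^ 2 * (QQ1) * (φ (φ x)) + (-2 : F) * (PP) ^ 2 * (φ c) * (φ (φ c)) * (φ x) * (φ (φ x)) + (-1 : F) * (PP) ^ 2 * (φ c) * (φ (φ c)) * (φ x) ^ 2 + (-1 : F) * (PP)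 ^ 2 * (φ c) * (φ (φ c)) * (φ (φ x)) ^ 2 + (-2 : F) * (PP) ^ 2 * (φ c) * (φ x) * (φ (φ x)) + (-1 : F) * (PP) ^ 2 * (φ c) * (φ x) ^ 2 + (-1 : F) * (PP) ^ 2 * (φ c) * (φ (φ x)) ^ 2 + (-2 : F) * (PP) ^ 2 * (φ (φ c)) * (φ x) * (φ (φ x)) + (-1 : F) * (PP) ^ 2 * (φ (φ c)) * (φ x) ^ 2 + (-1 : F) * (PP) ^ 2 * (φ (φ c)) * (φ (φ x)) ^ 2 + (-2 : F) * (PP) ^ 2 * (φ x) * (φ (φ x)) + (-1 : F) * (PP) ^ 2 * (φ x) ^ 2 + (-1 : F) * (PP) ^ 2 * (φ (φ x)) ^ 2 + (-6 : F) * (QQ) * (c) * (φ c) * (φ (φ c)) * (x) * (φ x) ^ 2 + (-6 : F) * (QQ) * (c) * (φ c) * (φ (φ c)) * (x) ^ 2 * (φ x) + (-2 : F) * (QQ) * (c) * (φ c) * (φ (φ c)) * (x) ^ 3 + (-2 : F) * (QQ) * (c) * (φ c) * (φ (φ c)) * (φ x) ^ 3 + (-6 : F) * (QQ) * (c) * (φ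 c) * (x) * (φ x) ^ 2 + (-6 : F) * (QQ) * (c) * (φ c) * (x) ^ 2 * (φ x) + (-2 : F) * (QQ) * (c) * (φ c) * (x) ^ 3 + (-2 : F) * (QQ) * (c) * (φ c) * (φ x) ^ 3 + (-3 : F) * (QQ) * (c) * (φ c) ^ 2 * (φ (φ c)) * (x) * (φ x) ^ 2 + (-3 : F) * (QQ) * (c) * (φ c) ^ 2 * (φ (φ c)) * (x) ^ 2 * (φ x) + (-1 : F) * (QQ) * (c) * (φ c) ^ 2 * (φ (φ c)) * (x) ^ 3 + (-1 : F) * (QQ) * (c) * (φ c) ^ 2 * (φ (φ c)) * (φ x) ^ 3 + (-3 : F) * (QQ) * (c) * (φ c) ^ 2 * (x) * (φ x) ^ 2 + (-3 : F) * (QQ) * (c) * (φ c) ^ 2 * (x) ^ 2 * (φ x) + (-1 : F) * (QQ) * (c) * (φ c) ^ 2 * (x) ^ 3 + (-1 : F) * (QQ) * (c) * (φ c) ^ 2 * (φ x) ^ 3 + (-3 : F) * (QQ) * (c) * (φ (φ c)) * (x) * (φ x) ^ 2 + (-3 : F) * (QQ) * (c) * (φ (φ c)) * (x) ^ 2 *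 (φ x) + (-1 : F) * (QQ) * (c) * (φ (φ c)) * (x) ^ 3 + (-1 : F) * (QQ) * (c) * (φ (φ c)) * (φ x) ^ 3 + (-3 : F) * (QQ) * (c) * (x) * (φ x) ^ 2 + (-3 : F) * (QQ) * (c) * (x) ^ 2 * (φ x) + (-1 : F) * (QQ) * (c) * (x) ^ 3 + (-1 : F) * (QQ) * (c) * (φ x) ^ 3 + (-1 : F) * (QQ) * (φ c) * (φ (φ c)) * (ka) * (x) + (-1 : F) * (QQ) * (φ c) * (φ (φ c)) * (ka) * (φ x) + (-6 : F) * (QQ) * (φ c) * (φ (φ c)) * (x) * (φ x) ^ 2 + (-6 : F) * (QQ) * (φ c) * (φ (φ c)) * (x) ^ 2 * (φ x) + (-2 : F) * (QQ) * (φ c) * (φ (φ c)) * (x) ^ 3 + (-2 : F) * (QQ) * (φ c) * (φ (φ c)) * (φ x) ^ 3 + (-1 : F) * (QQ) * (φ c) * (ka) * (x) + (-1 : F) * (QQ) * (φ c) * (ka) * (φ x) + (-6 : F) * (QQ) * (φ c) * (x) * (φ x) ^ 2 + (-6 : F) * (QQ) * (φ c) * (x) ^ 2 * (φ x) + (-2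 : F) * (QQ) * (φ c) * (x) ^ 3 + (-2 : F) * (QQ) * (φ c) * (φ x) ^ 3 + (-3 : F) * (QQ) * (φ c) ^ 2 * (φ (φ c)) * (x) * (φ x) ^ 2 + (-3 : F) * (QQ) * (φ c) ^ 2 * (φ (φ c)) * (x) ^ 2 * (φ x) + (-1 : F) * (QQ) * (φ c) ^ 2 * (φ (φ c)) * (x) ^ 3 + (-1 : F) * (QQ) * (φ c) ^ 2 * (φ (φ c)) * (φ x) ^ 3 + (-3 : F) * (QQ) * (φ c) ^ 2 * (x) * (φ x) ^ 2 + (-3 : F) * (QQ) * (φ c) ^ 2 * (x) ^ 2 * (φ x) + (-1 : F) * (QQ) * (φ c) ^ 2 * (x) ^ 3 + (-1 : F) * (QQ) * (φ c) ^ 2 * (φ x) ^ 3 + (-1 : F) * (QQ) * (φ (φ c)) * (ka) * (x) + (-1 : F) * (QQ) * (φ (φ c)) * (ka) * (φ x) + (-3 : F) * (QQ) * (φ (φ c)) * (x) * (φ x) ^ 2 + (-3 : F) * (QQ) * (φ (φ c)) * (x) ^ 2 * (φ x) + (-1 : F) * (QQ) * (φ (φ c)) * (x) ^ 3 + (-1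 : F) * (QQ) * (φ (φ c)) * (φ x) ^ 3 + (-1 : F) * (QQ) * (ka) * (x) + (-1 : F) * (QQ) * (ka) * (φ x) + (-3 : F) * (QQ) * (x) * (φ x) ^ 2 + (-3 : F) * (QQ) * (x) ^ 2 * (φ x) + (-1 : F) * (QQ) * (x) ^ 3 + (-1 : F) * (QQ) * (φ x) ^ 3 + (-4 : F) * (c) * (φ c) * (φ (φ c)) * (ka) * (x) * (φ x) + (-2 : F) * (c) * (φ c) * (φ (φ c)) * (ka) * (x) ^ 2 + (-2 : F) * (c) * (φ c) * (φ (φ c)) * (ka) * (φ x) ^ 2 + (-4 : F) * (c) * (φ c) * (ka) * (x) * (φ x) + (-2 : F) * (c) * (φ c) * (ka) * (x) ^ 2 + (-2 : F) * (c) * (φ c) * (ka) * (φ x) ^ 2 + (-2 : F) * (c) * (φ c) ^ 2 * (φ (φ c)) * (ka) * (x) * (φ x) + (-1 : F) * (c) * (φ c) ^ 2 * (φ (φ c)) * (ka) * (x) ^ 2 + (-1 : F) * (c) * (φ c) ^ 2 * (φ (φ c)) * (ka) * (φ x) ^ 2 + (-2 : F) * (c) * (φ c) ^ 2 * (ka)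 * (x) * (φ x) + (-1 : F) * (c) * (φ c) ^ 2 * (ka) * (x) ^ 2 + (-1 : F) * (c) * (φ c) ^ 2 * (ka) * (φ x) ^ 2 + (-2 : F) * (c) * (φ (φ c)) * (ka) * (x) * (φ x) + (-1 : F) * (c) * (φ (φ c)) * (ka) * (x) ^ 2 + (-1 : F) * (c) * (φ (φ c)) * (ka) * (φ x) ^ 2 + (-2 : F) * (c) * (ka) * (x) * (φ x) + (-1 : F) * (c) * (ka) * (x) ^ 2 + (-1 : F) * (c) * (ka) * (φ x) ^ 2 + (-4 : F) * (φ c) * (φ (φ c)) * (ka) * (x) * (φ x) + (-2 : F) * (φ c) * (φ (φ c)) * (ka) * (x) ^ 2 + (-2 : F) * (φ c) * (φ (φ c)) * (ka) * (φ x) ^ 2 + (-4 : F) * (φ c) * (ka) * (x) * (φ x) + (-2 : F) * (φ c) * (ka) * (x) ^ 2 + (-2 : F) * (φ c) * (ka) * (φ x) ^ 2 + (-2 : F) * (φ c) ^ 2 * (φ (φ c)) * (ka) * (x) * (φ x) + (-1 : F) * (φ c) ^ 2 * (φ (φ c)) * (ka) * (x) ^ 2 + (-1 : F) * (φ c) ^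 2 * (φ (φ c)) * (ka) * (φ x) ^ 2 + (-2 : F) * (φ c) ^ 2 * (ka) * (x) * (φ x) + (-1 : F) * (φ c) ^ 2 * (ka) * (x) ^ 2 + (-1 : F) * (φ c) ^ 2 * (ka) * (φ x) ^ 2 + (-2 : F) * (φ (φ c)) * (ka) * (x) * (φ x) + (-1 : F) * (φ (φ c)) * (ka) * (x) ^ 2 + (-1 : F) * (φ (φ c)) * (ka) * (φ x) ^ 2 + (-2 : F) * (ka) * (x) * (φ x) + (-1 : F) * (ka) * (x) ^ 2 + (-1 : F) * (ka) * (φ x) ^ 2) * htwo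
    rw [Polynomial.mem_roots']
    refine ⟨hpne, ?_⟩
    rw [hp]
    simp only [Polynomial.IsRoot.def, Polynomial.eval_add, Polynomial.eval_mul,
      Polynomial.eval_pow, Polynomial.eval_C, Polynomial.eval_X]
    linear_combination hquart
  have hinj : Set.InjOn (fun x : F => x + φ x) {x : F | G (x + a) + c * G x = b} := by
    intro x hxS y hyS hxy
    simp only [Set.mem_setOf_eq] at hxS hyS
    have hxy' : x + φ x = y + φ y := hxy
    have e1 := hdet x hxS
    have e2 := hdet y hyS
    have hxy2 : φ x + φ (φ x) = φ y + φ (φ y) := by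
      have h3 := congrArg (⇑φ) hxy'
      simpa [map_add] using h3
    rw [hxy', hxy2] at e1
    exact mul_left_cancel₀ hne0 (e1.trans e2.symm)
  calc ({x : F | G (x + a) + c * G x = b}).ncard
      = ((fun x : F => x + φ x) '' {x : F | G (x + a) + c * G x = b}).ncard :=
        (Set.ncard_image_of_injOn hinj).symm
    _ ≤ (↑p.roots.toFinset : Set F).ncard := by
        apply Set.ncard_le_ncard _ p.roots.toFinset.finite_toSet
        rintro _ ⟨x, hxS, rfl⟩
        simp only [Finset.coe_sort_coe, Finset.mem_coe, Multiset.mem_toFinset]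
        exact hroots x hxS
    _ = p.roots.toFinset.card := Set.ncard_coe_finset _
    _ ≤ Multiset.card p.roots := p.roots.toFinset_card_le
    _ ≤ p.natDegree := p.card_roots'
    _ ≤ 4 := hdeg
end

section
/- Let m be a positive integer with m ≢ 1 (mod 3), n = 3m, q = 2^n, and let δ ∈ F_q satisfy Tr_m^{3m}(δ) ≠ 0. Define F : F_q → F_q by F(x) = (x^{2^m} + x + δ)^{2^{2m−1} + 2^{m−1}} + x. Then for every c ∈ F_q not in the subfield F_{2^m} (i.e., c^{2^m} ≠ c), the c-differential uniformity of F is at most 4: for all a, b ∈ F_q, the equation F(x+a) + c·F(x) = b has at most four solutions x ∈ F_q. -/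
private lemma rootFinset {F : Type*} [Field F] (p : Polynomial F) (hp : p ≠ 0) :
    ∃ s : Finset F, {z : F | Polynomial.eval z p = 0} = ↑s ∧ s.card ≤ p.natDegree := by
  classical
  refine ⟨p.roots.toFinset, ?_, (Multiset.toFinset_card_le _).trans (Polynomial.card_roots' p)⟩
  ext z
  simp [Polynomial.mem_roots, hp, Polynomial.IsRoot]

private lemma quartic_finset {F : Type*} [Field F] (k4 k2 k1 k0 : F) (h : k4 ≠ 0) :
    ∃ s : Finset F, {z : F | k4*z^4 + k2*z^2 + k1*z + k0 = 0} = ↑s ∧ s.card ≤ 4 := by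
  set p : Polynomial F := Polynomial.C k4 * Polynomial.X^4 + Polynomial.C k2 * Polynomial.X^2
      + Polynomial.C k1 * Polynomial.X + Polynomial.C k0 with hpdef
  have hev : ∀ z : F, Polynomial.eval z p = k4*z^4 + k2*z^2 + k1*z + k0 := by
    intro z; simp [hpdef]
  have hne : p ≠ 0 := by
    intro h0
    apply h
    have h4 : p.coeff 4 = k4 := by simp [hpdef, Polynomial.coeff_X_pow, Polynomial.coeff_X]
    rw [← h4, h0, Polynomial.coeff_zero]
  have hdeg : p.natDegree ≤ 4 := by rw [hpdef]; compute_degree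
  obtain ⟨s, hs, hc⟩ := rootFinset p hne
  refine ⟨s, ?_, hc.trans hdeg⟩
  rw [← hs]; ext z; simp [hev]

private lemma quadratic_finset {F : Type*} [Field F] (k2 k1 k0 : F) (h : k2 ≠ 0) :
    ∃ s : Finset F, {z : F | k2*z^2 + k1*z + k0 = 0} = ↑s ∧ s.card ≤ 2 := by
  set p : Polynomial F := Polynomial.C k2 * Polynomial.X^2
      + Polynomial.C k1 * Polynomial.X + Polynomial.C k0 with hpdef
  have hev : ∀ z : F, Polynomial.eval z p = k2*z^2 + k1*z + k0 := by
    intro z; simp [hpdef]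
  have hne : p ≠ 0 := by
    intro h0
    apply h
    have h4 : p.coeff 2 = k2 := by simp [hpdef, Polynomial.coeff_X_pow, Polynomial.coeff_X]
    rw [← h4, h0, Polynomial.coeff_zero]
  have hdeg : p.natDegree ≤ 2 := by rw [hpdef]; compute_degree
  obtain ⟨s, hs, hc⟩ := rootFinset p hne
  refine ⟨s, ?_, hc.trans hdeg⟩
  rw [← hs]; ext z; simp [hev]

theorem stmt_10 (m : ℕ) (hm : 0 < m) (hm3 : m % 3 ≠ 1) (F : Type*) [Field F] [Fintype F]
    (hF : Fintype.card F = 2 ^ (3 * m)) (δ c : F)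
    (hδ : δ + δ ^ (2 ^ m) + δ ^ (2 ^ (2 * m)) ≠ 0)
    (hc : c ^ (2 ^ m) ≠ c)
    (G : F → F)
    (hG : ∀ x, G x = (x ^ (2 ^ m) + x + δ) ^ (2 ^ (2 * m - 1) + 2 ^ (m - 1)) + x) :
    ∀ a b : F, {x : F | G (x + a) + c * G x = b}.ncard ≤ 4 := by
  classical
  -- characteristic 2
  have hchar2 : CharP F 2 := by
    haveI hrc := ringChar.charP F
    obtain ⟨n, hprime, hcard⟩ := FiniteField.card F (ringChar F)
    have hdvd2 : ringChar F ∣ 2 := by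
      refine hprime.dvd_of_dvd_pow (n := 3 * m) ?_
      rw [← hF, hcard]
      exact dvd_pow_self _ (by exact_mod_cast n.ne_zero)
    have h2 : ringChar F = 2 := by
      have h1 := Nat.le_of_dvd (by norm_num) hdvd2
      have h2 := hprime.two_le
      omega
    rwa [h2] at hrc
  haveI := hchar2
  haveI : ExpChar F 2 := ExpChar.prime Nat.prime_two
  have h2 : (2 : F) = 0 := by
    have := CharP.cast_eq_zero F 2
    exact_mod_cast this
  set σ : F →+* F := iterateFrobenius F 2 m with hσdef
  have hpow : ∀ t : F, t ^ (2 ^ m) = σ t := fun t => rfl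
  have hσ3 : ∀ t : F, σ (σ (σ t)) = t := by
    intro t
    have hmul : (2:ℕ) ^ m * (2 ^ m * 2 ^ m) = 2 ^ (3 * m) := by
      rw [← pow_add, ← pow_add]; congr 1; ring
    rw [← hpow, ← hpow, ← hpow, ← pow_mul, ← pow_mul, hmul, ← hF, FiniteField.pow_card]
  have hσinj : ∀ s t : F, σ s = σ t → s = t := by
    intro s t hst
    have := congrArg σ (congrArg σ hst)
    rwa [hσ3, hσ3] at this
  intro a b
  -- conjugate constants
  obtain ⟨c1, hσc⟩ : ∃ t, σ c = t := ⟨_, rfl⟩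
  obtain ⟨c2, hσc1⟩ : ∃ t, σ c1 = t := ⟨_, rfl⟩
  have hσc2 : σ c2 = c := by rw [← hσc1, ← hσc, hσ3]
  obtain ⟨δ1, hσδ⟩ : ∃ t, σ δ = t := ⟨_, rfl⟩
  obtain ⟨δ2, hσδ1⟩ : ∃ t, σ δ1 = t := ⟨_, rfl⟩
  have hσδ2 : σ δ2 = δ := by rw [← hσδ1, ← hσδ, hσ3]
  obtain ⟨a1, hσa⟩ : ∃ t, σ a = t := ⟨_, rfl⟩
  obtain ⟨a2, hσa1⟩ : ∃ t, σ a1 = t := ⟨_, rfl⟩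
  have hσa2 : σ a2 = a := by rw [← hσa1, ← hσa, hσ3]
  obtain ⟨b1, hσb⟩ : ∃ t, σ b = t := ⟨_, rfl⟩
  obtain ⟨b2, hσb1⟩ : ∃ t, σ b1 = t := ⟨_, rfl⟩
  have hσb2 : σ b2 = b := by rw [← hσb1, ← hσb, hσ3]
  obtain ⟨l0, hl0⟩ : ∃ t : F, t = (1+c)^2 := ⟨_, rfl⟩
  obtain ⟨l1, hl1⟩ : ∃ t : F, t = (1+c1)^2 := ⟨_, rfl⟩
  obtain ⟨l2, hl2⟩ : ∃ t : F, t = (1+c2)^2 := ⟨_, rfl⟩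
  have hσl0 : σ l0 = l1 := by
    rw [hl0, hl1]; simp only [map_pow, map_add, map_one, hσc]
  have hσl1 : σ l1 = l2 := by
    rw [hl1, hl2]; simp only [map_pow, map_add, map_one, hσc1]
  have hσl2 : σ l2 = l0 := by
    rw [hl2, hl0]; simp only [map_pow, map_add, map_one, hσc2]
  -- nonvanishing
  have hcne1 : c ≠ 1 := fun h => hc (by rw [h, one_pow])
  have hone : ∀ t : F, σ t = 1 → t = 1 := by
    intro t ht; apply hσinj; rw [ht, map_one]
  have h1c : (1:F) + c ≠ 0 := by
    intro h; exact hcne1 (by linear_combination h - h2)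
  have h1c1 : (1:F) + c1 ≠ 0 := by
    intro h
    have hh : c1 = 1 := by linear_combination h - h2
    exact hcne1 (hone c (hσc.trans hh))
  have h1c2 : (1:F) + c2 ≠ 0 := by
    intro h
    have hh : c2 = 1 := by linear_combination h - h2
    have hh1 : c1 = 1 := hone c1 (hσc1.trans hh)
    exact hcne1 (hone c (hσc.trans hh1))
  have hl0ne : l0 ≠ 0 := by rw [hl0]; exact pow_ne_zero 2 h1c
  have hl1ne : l1 ≠ 0 := by rw [hl1]; exact pow_ne_zero 2 h1c1
  have hl2ne : l2 ≠ 0 := by rw [hl2]; exact pow_ne_zero 2 h1c2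
  -- the conic coefficients
  obtain ⟨p1, hp1⟩ : ∃ t : F, t = (l0+l1)*(a+a2) := ⟨_, rfl⟩
  obtain ⟨q1, hq1⟩ : ∃ t : F, t = l0*l1*(δ+δ1+δ2) + (l0+l1)*(a2+a1) := ⟨_, rfl⟩
  obtain ⟨r1, hr1⟩ : ∃ t : F, t = l1*((a2+a1)*(a+a2) + (a+b)^2) + l0*l1*(δ1^2+δ2^2)
      + l0*((a+a2)*(δ+δ1+δ2) + (a+a2)*(a1+a) + (a1+b1)^2) := ⟨_, rfl⟩
  obtain ⟨p2, hp2⟩ : ∃ t : F, t = l0*l2*(δ+δ1+δ2) + (l0+l2)*(a+a2) := ⟨_, rfl⟩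
  obtain ⟨q2, hq2⟩ : ∃ t : F, t = (l0+l2)*(a2+a1) := ⟨_, rfl⟩
  obtain ⟨r2, hr2⟩ : ∃ t : F, t = l2*((a2+a1)*(a+a2) + (a+b)^2) + l0*l2*δ2^2
      + l0*((a2+a1)*(δ+δ1+δ2) + (a1+a)*(a2+a1) + (a2+b2)^2) := ⟨_, rfl⟩
  -- coordinate functions
  obtain ⟨Vf, hVf⟩ : ∃ f : F → F, f = fun t => σ (σ t) + σ t + δ1 := ⟨_, rfl⟩
  obtain ⟨Wf, hWf⟩ : ∃ f : F → F, f = fun t => t + σ (σ t) + δ2 := ⟨_, rfl⟩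
  have hPa : ∀ t : F, t ^ (2^(2*m-1) + 2^(m-1)) * t ^ (2^(2*m-1) + 2^(m-1)) = σ (σ t) * σ t := by
    intro t
    have hEE : (2^(2*m-1) + 2^(m-1)) + (2^(2*m-1) + 2^(m-1)) = 2^(2*m) + 2^m := by
      have e1 : (2:ℕ)^(2*m) = 2^(2*m-1) * 2 := by rw [← pow_succ]; congr 1; omega
      have e2 : (2:ℕ)^m = 2^(m-1) * 2 := by rw [← pow_succ]; congr 1; omega
      rw [e1, e2]; ring
    have h2m : (2:ℕ)^(2*m) = 2^m * 2^m := by rw [two_mul, pow_add]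
    rw [← pow_add, hEE, pow_add, h2m, pow_mul]
    simp only [hpow]
  -- main per-solution facts
  have main : ∀ x : F, G (x + a) + c * G x = b →
      (l0*(Vf x*Wf x) + (a+a2)*(Vf x) + (a2+a1)*(Wf x) + (a2+a1)*(a+a2) + l0*x^2 + (a+b)^2 = 0)
      ∧ (l0*l1*(Vf x)^2 + p1*(Vf x) + q1*(Wf x) + r1 = 0)
      ∧ (l0*l2*((Vf x)+(Wf x))^2 + p2*(Vf x) + q2*(Wf x) + r2 = 0) := by
    intro x hx
    obtain ⟨y, hσx⟩ : ∃ t, σ x = t := ⟨_, rfl⟩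
    obtain ⟨z, hσy⟩ : ∃ t, σ y = t := ⟨_, rfl⟩
    have hσz : σ z = x := by rw [← hσy, ← hσx, hσ3]
    simp only [hVf, hWf, hσx, hσy]
    simp only [hG] at hx
    simp only [hpow] at hx
    simp only [map_add, hσx, hσa] at hx
    set PA := (y + a1 + (x + a) + δ)^(2^(2*m-1) + 2^(m-1)) with hPA
    set PU := (y + x + δ)^(2^(2*m-1) + 2^(m-1)) with hPU
    have heq : PA + c*PU = (1+c)*x + (a+b) := by
      linear_combination hx - (x + a + c*x)*h2
    have hsq : (PA + c*PU)*(PA + c*PU) = ((1+c)*x + (a+b))*((1+c)*x + (a+b)) := by rw [heq]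
    have hPP : PA*PA = (x + a + (z + a2) + δ2) * (z + a2 + (y + a1) + δ1) := by
      rw [hPA]
      have h := hPa (y + a1 + (x + a) + δ)
      simp only [map_add, hσx, hσy, hσz, hσa, hσa1, hσa2, hσδ, hσδ1] at h
      linear_combination h
    have hQQ : PU*PU = (x + z + δ2) * (z + y + δ1) := by
      rw [hPU]
      have h := hPa (y + x + δ)
      simp only [map_add, hσx, hσy, hσz, hσδ, hσδ1] at h
      linear_combination h
    have hE0 : l0*((z+y+δ1)*(x+z+δ2)) + (a+a2)*(z+y+δ1) + (a2+a1)*(x+z+δ2)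
        + (a2+a1)*(a+a2) + l0*x^2 + (a+b)^2 = 0 := by
      linear_combination hsq - hPP - (c*c)*hQQ
        + (δ1*δ2 + z*δ2 + z*δ1 + z^2 + y*δ2 + y*z + x*δ1 + x*z + x*y + x^2)*hl0
        + (b^2 + 2*a*b + a^2 - c*PA*PU + c*δ1*δ2 + z*c*δ2 + z*c*δ1 + z^2*c + y*c*δ2 + y*z*c
           + x*b + x*a + x*c*b + x*c*a + x*c*δ1 + x*z*c + x*y*c + x^2 + 2*x^2*c + x^2*c^2)*h2
    have hE1 : l1*((x + z + δ2)*(y + x + δ)) + (a1+a)*(x + z + δ2) + (a+a2)*(y + x + δ)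
        + (a+a2)*(a1+a) + l1*y^2 + (a1+b1)^2 = 0 := by
      have h := congrArg σ hE0
      simp only [map_add, map_mul, map_pow, map_zero, hσx, hσy, hσz, hσa, hσa1, hσa2,
        hσb, hσb1, hσb2, hσδ, hσδ1, hσδ2, hσl0, hσl1, hσl2] at h
      linear_combination h
    have hE2 : l2*((y + x + δ)*(z + y + δ1)) + (a2+a1)*(y + x + δ) + (a1+a)*(z + y + δ1)
        + (a1+a)*(a2+a1) + l2*z^2 + (a2+b2)^2 = 0 := by
      have h := congrArg σ hE1
      simp only [map_add, map_mul, map_pow, map_zero, hσx, hσy, hσz, hσa, hσa1, hσa2,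
        hσb, hσb1, hσb2, hσδ, hσδ1, hσδ2, hσl0, hσl1, hσl2] at h
      linear_combination h
    refine ⟨by linear_combination hE0, ?_, ?_⟩
    · linear_combination l1*hE0 + l0*hE1 + (z+y+δ1)*hp1 + (x+z+δ2)*hq1 + hr1
        + (δ2*a2*l0 + δ2^2*l0*l1 + δ1*a2*l0 + δ1*a*l0 + δ1^2*l0*l1 + z*a2*l0 + z*δ1*l0*l1
           - y*δ2*l0*l1 + y*δ1*l0*l1 - x*a*l0 - x*z*l0*l1 - x*y*l0*l1 - x^2*l0*l1)*h2
    · linear_combination l2*hE0 + l0*hE2 + (z+y+δ1)*hp2 + (x+z+δ2)*hq2 + hr2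
        + (δ2*a2*l0 + δ2*a1*l0 + δ2^2*l0*l2 + δ1*a2*l0 + δ1*δ2*l0*l2 + δ1^2*l0*l2 + z*a2*l0
           + 2*z*δ2*l0*l2 + 2*z*δ1*l0*l2 + z^2*l0*l2 - y*a1*l0 + y*δ2*l0*l2 + y*δ1*l0*l2
           + y*z*l0*l2 + x*δ2*l0*l2 + x*z*l0*l2)*h2
  set S := {x : F | G (x + a) + c * G x = b} with hS
  have hinj : Set.InjOn (fun t => (Vf t, Wf t)) S := by
    intro x hx x' hx' hEq
    simp only [Prod.mk.injEq] at hEq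
    obtain ⟨hfst, hsnd⟩ := hEq
    have e0 := (main x hx).1
    have e0' := (main x' hx').1
    have hxx : l0*x^2 = l0*x'^2 := by
      linear_combination e0 - e0' - (l0*(Vf x) + (a2+a1))*hsnd - (l0*(Wf x') + (a+a2))*hfst
    have hxx2 : x^2 = x'^2 := mul_left_cancel₀ hl0ne hxx
    have hfr : frobenius F 2 x = frobenius F 2 x' := by
      rw [frobenius_def, frobenius_def]; exact hxx2
    exact (frobenius F 2).injective hfr
  have hScard : S.ncard = ((fun t => (Vf t, Wf t)) '' S).ncard :=
    (Set.ncard_image_of_injOn hinj).symm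
  by_cases hq10 : q1 = 0
  · -- degenerate case: two quadratics
    have hK1 : l0*l1 ≠ 0 := mul_ne_zero hl0ne hl1ne
    have hK2 : l0*l2 ≠ 0 := mul_ne_zero hl0ne hl2ne
    obtain ⟨s1, hs1, hs1c⟩ := quadratic_finset (l0*l1) p1 r1 hK1
    choose s2 hs2 hs2c using fun v : F =>
      quadratic_finset (l0*l2) q2 (l0*l2*v^2 + p2*v + r2) hK2
    set Zf : Finset (F × F) := s1.biUnion (fun v => (s2 v).image (fun t => (v, t))) with hZf
    have hsub : ((fun t => (Vf t, Wf t)) '' S) ⊆ ↑Zf := by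
      rintro _ ⟨x, hx, rfl⟩
      obtain ⟨hE0x, hC1x, hC2x⟩ := main x hx
      have hv : Vf x ∈ s1 := by
        rw [← Finset.mem_coe, ← hs1, Set.mem_setOf_eq]
        linear_combination hC1x - (Wf x)*hq10
      have hw : Wf x ∈ s2 (Vf x) := by
        rw [← Finset.mem_coe, ← hs2, Set.mem_setOf_eq]
        linear_combination hC2x - (l0*l2*(Vf x)*(Wf x))*h2
      exact Finset.mem_coe.mpr (Finset.mem_biUnion.mpr
        ⟨Vf x, hv, Finset.mem_image.mpr ⟨Wf x, hw, rfl⟩⟩)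
    have hZcard : Zf.card ≤ 4 := by
      calc Zf.card ≤ ∑ v ∈ s1, ((s2 v).image (fun t => (v, t))).card := Finset.card_biUnion_le
        _ ≤ ∑ v ∈ s1, 2 :=
            Finset.sum_le_sum (fun v _ => (Finset.card_image_le).trans (hs2c v))
        _ = s1.card * 2 := by rw [Finset.sum_const, smul_eq_mul]
        _ ≤ 4 := by omega
    calc S.ncard = ((fun t => (Vf t, Wf t)) '' S).ncard := hScard
      _ ≤ (↑Zf : Set (F × F)).ncard := Set.ncard_le_ncard hsub (Zf.finite_toSet)
      _ = Zf.card := Set.ncard_coe_finset Zf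
      _ ≤ 4 := hZcard
  · -- generic case: a quartic
    have hk4 : l0*l2*(l0*l1)^2 ≠ 0 :=
      mul_ne_zero (mul_ne_zero hl0ne hl2ne) (pow_ne_zero 2 (mul_ne_zero hl0ne hl1ne))
    obtain ⟨s4, hs4, hs4c⟩ := quartic_finset (l0*l2*(l0*l1)^2)
      (l0*l2*(p1+q1)^2 + q1*q2*(l0*l1)) (q1^2*p2 + q1*q2*p1)
      (l0*l2*r1^2 + q1*q2*r1 + q1^2*r2) hk4
    have hsub : ((fun t => (Vf t, Wf t)) '' S)
        ⊆ (fun v => (v, q1⁻¹*(l0*l1*v^2 + p1*v + r1))) '' ↑s4 := by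
      rintro _ ⟨xx, hx, rfl⟩
      obtain ⟨hE0x, hC1x, hC2x⟩ := main xx hx
      have hsx : q1 * (Wf xx) = l0*l1*(Vf xx)^2 + p1*(Vf xx) + r1 := by
        linear_combination hC1x - (l0*l1*(Vf xx)^2 + p1*(Vf xx) + r1)*h2
      have hmem : Vf xx ∈ s4 := by
        rw [← Finset.mem_coe, ← hs4, Set.mem_setOf_eq]
        linear_combination q1^2*hC2x
          + (l0*l2*q1*(Wf xx) + q2*q1 + l0*l2*(l0*l1*(Vf xx)^2 + p1*(Vf xx) + r1))*hsx
          + (q1*r1*q2 - q1^2*q2*(Wf xx) + p1*q1*q2*(Vf xx) + l0*l2*r1^2 - l0*l2*q1^2*(Wf xx)^2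
             - l0*l2*q1^2*(Vf xx)*(Wf xx) + l0*l2*p1*r1*(Vf xx) + l0*l2*p1*q1*(Vf xx)^2
             + l0*l2*p1^2*(Vf xx)^2 + l0*l1*q1*q2*(Vf xx)^2 + l0^2*l1*l2*r1*(Vf xx)^2
             + l0^2*l1*l2*p1*(Vf xx)^3 + l0^3*l1^2*l2*(Vf xx)^4)*h2
      refine ⟨Vf xx, hmem, ?_⟩
      have hsnd : q1⁻¹*(l0*l1*(Vf xx)^2 + p1*(Vf xx) + r1) = Wf xx := by
        rw [← hsx, inv_mul_cancel_left₀ hq10]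
      simp only [hsnd]
    calc S.ncard = ((fun t => (Vf t, Wf t)) '' S).ncard := hScard
      _ ≤ ((fun v => (v, q1⁻¹*(l0*l1*v^2 + p1*v + r1))) '' ↑s4).ncard :=
          Set.ncard_le_ncard hsub ((s4.finite_toSet).image _)
      _ ≤ (↑s4 : Set F).ncard := Set.ncard_image_le (s4.finite_toSet)
      _ = s4.card := Set.ncard_coe_finset s4
      _ ≤ 4 := hs4c
end

section
/- Let m be a positive integer with 2m ≢ 1 (mod 3), n = 3m, q = 2^n, and δ ∈ F_q. Define F : F_q → F_q by F(x) = (x^{2^m} + x + δ)^{2^{3m−1} + 2^{m−1}} + x. Then for every c in the subfield F_{2^m} of F_q with c ≠ 1 (i.e., c^{2^m} = c and c ≠ 1), F is PcN: for all a, b ∈ F_q, the equation F(x+a) + c·F(x) = b has exactly one solution x ∈ F_q. -/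
theorem stmt_11 (m : ℕ) (hm : 0 < m) (hm3 : (2 * m) % 3 ≠ 1) (F : Type*) [Field F] [Fintype F]
    (hF : Fintype.card F = 2 ^ (3 * m)) (δ c : F)
    (hc : c ^ (2 ^ m) = c) (hc1 : c ≠ 1)
    (G : F → F)
    (hG : ∀ x, G x = (x ^ (2 ^ m) + x + δ) ^ (2 ^ (3 * m - 1) + 2 ^ (m - 1)) + x) :
    ∀ a b : F, ∃! x : F, G (x + a) + c * G x = b := by
  have hp2 : CharP F 2 := by
    obtain ⟨p, hp⟩ := CharP.exists F
    haveI := hp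
    have hprime : p.Prime := CharP.char_is_prime F p
    obtain ⟨n, -, hcard⟩ := FiniteField.card F p
    have hdvd : p ∣ 2 ^ (3 * m) := by
      rw [← hF, hcard]
      exact dvd_pow_self p n.pos.ne'
    have hp2' : p = 2 :=
      (Nat.prime_dvd_prime_iff_eq hprime Nat.prime_two).mp (hprime.dvd_of_dvd_pow hdvd)
    exact hp2' ▸ hp
  haveI := hp2
  haveI : Fact (Nat.Prime 2) := ⟨Nat.prime_two⟩
  have htwo : (2 : F) = 0 := by
    have h := CharP.cast_eq_zero F 2
    exact_mod_cast h
  set ψ := iterateFrobenius F 2 m with hψdef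
  have hψ : ∀ t : F, ψ t = t ^ 2 ^ m := fun t => rfl
  have hadd : ∀ u v : F, (u + v) ^ 2 ^ m = u ^ 2 ^ m + v ^ 2 ^ m := by
    intro u v
    have h := map_add ψ u v
    simpa only [hψ] using h
  have hpow3 : ∀ t : F, ((t ^ 2 ^ m) ^ 2 ^ m) ^ 2 ^ m = t := by
    intro t
    have e3 : 2 ^ m * 2 ^ m * 2 ^ m = 2 ^ (3 * m) := by
      rw [← pow_add, ← pow_add]; congr 1; omega
    calc ((t ^ 2 ^ m) ^ 2 ^ m) ^ 2 ^ m = t ^ (2 ^ m * 2 ^ m * 2 ^ m) := by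
          rw [pow_mul, pow_mul]
      _ = t := by rw [e3, ← hF, FiniteField.pow_card]
  have key : ∀ t : F, (G t) ^ 2
      = (t ^ 2 ^ m + t + δ) * (t ^ 2 ^ m + t + δ) ^ 2 ^ m + t ^ 2 := by
    intro t
    rw [hG t]
    have h1 : ((t ^ 2 ^ m + t + δ) ^ (2 ^ (3 * m - 1) + 2 ^ (m - 1))) ^ 2
        = (t ^ 2 ^ m + t + δ) * (t ^ 2 ^ m + t + δ) ^ 2 ^ m := by
      rw [← pow_mul]
      have expo : (2 ^ (3 * m - 1) + 2 ^ (m - 1)) * 2 = 2 ^ (3 * m) + 2 ^ m := by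
        have h3 : 3 * m - 1 + 1 = 3 * m := by omega
        have h4 : m - 1 + 1 = m := by omega
        rw [add_mul, ← pow_succ, ← pow_succ, h3, h4]
      rw [expo, pow_add, ← hF, FiniteField.pow_card]
    linear_combination h1 + ((t ^ 2 ^ m + t + δ) ^ (2 ^ (3 * m - 1) + 2 ^ (m - 1)) * t) * htwo
  intro a b
  have hinj : Function.Injective fun t : F => G (t + a) + c * G t := by
    intro x y hxy0
    have hxy : G (x + a) + c * G x = G (y + a) + c * G y := hxy0
    obtain ⟨X1, hX1⟩ : ∃ t : F, t = x ^ 2 ^ m := ⟨_, rfl⟩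
    obtain ⟨X2, hX2⟩ : ∃ t : F, t = X1 ^ 2 ^ m := ⟨_, rfl⟩
    obtain ⟨Y1, hY1⟩ : ∃ t : F, t = y ^ 2 ^ m := ⟨_, rfl⟩
    obtain ⟨Y2, hY2⟩ : ∃ t : F, t = Y1 ^ 2 ^ m := ⟨_, rfl⟩
    obtain ⟨A1, hA1⟩ : ∃ t : F, t = a ^ 2 ^ m := ⟨_, rfl⟩
    obtain ⟨A2, hA2⟩ : ∃ t : F, t = A1 ^ 2 ^ m := ⟨_, rfl⟩
    obtain ⟨E1, hE1⟩ : ∃ t : F, t = δ ^ 2 ^ m := ⟨_, rfl⟩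
    obtain ⟨E2, hE2⟩ : ∃ t : F, t = E1 ^ 2 ^ m := ⟨_, rfl⟩
    have pX : ψ x = X1 := by rw [hψ, hX1]
    have pX1 : ψ X1 = X2 := by rw [hψ, hX2]
    have pX2 : ψ X2 = x := by rw [hψ, hX2, hX1]; exact hpow3 x
    have pY : ψ y = Y1 := by rw [hψ, hY1]
    have pY1 : ψ Y1 = Y2 := by rw [hψ, hY2]
    have pY2 : ψ Y2 = y := by rw [hψ, hY2, hY1]; exact hpow3 y
    have pA : ψ a = A1 := by rw [hψ, hA1]
    have pA1 : ψ A1 = A2 := by rw [hψ, hA2]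
    have pA2 : ψ A2 = a := by rw [hψ, hA2, hA1]; exact hpow3 a
    have pE : ψ δ = E1 := by rw [hψ, hE1]
    have pE1 : ψ E1 = E2 := by rw [hψ, hE2]
    have pE2 : ψ E2 = δ := by rw [hψ, hE2, hE1]; exact hpow3 δ
    have pc : ψ c = c := by rw [hψ]; exact hc
    have Hsq : (G (x + a) + c * G x) ^ 2 = (G (y + a) + c * G y) ^ 2 := by rw [hxy]
    have Hx : ∀ t : F, (G (t + a) + c * G t) ^ 2
        = ((t + a) ^ 2 ^ m + (t + a) + δ) * ((t + a) ^ 2 ^ m + (t + a) + δ) ^ 2 ^ m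
            + (t + a) ^ 2
            + c ^ 2 * ((t ^ 2 ^ m + t + δ) * (t ^ 2 ^ m + t + δ) ^ 2 ^ m + t ^ 2) := by
      intro t
      linear_combination key (t + a) + c ^ 2 * key t + (G (t + a) * c * G t) * htwo
    have H0raw := (Hx x).symm.trans (Hsq.trans (Hx y))
    simp only [hadd, ← hX1, ← hX2, ← hY1, ← hY2, ← hA1, ← hA2, ← hE1, ← hE2] at H0raw
    have H0 : (X1 + A1 + (x + a) + δ) * (X2 + A2 + (X1 + A1) + E1) + (x + a) ^ 2
          + c ^ 2 * ((X1 + x + δ) * (X2 + X1 + E1) + x ^ 2)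
        = (Y1 + A1 + (y + a) + δ) * (Y2 + A2 + (Y1 + A1) + E1) + (y + a) ^ 2
          + c ^ 2 * ((Y1 + y + δ) * (Y2 + Y1 + E1) + y ^ 2) := by
      linear_combination H0raw
    have H1 := congrArg ψ H0
    simp only [map_add, map_mul, map_pow, pX, pX1, pX2, pY, pY1, pY2, pA, pA1, pA2,
      pE, pE1, pE2, pc] at H1
    have h1c : (1 : F) + c ≠ 0 := by
      intro h
      exact hc1 (by linear_combination h - htwo)
    have T1 : ((1 : F) + c) ^ 2
        * ((x + y + X2 + Y2) ^ 2 + (δ + E1 + E2) * (X1 + Y1 + (X2 + Y2))) = 0 := by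
      linear_combination H0 + H1 +
        (Y2*E2 + Y2*E2*c + Y2*E2*c^2 + Y2*E1 + Y2*E1*c + Y2*E1*c^2 + Y2*δ + Y2*δ*c + Y2*δ*c^2 +
          Y2*A2 + Y2*A1 + Y2*a + Y2^2 + Y2^2*c + Y2^2*c^2 + Y1*E2 + Y1*E2*c + Y1*E2*c^2 + Y1*E1 +
          Y1*E1*c + Y1*E1*c^2 + Y1*δ + Y1*δ*c + Y1*δ*c^2 + Y1*A2 + (2:F)*Y1*A1 + Y1*a + Y1*Y2 +
          Y1*Y2*c^2 + Y1^2 + Y1^2*c^2 + y*E1 + y*E1*c^2 + y*A2 + y*A1 + y*a + (2:F)*y*Y2 +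
          (2:F)*y*Y2*c + (2:F)*y*Y2*c^2 + y*Y1 + y*Y1*c^2 + y^2 + y^2*c + y^2*c^2 + X2*E2*c +
          X2*E1*c + X2*δ*c + (-1:F)*X2*A2 + (-1:F)*X2*A1 + (-1:F)*X2*a + X2*Y2 + (2:F)*X2*Y2*c +
          X2*Y2*c^2 + X2*y + (2:F)*X2*y*c + X2*y*c^2 + X2^2*c + X1*E2*c + X1*E1*c + X1*δ*c +
          (-1:F)*X1*A2 + (-2:F)*X1*A1 + (-1:F)*X1*a + (-1:F)*X1*X2 + (-1:F)*X1*X2*c^2 +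
          (-1:F)*X1^2 + (-1:F)*X1^2*c^2 + (-1:F)*x*E1 + (-1:F)*x*E1*c^2 + (-1:F)*x*A2 +
          (-1:F)*x*A1 + (-1:F)*x*a + x*Y2 + (2:F)*x*Y2*c + x*Y2*c^2 + x*y + (2:F)*x*y*c +
          x*y*c^2 + (2:F)*x*X2*c + (-1:F)*x*X1 + (-1:F)*x*X1*c^2 + x^2*c) * htwo
    have T2 : (x + y + X2 + Y2) ^ 2 + (δ + E1 + E2) * (X1 + Y1 + (X2 + Y2)) = 0 := by
      rcases mul_eq_zero.mp T1 with h | h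
      · exact absurd h (pow_ne_zero 2 h1c)
      · exact h
    have T2s := congrArg ψ T2
    simp only [map_add, map_mul, map_pow, map_zero, pX, pX1, pX2, pY, pY1, pY2,
      pE, pE1, pE2] at T2s
    have IIc : (x + y + (X1 + Y1)) ^ 2
        + (δ + E1 + E2) * ((x + y + (X1 + Y1)) + (X1 + Y1 + (X2 + Y2))) = 0 := by
      linear_combination T2s + (Y1*E2 + Y1*E1 + Y1*δ + X1*E2 + X1*E1 + X1*δ) * htwo
    have IIs := congrArg ψ IIc
    simp only [map_add, map_mul, map_pow, map_zero, pX, pX1, pX2, pY, pY1, pY2,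
      pE, pE1, pE2] at IIs
    have IIIc : (X1 + Y1 + (X2 + Y2)) ^ 2 + (δ + E1 + E2) * (x + y + (X1 + Y1)) = 0 := by
      linear_combination IIs + ((-1:F)*Y2*E2 + (-1:F)*Y2*E1 + (-1:F)*Y2*δ + (-1:F)*X2*E2 +
        (-1:F)*X2*E1 + (-1:F)*X2*δ) * htwo
    obtain ⟨YY, hYY⟩ : ∃ t : F, t = x + y + (X1 + Y1) := ⟨_, rfl⟩
    obtain ⟨ZZ, hZZ⟩ : ∃ t : F, t = X1 + Y1 + (X2 + Y2) := ⟨_, rfl⟩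
    obtain ⟨DD, hDD⟩ : ∃ t : F, t = δ + E1 + E2 := ⟨_, rfl⟩
    have B1 : YY ^ 2 + DD * (YY + ZZ) = 0 := by
      rw [hYY, hZZ, hDD]; linear_combination IIc
    have B2 : ZZ ^ 2 + DD * YY = 0 := by
      rw [hZZ, hDD, hYY]; linear_combination IIIc
    have A4 : YY ^ 2 ^ m = ZZ := by
      have h := congrArg ψ hYY
      simp only [map_add, pX, pX1, pY, pY1] at h
      rw [hψ] at h
      rw [hZZ]
      linear_combination h
    have A5 : DD ^ 2 ^ m = DD := by
      have h := congrArg ψ hDD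
      simp only [map_add, pE, pE1, pE2] at h
      rw [hψ] at h
      linear_combination h - hDD
    have T4 : YY * (YY ^ 3 + DD ^ 2 * YY + DD ^ 3) = 0 := by
      linear_combination (YY ^ 2 + DD * YY + DD * ZZ) * B1 + DD ^ 2 * B2
        + (-(ZZ ^ 2 * DD ^ 2) - YY * ZZ * DD ^ 2 - YY ^ 2 * ZZ * DD - YY ^ 3 * DD) * htwo
    have hY0 : YY = 0 := by
      rcases mul_eq_zero.mp T4 with h | C3
      · exact h
      by_cases hD : DD = 0
      · rw [hD] at C3
        have h3 : YY ^ 3 = 0 := by linear_combination C3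
        exact pow_eq_zero_iff (by norm_num) |>.mp h3
      have y7 : YY ^ 7 = DD ^ 7 := by
        linear_combination (YY ^ 4 + DD ^ 2 * YY ^ 2 + DD ^ 3 * YY + DD ^ 4) * C3
          + (-(DD ^ 7) - YY * DD ^ 6 - YY ^ 2 * DD ^ 5 - YY ^ 3 * DD ^ 4 - YY ^ 4 * DD ^ 3
              - YY ^ 5 * DD ^ 2) * htwo
      have hmm : m % 3 = 0 ∨ m % 3 = 1 := by omega
      rcases hmm with h3 | h3
      · have h7 : 2 ^ m % 7 = 1 := by
          obtain ⟨k, hk⟩ : ∃ k, m = 3 * k := ⟨m / 3, by omega⟩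
          rw [hk, pow_mul, Nat.pow_mod]
          norm_num
        obtain ⟨t, ht⟩ : ∃ t, 2 ^ m = 7 * t + 1 := ⟨2 ^ m / 7, by omega⟩
        have hd7 : DD ^ (7 * t) = 1 := by
          have h5 := A5
          rw [ht] at h5
          have h6 : DD ^ (7 * t) * DD = 1 * DD := by
            rw [one_mul, ← pow_succ]; exact h5
          exact mul_right_cancel₀ hD h6
        have hZY : ZZ = YY := by
          calc ZZ = YY ^ 2 ^ m := A4.symm
            _ = YY ^ (7 * t + 1) := by rw [ht]
            _ = (YY ^ 7) ^ t * YY := by rw [pow_succ, pow_mul]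
            _ = (DD ^ 7) ^ t * YY := by rw [y7]
            _ = DD ^ (7 * t) * YY := by rw [← pow_mul]
            _ = YY := by rw [hd7, one_mul]
        have h2 : YY ^ 2 = 0 := by
          linear_combination B1 - DD * hZY - DD * YY * htwo
        exact pow_eq_zero_iff (by norm_num) |>.mp h2
      · have h7 : 2 ^ m % 7 = 2 := by
          obtain ⟨k, hk⟩ : ∃ k, m = 3 * k + 1 := ⟨m / 3, by omega⟩
          rw [hk, pow_succ, pow_mul, Nat.mul_mod, Nat.pow_mod]
          norm_num
        obtain ⟨t, ht⟩ : ∃ t, 2 ^ m = 7 * t + 2 := ⟨2 ^ m / 7, by omega⟩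
        have hd7 : DD ^ (7 * t) * DD = 1 := by
          have h5 := A5
          rw [ht] at h5
          have h6 : (DD ^ (7 * t) * DD) * DD = 1 * DD := by
            calc (DD ^ (7 * t) * DD) * DD = DD ^ (7 * t) * DD ^ 2 := by ring
              _ = DD ^ (7 * t + 2) := by rw [pow_add]
              _ = DD := h5
              _ = 1 * DD := (one_mul DD).symm
          exact mul_right_cancel₀ hD h6
        have hZY : ZZ = DD ^ (7 * t) * YY ^ 2 := by
          calc ZZ = YY ^ 2 ^ m := A4.symm
            _ = YY ^ (7 * t + 2) := by rw [ht]
            _ = (YY ^ 7) ^ t * YY ^ 2 := by rw [pow_add, pow_mul]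
            _ = (DD ^ 7) ^ t * YY ^ 2 := by rw [y7]
            _ = DD ^ (7 * t) * YY ^ 2 := by rw [← pow_mul]
        have hdy : DD * YY = 0 := by
          linear_combination B1 - DD * hZY - YY ^ 2 * hd7 - YY ^ 2 * htwo
        rcases mul_eq_zero.mp hdy with h | h
        · exact absurd h hD
        · exact h
    rw [hYY] at hY0
    have hw : X1 + Y1 = x + y := by linear_combination hY0 - (x + y) * htwo
    have hww := congrArg ψ hw
    simp only [map_add, pX, pX1, pY, pY1] at hww
    have hfin : (((1 : F) + c) * (x + y)) ^ 2 = 0 := by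
      linear_combination H0 +
        (E1 + E1*c^2 + (2:F)*δ + (2:F)*δ*c^2 + A2 + (3:F)*A1 + (2:F)*a + (2:F)*Y1 +
          (2:F)*Y1*c^2 + (4:F)*y + (4:F)*y*c^2 + X2 + X2*c^2 + (3:F)*X1 + (3:F)*X1*c^2 +
          (2:F)*x + (2:F)*x*c^2) * hw +
        (δ + δ*c^2 + A1 + a + Y1 + Y1*c^2 + y + y*c^2) * hww +
        (y*E1 + y*E1*c^2 + y*δ + y*δ*c^2 + y*A2 + (2:F)*y*A1 + (2:F)*y*a + (3:F)*y^2 + y^2*c +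
          (3:F)*y^2*c^2 + (-1:F)*X2*δ + (-1:F)*X2*δ*c^2 + (-1:F)*X2*A1 + (-1:F)*X2*a +
          (-1:F)*X2*Y1 + (-1:F)*X2*Y1*c^2 + (-1:F)*X1*E1 + (-1:F)*X1*E1*c^2 + (-1:F)*X1*δ +
          (-1:F)*X1*δ*c^2 + (-1:F)*X1*A2 + (-2:F)*X1*A1 + (-1:F)*X1*a + (-2:F)*X1*Y1 +
          (-2:F)*X1*Y1*c^2 + (-1:F)*X1*X2 + (-1:F)*X1*X2*c^2 + (-2:F)*X1^2 + (-2:F)*X1^2*c^2 +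
          x*δ + x*δ*c^2 + x*A1 + (4:F)*x*y + (2:F)*x*y*c + (4:F)*x*y*c^2 + x^2 + x^2*c +
          x^2*c^2) * htwo
    have hfin2 : ((1 : F) + c) * (x + y) = 0 := pow_eq_zero_iff (by norm_num) |>.mp hfin
    rcases mul_eq_zero.mp hfin2 with h | h
    · exact absurd h h1c
    · linear_combination h - y * htwo
  have hbij : Function.Bijective fun t : F => G (t + a) + c * G t :=
    Finite.injective_iff_bijective.mp hinj
  obtain ⟨x0, hx0⟩ := hbij.surjective b
  exact ⟨x0, hx0, fun z hz => hinj (hz.trans hx0.symm)⟩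
end

section
/- Let m be a positive integer with 2m ≢ 1 (mod 3), n = 3m, q = 2^n, and let δ ∈ F_q satisfy Tr_m^{3m}(δ) ≠ 0. Define F : F_q → F_q by F(x) = (x^{2^m} + x + δ)^{2^{3m−1} + 2^{m−1}} + x. Then for every c ∈ F_q not in the subfield F_{2^m} (i.e., c^{2^m} ≠ c), the c-differential uniformity of F is at most 4: for all a, b ∈ F_q, the equation F(x+a) + c·F(x) = b has at most four solutions x ∈ F_q. -/
open Polynomial in
lemma rootBound {F : Type*} [Field F] (p : Polynomial F) (hp : p ≠ 0) :
    {z : F | Polynomial.eval z p = 0}.Finite ∧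
      {z : F | Polynomial.eval z p = 0}.ncard ≤ p.natDegree := by
  classical
  have hset : {z : F | Polynomial.eval z p = 0} = ↑p.roots.toFinset := by
    ext z
    simp [Polynomial.mem_roots', hp, Polynomial.IsRoot]
  rw [hset]
  refine ⟨(p.roots.toFinset).finite_toSet, ?_⟩
  rw [Set.ncard_coe_finset]
  exact (Multiset.toFinset_card_le _).trans (Polynomial.card_roots' p)

open Polynomial in
lemma quarticBound {F : Type*} [Field F] (e4 e2 e1 e0 : F) (h : e4 ≠ 0) :
    {z : F | e4*z^4 + e2*z^2 + e1*z + e0 = 0}.Finite ∧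
      {z : F | e4*z^4 + e2*z^2 + e1*z + e0 = 0}.ncard ≤ 4 := by
  classical
  set p : Polynomial F := C e4 * X^4 + C e2 * X^2 + C e1 * X + C e0 with hp
  have hev : ∀ z : F, Polynomial.eval z p = e4*z^4 + e2*z^2 + e1*z + e0 := by
    intro z; simp [hp]
  have hpne : p ≠ 0 := by
    intro h0
    apply h
    have hc4 : p.coeff 4 = e4 := by
      simp [hp, Polynomial.coeff_X_pow, Polynomial.coeff_C, Polynomial.coeff_X]
    rw [h0] at hc4
    simpa using hc4.symm
  have hdeg : p.natDegree ≤ 4 := by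
    rw [hp]; compute_degree
  have hsame : {z : F | e4*z^4 + e2*z^2 + e1*z + e0 = 0} = {z : F | Polynomial.eval z p = 0} := by
    ext z; rw [Set.mem_setOf_eq, Set.mem_setOf_eq, hev]
  rw [hsame]
  obtain ⟨hf, hc⟩ := rootBound p hpne
  exact ⟨hf, hc.trans hdeg⟩

open Polynomial in
lemma quadBound {F : Type*} [Field F] (f2 f1 f0 : F) (h : f2 ≠ 0) :
    {z : F | f2*z^2 + f1*z + f0 = 0}.Finite ∧
      {z : F | f2*z^2 + f1*z + f0 = 0}.ncard ≤ 2 := by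
  classical
  set p : Polynomial F := C f2 * X^2 + C f1 * X + C f0 with hp
  have hev : ∀ z : F, Polynomial.eval z p = f2*z^2 + f1*z + f0 := by
    intro z; simp [hp]
  have hpne : p ≠ 0 := by
    intro h0
    apply h
    have hc2 : p.coeff 2 = f2 := by
      simp [hp, Polynomial.coeff_X_pow, Polynomial.coeff_C, Polynomial.coeff_X]
    rw [h0] at hc2
    simpa using hc2.symm
  have hdeg : p.natDegree ≤ 2 := by
    rw [hp]; compute_degree
  have hsame : {z : F | f2*z^2 + f1*z + f0 = 0} = {z : F | Polynomial.eval z p = 0} := by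
    ext z; rw [Set.mem_setOf_eq, Set.mem_setOf_eq, hev]
  rw [hsame]
  obtain ⟨hf, hc⟩ := rootBound p hpne
  exact ⟨hf, hc.trans hdeg⟩

lemma coreQuartic {F : Type*} [Field F] (htwo : (2:F) = 0)
    (D0 D1 D2 T al be alp K Kp E Z W : F)
    (hQ1 : D0*D1*(Z + W)^2 + al*W + be*Z + K = 0)
    (hPP : E*W + D1*D2*(Z + T)^2 + alp*(Z + T) + Kp = 0) :
    D0*D1^3*D2^2*Z^4 + (D0*D1*(E + alp)^2 + E*al*(D1*D2))*Z^2 + (E*al*alp + E^2*be)*Z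
      + (D0*D1*(D1*D2*T^2 + alp*T + Kp)^2 + E*al*(D1*D2*T^2 + alp*T + Kp) + E^2*K) = 0 := by
  linear_combination (E^2)*hQ1 + (D0*D1*(E*W + D1*D2*(Z + T)^2 + alp*(Z + T) + Kp) + E*al)*hPP
    + ((-1 : F)*al*E^2*W + (-1 : F)*D1*D2*T*al*E*Z + (-1 : F)*D0*D1*E^2*W^2 + (-1 : F)*D0*D1*E^2*Z*W + (-1 : F)*D0*D1*Kp*E*W + (-1 : F)*D0*D1*alp*E*Z*W + D0*D1*alp*E*Z^2 + (-1 : F)*D0*D1*alp*Kp*Z + (-1 : F)*D0*D1*T*alp*E*W + (-1 : F)*D0*D1*T*alp^2*Z + (-1 : F)*D0*D1^2*D2*E*Z^2*W + (-1 : F)*D0*D1^2*D2*Kp*Z^2 + (-1 : F)*D0*D1^2*D2*alp*Z^3 + (-2 : F)*D0*D1^2*D2*T*E*Z*W + (-2 : F)*D0*D1^2*D2*T*Kp*Z + (-3 : F)*D0*D1^2*D2*T*alp*Z^2 + (-1 : F)*D0*D1^2*D2*T^2*E*W + (-3 : F)*D0*D1^2*D2*T^2*alp*Z + (-2 : F)*D0*D1^3*D2^2*T*Z^3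 + (-3 : F)*D0*D1^3*D2^2*T^2*Z^2 + (-2 : F)*D0*D1^3*D2^2*T^3*Z)*htwo

set_option maxHeartbeats 2000000 in
theorem stmt_13 (m : ℕ) (hm : 0 < m) (hm3 : (2 * m) % 3 ≠ 1) (F : Type*) [Field F] [Fintype F]
    (hF : Fintype.card F = 2 ^ (3 * m)) (δ c : F)
    (hδ : δ + δ ^ (2 ^ m) + δ ^ (2 ^ (2 * m)) ≠ 0)
    (hc : c ^ (2 ^ m) ≠ c)
    (G : F → F)
    (hG : ∀ x, G x = (x ^ (2 ^ m) + x + δ) ^ (2 ^ (3 * m - 1) + 2 ^ (m - 1)) + x) :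
    ∀ a b : F, {x : F | G (x + a) + c * G x = b}.ncard ≤ 4 := by
  classical
  intro a b
  have htwo : (2 : F) = 0 := by
    have hcast : ((Fintype.card F : ℕ) : F) = 0 := FiniteField.cast_card_eq_zero F
    rw [hF] at hcast
    push_cast at hcast
    exact (pow_eq_zero_iff (by omega : 3 * m ≠ 0)).mp hcast
  haveI : Fact (Nat.Prime 2) := ⟨Nat.prime_two⟩
  haveI hch : CharP F 2 := (CharP.charP_iff_prime_eq_zero Nat.prime_two).mpr htwo
  obtain ⟨ψ, hψdef⟩ : ∃ ψ : F →+* F, ∀ t : F, ψ t = t ^ 2 ^ m :=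
    ⟨iterateFrobenius F 2 m, fun t => iterateFrobenius_def 2 m t⟩
  have hψ3 : ∀ t : F, ψ (ψ (ψ t)) = t := by
    intro t
    rw [hψdef, hψdef, hψdef, ← pow_mul, ← pow_mul]
    have hexp : 2 ^ m * (2 ^ m * 2 ^ m) = 2 ^ (3 * m) := by
      rw [← pow_add, ← pow_add]; congr 1; omega
    rw [hexp, ← hF]
    exact FiniteField.pow_card t
  have hxm : ∀ t : F, t ^ 2 ^ m = ψ t := fun t => (hψdef t).symm
  have hψc : ψ c ≠ c := by rw [hψdef]; exact hc
  have hcne1 : c ≠ 1 := by intro h; apply hψc; rw [h, map_one]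
  have hsqrt1 : ∀ t : F, (1 : F) + t^2 = 0 → t = 1 := by
    intro t h
    have h2 : (1 + t)^2 = 0 := by linear_combination h + t*htwo
    have h3 : 1 + t = 0 := (pow_eq_zero_iff (by norm_num)).mp h2
    linear_combination h3 - htwo
  have hψcne1 : ψ c ≠ 1 := by
    intro h
    apply hψc
    have hcc : c = 1 := by rw [← hψ3 c, h, map_one, map_one]
    rw [hcc, map_one]
  have hψψcne1 : ψ (ψ c) ≠ 1 := by
    intro h
    apply hψc
    have hcc : c = 1 := by rw [← hψ3 c, h, map_one]
    rw [hcc, map_one]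
  have hD0 : (1 : F) + c^2 ≠ 0 := fun h => hcne1 (hsqrt1 c h)
  have hD1 : (1 : F) + (ψ c)^2 ≠ 0 := fun h => hψcne1 (hsqrt1 (ψ c) h)
  have hD2 : (1 : F) + (ψ (ψ c))^2 ≠ 0 := fun h => hψψcne1 (hsqrt1 (ψ (ψ c)) h)
  have hsq : ∀ t : F, (t ^ (2 ^ (3 * m - 1) + 2 ^ (m - 1)))^2 = t * ψ t := by
    intro t
    rw [← pow_mul]
    have he2 : (2 ^ (3 * m - 1) + 2 ^ (m - 1)) * 2 = 2 ^ (3 * m) + 2 ^ m := by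
      rw [add_mul, ← pow_succ, ← pow_succ]
      have l1 : 3 * m - 1 + 1 = 3 * m := by omega
      have l2 : m - 1 + 1 = m := by omega
      rw [l1, l2]
    rw [he2, pow_add, ← hF, FiniteField.pow_card, hψdef]
  have heqs : ∀ x : F, G (x + a) + c * G x = b →
      (((((ψ x) + x + δ) + ((ψ a) + a)) * (((ψ (ψ x)) + (ψ x) + (ψ δ)) + ((ψ (ψ a)) + (ψ a))) + c^2*(((ψ x) + x + δ)*((ψ (ψ x)) + (ψ x) + (ψ δ))) + (x + a)^2 + c^2*x^2 + b^2) = 0 ∧ ((((ψ (ψ x)) + (ψ x) + (ψ δ)) + ((ψ (ψ a)) + (ψ a))) * ((x + (ψ (ψ x)) + (ψ (ψ δ))) + (a + (ψ (ψ a)))) + (ψ c)^2*(((ψ (ψ x)) + (ψ x) + (ψ δ))*(x + (ψ (ψ x)) + (ψ (ψ δ)))) + ((ψ x) + (ψ a))^2 + (ψ c)^2*(ψ x)^2 + (ψ b)^2) = 0 ∧ (((x + (ψ (ψ x)) + (ψ (ψ δ))) + (a + (ψ (ψ a)))) * (((ψ x) + x + δ) + ((ψ a) + a)) + (ψ (ψ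 c))^2*((x + (ψ (ψ x)) + (ψ (ψ δ)))*((ψ x) + x + δ)) + ((ψ (ψ x)) + (ψ (ψ a)))^2 + (ψ (ψ c))^2*(ψ (ψ x))^2 + (ψ (ψ b))^2) = 0) := by
    intro x hx
    rw [hG, hG] at hx
    simp only [hxm] at hx
    simp only [map_add] at hx
    obtain ⟨Pv, hP⟩ : ∃ Pv : F, (ψ x + ψ a + (x + a) + δ) ^ (2 ^ (3 * m - 1) + 2 ^ (m - 1)) = Pv := ⟨_, rfl⟩
    obtain ⟨Qv, hQ⟩ : ∃ Qv : F, (ψ x + x + δ) ^ (2 ^ (3 * m - 1) + 2 ^ (m - 1)) = Qv := ⟨_, rfl⟩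
    rw [hP, hQ] at hx
    have hP2 : Pv^2 = (ψ x + ψ a + (x + a) + δ) * ψ (ψ x + ψ a + (x + a) + δ) := by
      rw [← hP]; exact hsq _
    have hQ2 : Qv^2 = (ψ x + x + δ) * ψ (ψ x + x + δ) := by
      rw [← hQ]; exact hsq _
    simp only [map_add] at hP2 hQ2
    have hsq0 : (Pv + c*Qv + ((x + a) + c*x + b))^2 = 0 := by
      have hz : Pv + c*Qv + ((x + a) + c*x + b) = 0 := by linear_combination hx + b*htwo
      rw [hz]
      exact zero_pow (by norm_num)
    have h0 : ((((ψ x) + x + δ) + ((ψ a) + a)) * (((ψ (ψ x)) + (ψ x) + (ψ δ)) + ((ψ (ψ a)) + (ψ a))) + c^2*(((ψ x) + x + δ)*((ψ (ψ x)) + (ψ x) + (ψ δ))) + (x + a)^2 + c^2*x^2 + b^2) = 0 := by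
      linear_combination hsq0 - hP2 - c^2*hQ2 + ((-1 : F)*a*b + (-1 : F)*x*b + (-1 : F)*x*b*c + (-1 : F)*x*a*c + (-1 : F)*x^2*c)*htwo
        - (Pv*(c*Qv) + Pv*((x + a) + c*x + b) + c*Qv*((x + a) + c*x + b))*htwo
    have h1 : ((((ψ (ψ x)) + (ψ x) + (ψ δ)) + ((ψ (ψ a)) + (ψ a))) * ((x + (ψ (ψ x)) + (ψ (ψ δ))) + (a + (ψ (ψ a)))) + (ψ c)^2*(((ψ (ψ x)) + (ψ x) + (ψ δ))*(x + (ψ (ψ x)) + (ψ (ψ δ)))) + ((ψ x) + (ψ a))^2 + (ψ c)^2*(ψ x)^2 + (ψ b)^2) = 0 := by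
      have hm1 := congrArg ψ h0
      simp only [map_add, map_mul, map_pow, map_zero, hψ3] at hm1
      linear_combination hm1
    have h2 : (((x + (ψ (ψ x)) + (ψ (ψ δ))) + (a + (ψ (ψ a)))) * (((ψ x) + x + δ) + ((ψ a) + a)) + (ψ (ψ c))^2*((x + (ψ (ψ x)) + (ψ (ψ δ)))*((ψ x) + x + δ)) + ((ψ (ψ x)) + (ψ (ψ a)))^2 + (ψ (ψ c))^2*(ψ (ψ x))^2 + (ψ (ψ b))^2) = 0 := by
      have hm2 := congrArg ψ h1
      simp only [map_add, map_mul, map_pow, map_zero, hψ3] at hm2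
      linear_combination hm2
    exact ⟨h0, h1, h2⟩
  have hinj : Set.InjOn (fun x => ψ x + x + δ) {x : F | G (x + a) + c * G x = b} := by
    intro x hx y hy hxy
    simp only [Set.mem_setOf_eq] at hx hy
    have hZ : ψ x + x + δ = ψ y + y + δ := hxy
    obtain ⟨h0x, -, -⟩ := heqs x hx
    obtain ⟨h0y, -, -⟩ := heqs y hy
    have hW : ψ (ψ x) + ψ x + ψ δ = ψ (ψ y) + ψ y + ψ δ := by
      have hmm := congrArg ψ hZ
      simp only [map_add] at hmm
      linear_combination hmm
    have hx2 : ((1 : F) + c^2)*x^2 = ((1 : F) + c^2)*y^2 := by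
      linear_combination h0x - h0y + (((ψ (ψ x)) + (ψ x) + (ψ δ)) + ((ψ (ψ a)) + (ψ a)) + c^2*((ψ (ψ x)) + (ψ x) + (ψ δ)))*hZ + (((ψ y) + y + δ) + ((ψ a) + a) + c^2*((ψ y) + y + δ))*hW + ((ψ y)*(ψ (ψ y)) + (ψ y)^2 + y*(ψ (ψ y)) + y*(ψ y) + (ψ δ)*(ψ y) + (ψ δ)*y + δ*(ψ (ψ y)) + δ*(ψ y) + c^2*(ψ y)*(ψ (ψ y)) + c^2*(ψ y)^2 + c^2*y*(ψ (ψ y)) + c^2*y*(ψ y) + c^2*(ψ δ)*(ψ y) + c^2*(ψ δ)*y + c^2*δ*(ψ (ψ y)) + c^2*δ*(ψ y) + (ψ (ψ a))*(ψ y) + (ψ (ψ a))*y + (ψ a)*(ψ (ψ y)) + (2 : F)*(ψ a)*(ψ y) + (ψ a)*y + a*(ψ (ψ y)) + a*(ψ y) + a*y + (-1 : F)*(ψ (ψ x))*δ + (-1 : F)*(ψ (ψ x))*c^2*δ + (-1 : F)*(ψ (ψ x))*(ψ a) + (-1 : F)*(ψ (ψ x))*a + (-1 : F)*(ψ x)*(ψ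 δ) + (-1 : F)*(ψ x)*δ + (-1 : F)*(ψ x)*c^2*(ψ δ) + (-1 : F)*(ψ x)*c^2*δ + (-1 : F)*(ψ x)*(ψ (ψ a)) + (-2 : F)*(ψ x)*(ψ a) + (-1 : F)*(ψ x)*a + (-1 : F)*(ψ x)*(ψ (ψ x)) + (-1 : F)*(ψ x)*(ψ (ψ x))*c^2 + (-1 : F)*(ψ x)^2 + (-1 : F)*(ψ x)^2*c^2 + (-1 : F)*x*(ψ δ) + (-1 : F)*x*c^2*(ψ δ) + (-1 : F)*x*(ψ (ψ a)) + (-1 : F)*x*(ψ a) + (-1 : F)*x*a + (-1 : F)*x*(ψ (ψ x)) + (-1 : F)*x*(ψ (ψ x))*c^2 + (-1 : F)*x*(ψ x) + (-1 : F)*x*(ψ x)*c^2)*htwo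
    have hx2' : x^2 = y^2 := mul_left_cancel₀ hD0 hx2
    have h5 : (x - y)^2 = 0 := by linear_combination hx2' + (y^2 - x*y)*htwo
    exact sub_eq_zero.mp ((pow_eq_zero_iff (by norm_num)).mp h5)
  by_cases hEcase : ((((1 + (ψ c)^2) + (1 + (ψ (ψ c))^2))*((ψ a) + a) + (1 + (ψ c)^2)*(1 + (ψ (ψ c))^2)*(δ + (ψ δ) + (ψ (ψ δ))))) = 0
  · obtain ⟨hfin, hcard⟩ := quadBound (F := F) ((1 + (ψ c)^2)*(1 + (ψ (ψ c))^2)) (((1 + (ψ c)^2) + (1 + (ψ (ψ c))^2))*((ψ (ψ a)) + (ψ a)) + (1 + (ψ c)^2)*(1 + (ψ (ψ c))^2)*(δ + (ψ δ) + (ψ (ψ δ)))) ((1 + (ψ c)^2)*(1 + (ψ (ψ c))^2)*(δ + (ψ δ) + (ψ (ψ δ)))^2 + (((1 + (ψ c)^2) + (1 + (ψ (ψ c))^2))*((ψ (ψ a)) + (ψ a)) + (1 + (ψ c)^2)*(1 + (ψ (ψ c))^2)*(δ + (ψ δ) + (ψ (ψ δ))))*(δ + (ψ δ) + (ψ (ψ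 δ))) + ((1 + (ψ c)^2)*(1 + (ψ (ψ c))^2)*(ψ δ)^2 + (1 + (ψ c)^2)*(ψ (ψ b))^2 + (1 + (ψ (ψ c))^2)*(ψ b)^2 + (1 + (ψ c)^2)*(a + (ψ (ψ a)))*(δ + (ψ δ) + (ψ (ψ δ))) + (1 + (ψ c)^2)*a^2 + (1 + (ψ (ψ c))^2)*(ψ a)^2 + ((ψ c)^2 + (ψ (ψ c))^2)*((ψ (ψ a))^2 + (ψ (ψ a))*a + (ψ a)*a + (ψ a)*(ψ (ψ a))))) (mul_ne_zero hD1 hD2)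
    refine le_trans (Set.ncard_le_ncard_of_injOn (fun x => ψ x + x + δ) ?_ hinj hfin)
      (hcard.trans (by norm_num))
    intro x hx
    simp only [Set.mem_setOf_eq] at hx ⊢
    obtain ⟨h0x, h1x, h2x⟩ := heqs x hx
    have hPP : (((1 + (ψ c)^2) + (1 + (ψ (ψ c))^2))*((ψ a) + a) + (1 + (ψ c)^2)*(1 + (ψ (ψ c))^2)*(δ + (ψ δ) + (ψ (ψ δ))))*((ψ (ψ x)) + (ψ x) + (ψ δ)) + (1 + (ψ c)^2)*(1 + (ψ (ψ c))^2)*(((ψ x) + x + δ) + (δ + (ψ δ) + (ψ (ψ δ))))^2 + (((1 + (ψ c)^2) + (1 + (ψ (ψ c))^2))*((ψ (ψ a)) + (ψ a)) + (1 + (ψ c)^2)*(1 + (ψ (ψ c))^2)*(δ + (ψ δ) + (ψ (ψ δ))))*(((ψ x) + x + δ) + (δ + (ψ δ) + (ψ (ψ δ)))) + ((1 + (ψ c)^2)*(1 + (ψ (ψ c))^2)*(ψ δ)^2 + (1 + (ψ c)^2)*(ψ (ψ b))^2 + (1 + (ψ (ψ c))^2)*(ψ b)^2 + (1 + (ψ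 c)^2)*(a + (ψ (ψ a)))*(δ + (ψ δ) + (ψ (ψ δ))) + (1 + (ψ c)^2)*a^2 + (1 + (ψ (ψ c))^2)*(ψ a)^2 + ((ψ c)^2 + (ψ (ψ c))^2)*((ψ (ψ a))^2 + (ψ (ψ a))*a + (ψ a)*a + (ψ a)*(ψ (ψ a)))) = 0 := by
      linear_combination (1 + (ψ (ψ c))^2)*h1x + (1 + (ψ c)^2)*h2x + ((ψ (ψ δ))^2 + (2 : F)*(ψ δ)*(ψ (ψ δ)) + (2 : F)*(ψ δ)^2 + (3 : F)*δ*(ψ (ψ δ)) + (4 : F)*δ*(ψ δ) + (3 : F)*δ^2 + (ψ (ψ c))^2*(ψ (ψ δ))^2 + (2 : F)*(ψ (ψ c))^2*(ψ δ)*(ψ (ψ δ)) + (2 : F)*(ψ (ψ c))^2*(ψ δ)^2 + (3 : F)*(ψ (ψ c))^2*δ*(ψ (ψ δ)) + (4 : F)*(ψ (ψ c))^2*δ*(ψ δ) + (3 : F)*(ψ (ψ c))^2*δ^2 + (ψ c)^2*(ψ (ψ δ))^2 + (2 : F)*(ψ c)^2*(ψ δ)*(ψ (ψ δ)) + (2 :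 F)*(ψ c)^2*(ψ δ)^2 + (3 : F)*(ψ c)^2*δ*(ψ (ψ δ)) + (4 : F)*(ψ c)^2*δ*(ψ δ) + (3 : F)*(ψ c)^2*δ^2 + (ψ c)^2*(ψ (ψ c))^2*(ψ (ψ δ))^2 + (2 : F)*(ψ c)^2*(ψ (ψ c))^2*(ψ δ)*(ψ (ψ δ)) + (2 : F)*(ψ c)^2*(ψ (ψ c))^2*(ψ δ)^2 + (3 : F)*(ψ c)^2*(ψ (ψ c))^2*δ*(ψ (ψ δ)) + (4 : F)*(ψ c)^2*(ψ (ψ c))^2*δ*(ψ δ) + (3 : F)*(ψ c)^2*(ψ (ψ c))^2*δ^2 + (ψ (ψ a))*(ψ (ψ δ)) + (ψ (ψ a))*(ψ δ) + (2 : F)*(ψ (ψ a))*δ + (ψ (ψ a))*(ψ (ψ c))^2*δ + (ψ (ψ a))*(ψ c)^2*(ψ (ψ δ)) + (ψ (ψ a))*(ψ c)^2*(ψ δ) + (ψ (ψ a))*(ψ c)^2*δ + (-1 : F)*(ψ (ψ a))^2 + (2 : F)*(ψ a)*(ψ δ) + (2 : F)*(ψ a)*δ + (ψ a)*(ψ (ψ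 c))^2*(ψ δ) + (ψ a)*(ψ (ψ c))^2*δ + (ψ a)*(ψ c)^2*(ψ δ) + (ψ a)*(ψ c)^2*δ + (-1 : F)*(ψ a)*(ψ (ψ a)) + a*(ψ δ) + a*(ψ c)^2*(ψ δ) + (-1 : F)*a*(ψ (ψ a)) + (-1 : F)*a*(ψ a) + (-2 : F)*(ψ (ψ x))*(ψ (ψ a)) + (-1 : F)*(ψ (ψ x))*(ψ (ψ a))*(ψ (ψ c))^2 + (-1 : F)*(ψ (ψ x))*(ψ (ψ a))*(ψ c)^2 + (-1 : F)*(ψ (ψ x))^2 + (-1 : F)*(ψ (ψ x))^2*(ψ (ψ c))^2 + (-1 : F)*(ψ (ψ x))^2*(ψ c)^2 + (-1 : F)*(ψ (ψ x))^2*(ψ c)^2*(ψ (ψ c))^2 + (ψ x)*(ψ (ψ δ)) + (2 : F)*(ψ x)*(ψ δ) + (3 : F)*(ψ x)*δ + (ψ x)*(ψ (ψ c))^2*(ψ (ψ δ)) + (2 : F)*(ψ x)*(ψ (ψ c))^2*(ψ δ) + (3 : F)*(ψ x)*(ψ (ψ c))^2*δ + (ψ x)*(ψ c)^2*(ψ (ψ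 δ)) + (2 : F)*(ψ x)*(ψ c)^2*(ψ δ) + (3 : F)*(ψ x)*(ψ c)^2*δ + (ψ x)*(ψ c)^2*(ψ (ψ c))^2*(ψ (ψ δ)) + (2 : F)*(ψ x)*(ψ c)^2*(ψ (ψ c))^2*(ψ δ) + (3 : F)*(ψ x)*(ψ c)^2*(ψ (ψ c))^2*δ + (ψ x)*(ψ a) + (ψ x)*(ψ a)*(ψ c)^2 + (-1 : F)*(ψ x)*(ψ (ψ x)) + (-1 : F)*(ψ x)*(ψ (ψ x))*(ψ (ψ c))^2 + (-1 : F)*(ψ x)*(ψ (ψ x))*(ψ c)^2 + (-1 : F)*(ψ x)*(ψ (ψ x))*(ψ c)^2*(ψ (ψ c))^2 + x*(ψ (ψ δ)) + x*(ψ δ) + (2 : F)*x*δ + x*(ψ (ψ c))^2*(ψ (ψ δ)) + x*(ψ (ψ c))^2*(ψ δ) + (2 : F)*x*(ψ (ψ c))^2*δ + x*(ψ c)^2*(ψ (ψ δ)) + x*(ψ c)^2*(ψ δ) + (2 : F)*x*(ψ c)^2*δ + x*(ψ c)^2*(ψ (ψ c))^2*(ψ (ψ δ)) + x*(ψ c)^2*(ψ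 (ψ c))^2*(ψ δ) + (2 : F)*x*(ψ c)^2*(ψ (ψ c))^2*δ + (-1 : F)*x*a + (-1 : F)*x*a*(ψ c)^2 + (-1 : F)*x*(ψ (ψ x)) + (-1 : F)*x*(ψ (ψ x))*(ψ (ψ c))^2 + (-1 : F)*x*(ψ (ψ x))*(ψ c)^2 + (-1 : F)*x*(ψ (ψ x))*(ψ c)^2*(ψ (ψ c))^2)*htwo
    linear_combination hPP - ((ψ (ψ x)) + (ψ x) + (ψ δ))*hEcase + ((-1 : F)*δ*(ψ (ψ δ)) + (-1 : F)*δ*(ψ δ) + (-1 : F)*δ^2 + (-1 : F)*(ψ (ψ c))^2*δ*(ψ (ψ δ)) + (-1 : F)*(ψ (ψ c))^2*δ*(ψ δ) + (-1 : F)*(ψ (ψ c))^2*δ^2 + (-1 : F)*(ψ c)^2*δ*(ψ (ψ δ)) + (-1 : F)*(ψ c)^2*δ*(ψ δ) + (-1 : F)*(ψ c)^2*δ^2 + (-1 : F)*(ψ c)^2*(ψ (ψ c))^2*δ*(ψ (ψ δ)) + (-1 : F)*(ψ c)^2*(ψ (ψ c))^2*δ*(ψ δ) + (-1 : F)*(ψ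 c)^2*(ψ (ψ c))^2*δ^2 + (-1 : F)*(ψ x)*(ψ (ψ δ)) + (-1 : F)*(ψ x)*(ψ δ) + (-1 : F)*(ψ x)*δ + (-1 : F)*(ψ x)*(ψ (ψ c))^2*(ψ (ψ δ)) + (-1 : F)*(ψ x)*(ψ (ψ c))^2*(ψ δ) + (-1 : F)*(ψ x)*(ψ (ψ c))^2*δ + (-1 : F)*(ψ x)*(ψ c)^2*(ψ (ψ δ)) + (-1 : F)*(ψ x)*(ψ c)^2*(ψ δ) + (-1 : F)*(ψ x)*(ψ c)^2*δ + (-1 : F)*(ψ x)*(ψ c)^2*(ψ (ψ c))^2*(ψ (ψ δ)) + (-1 : F)*(ψ x)*(ψ c)^2*(ψ (ψ c))^2*(ψ δ) + (-1 : F)*(ψ x)*(ψ c)^2*(ψ (ψ c))^2*δ + (-1 : F)*x*(ψ (ψ δ)) + (-1 : F)*x*(ψ δ) + (-1 : F)*x*δ + (-1 : F)*x*(ψ (ψ c))^2*(ψ (ψ δ)) + (-1 : F)*x*(ψ (ψ c))^2*(ψ δ) + (-1 : F)*x*(ψ (ψ c))^2*δ + (-1 : F)*x*(ψ c)^2*(ψ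 (ψ δ)) + (-1 : F)*x*(ψ c)^2*(ψ δ) + (-1 : F)*x*(ψ c)^2*δ + (-1 : F)*x*(ψ c)^2*(ψ (ψ c))^2*(ψ (ψ δ)) + (-1 : F)*x*(ψ c)^2*(ψ (ψ c))^2*(ψ δ) + (-1 : F)*x*(ψ c)^2*(ψ (ψ c))^2*δ)*htwo
  · have he4 : (((1 + c^2)*(1 + (ψ c)^2)^3*(1 + (ψ (ψ c))^2)^2)) ≠ 0 :=
      mul_ne_zero (mul_ne_zero hD0 (pow_ne_zero 3 hD1)) (pow_ne_zero 2 hD2)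
    obtain ⟨hfin, hcard⟩ := quarticBound (F := F) ((1 + c^2)*(1 + (ψ c)^2)^3*(1 + (ψ (ψ c))^2)^2) ((1 + c^2)*(1 + (ψ c)^2)*((((1 + (ψ c)^2) + (1 + (ψ (ψ c))^2))*((ψ a) + a) + (1 + (ψ c)^2)*(1 + (ψ (ψ c))^2)*(δ + (ψ δ) + (ψ (ψ δ)))) + (((1 + (ψ c)^2) + (1 + (ψ (ψ c))^2))*((ψ (ψ a)) + (ψ a)) + (1 + (ψ c)^2)*(1 + (ψ (ψ c))^2)*(δ + (ψ δ) + (ψ (ψ δ)))))^2 + (((1 + (ψ c)^2) + (1 + (ψ (ψ c))^2))*((ψ a) + a) + (1 + (ψ c)^2)*(1 + (ψ (ψ c))^2)*(δ + (ψ δ) + (ψ (ψ δ))))*(((1 + c^2) + (1 + (ψ c)^2))*((ψ a) + a) + (1 + c^2)*(1 + (ψ c)^2)*(δ + (ψ δ) + (ψ (ψ δ))))*((1 + (ψ c)^2)*(1 + (ψ (ψ c))^2))) ((((1 + (ψ c)^2) + (1 + (ψ (ψ c))^2))*((ψ a) + a) + (1 + (ψ c)^2)*(1 + (ψ (ψ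 c))^2)*(δ + (ψ δ) + (ψ (ψ δ))))*(((1 + c^2) + (1 + (ψ c)^2))*((ψ a) + a) + (1 + c^2)*(1 + (ψ c)^2)*(δ + (ψ δ) + (ψ (ψ δ))))*(((1 + (ψ c)^2) + (1 + (ψ (ψ c))^2))*((ψ (ψ a)) + (ψ a)) + (1 + (ψ c)^2)*(1 + (ψ (ψ c))^2)*(δ + (ψ δ) + (ψ (ψ δ)))) + (((1 + (ψ c)^2) + (1 + (ψ (ψ c))^2))*((ψ a) + a) + (1 + (ψ c)^2)*(1 + (ψ (ψ c))^2)*(δ + (ψ δ) + (ψ (ψ δ))))^2*(((1 + c^2) + (1 + (ψ c)^2))*((ψ (ψ a)) + (ψ a)))) ((1 + c^2)*(1 + (ψ c)^2)*((1 + (ψ c)^2)*(1 + (ψ (ψ c))^2)*(δ + (ψ δ) + (ψ (ψ δ)))^2 + (((1 + (ψ c)^2) + (1 + (ψ (ψ c))^2))*((ψ (ψ a)) + (ψ a)) + (1 + (ψ c)^2)*(1 + (ψ (ψ c))^2)*(δ + (ψ δ) + (ψ (ψ δ))))*(δ + (ψ δ) + (ψ (ψ δ))) + ((1 + (ψ c)^2)*(1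 + (ψ (ψ c))^2)*(ψ δ)^2 + (1 + (ψ c)^2)*(ψ (ψ b))^2 + (1 + (ψ (ψ c))^2)*(ψ b)^2 + (1 + (ψ c)^2)*(a + (ψ (ψ a)))*(δ + (ψ δ) + (ψ (ψ δ))) + (1 + (ψ c)^2)*a^2 + (1 + (ψ (ψ c))^2)*(ψ a)^2 + ((ψ c)^2 + (ψ (ψ c))^2)*((ψ (ψ a))^2 + (ψ (ψ a))*a + (ψ a)*a + (ψ a)*(ψ (ψ a)))))^2 + (((1 + (ψ c)^2) + (1 + (ψ (ψ c))^2))*((ψ a) + a) + (1 + (ψ c)^2)*(1 + (ψ (ψ c))^2)*(δ + (ψ δ) + (ψ (ψ δ))))*(((1 + c^2) + (1 + (ψ c)^2))*((ψ a) + a) + (1 + c^2)*(1 + (ψ c)^2)*(δ + (ψ δ) + (ψ (ψ δ))))*((1 + (ψ c)^2)*(1 + (ψ (ψ c))^2)*(δ + (ψ δ) + (ψ (ψ δ)))^2 + (((1 + (ψ c)^2) + (1 + (ψ (ψ c))^2))*((ψ (ψ a)) + (ψ a)) + (1 + (ψ c)^2)*(1 + (ψ (ψ c))^2)*(δ + (ψ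 δ) + (ψ (ψ δ))))*(δ + (ψ δ) + (ψ (ψ δ))) + ((1 + (ψ c)^2)*(1 + (ψ (ψ c))^2)*(ψ δ)^2 + (1 + (ψ c)^2)*(ψ (ψ b))^2 + (1 + (ψ (ψ c))^2)*(ψ b)^2 + (1 + (ψ c)^2)*(a + (ψ (ψ a)))*(δ + (ψ δ) + (ψ (ψ δ))) + (1 + (ψ c)^2)*a^2 + (1 + (ψ (ψ c))^2)*(ψ a)^2 + ((ψ c)^2 + (ψ (ψ c))^2)*((ψ (ψ a))^2 + (ψ (ψ a))*a + (ψ a)*a + (ψ a)*(ψ (ψ a))))) + (((1 + (ψ c)^2) + (1 + (ψ (ψ c))^2))*((ψ a) + a) + (1 + (ψ c)^2)*(1 + (ψ (ψ c))^2)*(δ + (ψ δ) + (ψ (ψ δ))))^2*((1 + c^2)*(1 + (ψ c)^2)*δ^2 + (1 + c^2)*(ψ b)^2 + (1 + (ψ c)^2)*b^2 + (1 + c^2)*((ψ (ψ a)) + (ψ a))*(δ + (ψ δ) + (ψ (ψ δ))) + (1 + c^2)*(ψ (ψ a))^2 + (1 + (ψ c)^2)*a^2 + (c^2 + (ψ c)^2)*((ψ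 a)^2 + (ψ a)*(ψ (ψ a)) + a*(ψ (ψ a)) + a*(ψ a)))) he4
    refine le_trans (Set.ncard_le_ncard_of_injOn (fun x => ψ x + x + δ) ?_ hinj hfin) hcard
    intro x hx
    simp only [Set.mem_setOf_eq] at hx ⊢
    obtain ⟨h0x, h1x, h2x⟩ := heqs x hx
    have hQ1 : (1 + c^2)*(1 + (ψ c)^2)*(((ψ x) + x + δ) + ((ψ (ψ x)) + (ψ x) + (ψ δ)))^2 + (((1 + c^2) + (1 + (ψ c)^2))*((ψ a) + a) + (1 + c^2)*(1 + (ψ c)^2)*(δ + (ψ δ) + (ψ (ψ δ))))*((ψ (ψ x)) + (ψ x) + (ψ δ)) + (((1 + c^2) + (1 + (ψ c)^2))*((ψ (ψ a)) + (ψ a)))*((ψ x) + x + δ) + ((1 + c^2)*(1 + (ψ c)^2)*δ^2 + (1 + c^2)*(ψ b)^2 + (1 + (ψ c)^2)*b^2 + (1 + c^2)*((ψ (ψ a)) + (ψ a))*(δ + (ψ δ) + (ψ (ψ δ))) + (1 + c^2)*(ψ (ψ a))^2 + (1 + (ψ c)^2)*a^2 + (c^2 + (ψ c)^2)*((ψ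 a)^2 + (ψ a)*(ψ (ψ a)) + a*(ψ (ψ a)) + a*(ψ a))) = 0 := by
      linear_combination (1 + (ψ c)^2)*h0x + (1 + c^2)*h1x + ((ψ δ)^2 + δ*(ψ δ) + δ^2 + (ψ c)^2*(ψ δ)^2 + (ψ c)^2*δ*(ψ δ) + (ψ c)^2*δ^2 + c^2*(ψ δ)^2 + c^2*δ*(ψ δ) + c^2*δ^2 + c^2*(ψ c)^2*(ψ δ)^2 + c^2*(ψ c)^2*δ*(ψ δ) + c^2*(ψ c)^2*δ^2 + (ψ (ψ a))*δ + (ψ (ψ a))*c^2*δ + (ψ a)*(ψ δ) + (ψ a)*δ + (ψ a)*c^2*(ψ δ) + (ψ a)*c^2*δ + (-1 : F)*(ψ a)*(ψ (ψ a)) + (-1 : F)*(ψ a)^2 + (-1 : F)*a*(ψ (ψ a)) + (-1 : F)*a*(ψ a) + (ψ (ψ x))*(ψ δ) + (ψ (ψ x))*δ + (ψ (ψ x))*(ψ c)^2*(ψ δ) + (ψ (ψ x))*(ψ c)^2*δ + (ψ (ψ x))*c^2*(ψ δ) + (ψ (ψ x))*c^2*δ + (ψ (ψ x))*c^2*(ψ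 c)^2*(ψ δ) + (ψ (ψ x))*c^2*(ψ c)^2*δ + (-1 : F)*(ψ (ψ x))*(ψ (ψ a)) + (-1 : F)*(ψ (ψ x))*(ψ (ψ a))*c^2 + (2 : F)*(ψ x)*(ψ δ) + (2 : F)*(ψ x)*δ + (2 : F)*(ψ x)*(ψ c)^2*(ψ δ) + (2 : F)*(ψ x)*(ψ c)^2*δ + (2 : F)*(ψ x)*c^2*(ψ δ) + (2 : F)*(ψ x)*c^2*δ + (2 : F)*(ψ x)*c^2*(ψ c)^2*(ψ δ) + (2 : F)*(ψ x)*c^2*(ψ c)^2*δ + (ψ x)*(ψ (ψ x)) + (ψ x)*(ψ (ψ x))*(ψ c)^2 + (ψ x)*(ψ (ψ x))*c^2 + (ψ x)*(ψ (ψ x))*c^2*(ψ c)^2 + (ψ x)^2 + (ψ x)^2*(ψ c)^2 + (ψ x)^2*c^2 + (ψ x)^2*c^2*(ψ c)^2 + x*δ + x*(ψ c)^2*δ + x*c^2*δ + x*c^2*(ψ c)^2*δ + (-1 : F)*x*a + (-1 : F)*x*a*(ψ c)^2 + x*(ψ x) + x*(ψ x)*(ψ c)^2 + x*(ψ x)*c^2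 + x*(ψ x)*c^2*(ψ c)^2)*htwo
    have hPP : (((1 + (ψ c)^2) + (1 + (ψ (ψ c))^2))*((ψ a) + a) + (1 + (ψ c)^2)*(1 + (ψ (ψ c))^2)*(δ + (ψ δ) + (ψ (ψ δ))))*((ψ (ψ x)) + (ψ x) + (ψ δ)) + (1 + (ψ c)^2)*(1 + (ψ (ψ c))^2)*(((ψ x) + x + δ) + (δ + (ψ δ) + (ψ (ψ δ))))^2 + (((1 + (ψ c)^2) + (1 + (ψ (ψ c))^2))*((ψ (ψ a)) + (ψ a)) + (1 + (ψ c)^2)*(1 + (ψ (ψ c))^2)*(δ + (ψ δ) + (ψ (ψ δ))))*(((ψ x) + x + δ) + (δ + (ψ δ) + (ψ (ψ δ)))) + ((1 + (ψ c)^2)*(1 + (ψ (ψ c))^2)*(ψ δ)^2 + (1 + (ψ c)^2)*(ψ (ψ b))^2 + (1 + (ψ (ψ c))^2)*(ψ b)^2 + (1 + (ψ c)^2)*(a + (ψ (ψ a)))*(δ + (ψ δ) + (ψ (ψ δ))) + (1 + (ψ c)^2)*a^2 + (1 + (ψ (ψ c))^2)*(ψ a)^2 + ((ψ c)^2 + (ψ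 (ψ c))^2)*((ψ (ψ a))^2 + (ψ (ψ a))*a + (ψ a)*a + (ψ a)*(ψ (ψ a)))) = 0 := by
      linear_combination (1 + (ψ (ψ c))^2)*h1x + (1 + (ψ c)^2)*h2x + ((ψ (ψ δ))^2 + (2 : F)*(ψ δ)*(ψ (ψ δ)) + (2 : F)*(ψ δ)^2 + (3 : F)*δ*(ψ (ψ δ)) + (4 : F)*δ*(ψ δ) + (3 : F)*δ^2 + (ψ (ψ c))^2*(ψ (ψ δ))^2 + (2 : F)*(ψ (ψ c))^2*(ψ δ)*(ψ (ψ δ)) + (2 : F)*(ψ (ψ c))^2*(ψ δ)^2 + (3 : F)*(ψ (ψ c))^2*δ*(ψ (ψ δ)) + (4 : F)*(ψ (ψ c))^2*δ*(ψ δ) + (3 : F)*(ψ (ψ c))^2*δ^2 + (ψ c)^2*(ψ (ψ δ))^2 + (2 : F)*(ψ c)^2*(ψ δ)*(ψ (ψ δ)) + (2 : F)*(ψ c)^2*(ψ δ)^2 + (3 : F)*(ψ c)^2*δ*(ψ (ψ δ)) + (4 : F)*(ψ c)^2*δ*(ψ δ) + (3 : F)*(ψ c)^2*δ^2 + (ψ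 c)^2*(ψ (ψ c))^2*(ψ (ψ δ))^2 + (2 : F)*(ψ c)^2*(ψ (ψ c))^2*(ψ δ)*(ψ (ψ δ)) + (2 : F)*(ψ c)^2*(ψ (ψ c))^2*(ψ δ)^2 + (3 : F)*(ψ c)^2*(ψ (ψ c))^2*δ*(ψ (ψ δ)) + (4 : F)*(ψ c)^2*(ψ (ψ c))^2*δ*(ψ δ) + (3 : F)*(ψ c)^2*(ψ (ψ c))^2*δ^2 + (ψ (ψ a))*(ψ (ψ δ)) + (ψ (ψ a))*(ψ δ) + (2 : F)*(ψ (ψ a))*δ + (ψ (ψ a))*(ψ (ψ c))^2*δ + (ψ (ψ a))*(ψ c)^2*(ψ (ψ δ)) + (ψ (ψ a))*(ψ c)^2*(ψ δ) + (ψ (ψ a))*(ψ c)^2*δ + (-1 : F)*(ψ (ψ a))^2 + (2 : F)*(ψ a)*(ψ δ) + (2 : F)*(ψ a)*δ + (ψ a)*(ψ (ψ c))^2*(ψ δ) + (ψ a)*(ψ (ψ c))^2*δ + (ψ a)*(ψ c)^2*(ψ δ) + (ψ a)*(ψ c)^2*δ + (-1 : F)*(ψ a)*(ψ (ψ a)) +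 a*(ψ δ) + a*(ψ c)^2*(ψ δ) + (-1 : F)*a*(ψ (ψ a)) + (-1 : F)*a*(ψ a) + (-2 : F)*(ψ (ψ x))*(ψ (ψ a)) + (-1 : F)*(ψ (ψ x))*(ψ (ψ a))*(ψ (ψ c))^2 + (-1 : F)*(ψ (ψ x))*(ψ (ψ a))*(ψ c)^2 + (-1 : F)*(ψ (ψ x))^2 + (-1 : F)*(ψ (ψ x))^2*(ψ (ψ c))^2 + (-1 : F)*(ψ (ψ x))^2*(ψ c)^2 + (-1 : F)*(ψ (ψ x))^2*(ψ c)^2*(ψ (ψ c))^2 + (ψ x)*(ψ (ψ δ)) + (2 : F)*(ψ x)*(ψ δ) + (3 : F)*(ψ x)*δ + (ψ x)*(ψ (ψ c))^2*(ψ (ψ δ)) + (2 : F)*(ψ x)*(ψ (ψ c))^2*(ψ δ) + (3 : F)*(ψ x)*(ψ (ψ c))^2*δ + (ψ x)*(ψ c)^2*(ψ (ψ δ)) + (2 : F)*(ψ x)*(ψ c)^2*(ψ δ) + (3 : F)*(ψ x)*(ψ c)^2*δ + (ψ x)*(ψ c)^2*(ψ (ψ c))^2*(ψ (ψ δ)) +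 (2 : F)*(ψ x)*(ψ c)^2*(ψ (ψ c))^2*(ψ δ) + (3 : F)*(ψ x)*(ψ c)^2*(ψ (ψ c))^2*δ + (ψ x)*(ψ a) + (ψ x)*(ψ a)*(ψ c)^2 + (-1 : F)*(ψ x)*(ψ (ψ x)) + (-1 : F)*(ψ x)*(ψ (ψ x))*(ψ (ψ c))^2 + (-1 : F)*(ψ x)*(ψ (ψ x))*(ψ c)^2 + (-1 : F)*(ψ x)*(ψ (ψ x))*(ψ c)^2*(ψ (ψ c))^2 + x*(ψ (ψ δ)) + x*(ψ δ) + (2 : F)*x*δ + x*(ψ (ψ c))^2*(ψ (ψ δ)) + x*(ψ (ψ c))^2*(ψ δ) + (2 : F)*x*(ψ (ψ c))^2*δ + x*(ψ c)^2*(ψ (ψ δ)) + x*(ψ c)^2*(ψ δ) + (2 : F)*x*(ψ c)^2*δ + x*(ψ c)^2*(ψ (ψ c))^2*(ψ (ψ δ)) + x*(ψ c)^2*(ψ (ψ c))^2*(ψ δ) + (2 : F)*x*(ψ c)^2*(ψ (ψ c))^2*δ + (-1 : F)*x*a + (-1 : F)*x*a*(ψ c)^2 + (-1 : F)*x*(ψ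 (ψ x)) + (-1 : F)*x*(ψ (ψ x))*(ψ (ψ c))^2 + (-1 : F)*x*(ψ (ψ x))*(ψ c)^2 + (-1 : F)*x*(ψ (ψ x))*(ψ c)^2*(ψ (ψ c))^2)*htwo
    have hquart := coreQuartic htwo (1 + c^2) (1 + (ψ c)^2) (1 + (ψ (ψ c))^2) (δ + (ψ δ) + (ψ (ψ δ))) (((1 + c^2) + (1 + (ψ c)^2))*((ψ a) + a) + (1 + c^2)*(1 + (ψ c)^2)*(δ + (ψ δ) + (ψ (ψ δ)))) (((1 + c^2) + (1 + (ψ c)^2))*((ψ (ψ a)) + (ψ a))) (((1 + (ψ c)^2) + (1 + (ψ (ψ c))^2))*((ψ (ψ a)) + (ψ a)) + (1 + (ψ c)^2)*(1 + (ψ (ψ c))^2)*(δ + (ψ δ) + (ψ (ψ δ)))) ((1 + c^2)*(1 + (ψ c)^2)*δ^2 + (1 + c^2)*(ψ b)^2 + (1 + (ψ c)^2)*b^2 + (1 + c^2)*((ψ (ψ a)) + (ψ a))*(δ + (ψ δ) + (ψ (ψ δ))) + (1 + c^2)*(ψ (ψ a))^2 + (1 + (ψ c)^2)*a^2 + (c^2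 + (ψ c)^2)*((ψ a)^2 + (ψ a)*(ψ (ψ a)) + a*(ψ (ψ a)) + a*(ψ a))) ((1 + (ψ c)^2)*(1 + (ψ (ψ c))^2)*(ψ δ)^2 + (1 + (ψ c)^2)*(ψ (ψ b))^2 + (1 + (ψ (ψ c))^2)*(ψ b)^2 + (1 + (ψ c)^2)*(a + (ψ (ψ a)))*(δ + (ψ δ) + (ψ (ψ δ))) + (1 + (ψ c)^2)*a^2 + (1 + (ψ (ψ c))^2)*(ψ a)^2 + ((ψ c)^2 + (ψ (ψ c))^2)*((ψ (ψ a))^2 + (ψ (ψ a))*a + (ψ a)*a + (ψ a)*(ψ (ψ a)))) (((1 + (ψ c)^2) + (1 + (ψ (ψ c))^2))*((ψ a) + a) + (1 + (ψ c)^2)*(1 + (ψ (ψ c))^2)*(δ + (ψ δ) + (ψ (ψ δ))))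
      ((ψ x) + x + δ) ((ψ (ψ x)) + (ψ x) + (ψ δ)) hQ1 hPP
    exact hquart
end

section
/- Let m be a positive integer, n = 2m, q = 3^n, and let δ ∈ F_q satisfy Tr_m^{2m}(δ) = 0. Define F : F_q → F_q by F(x) = (x^{3^m} − x + δ)^{3^{2m−1} + 2·3^{m−1}} + x. Then for every c ∈ F_q not in the subfield F_{3^m} (i.e., c^{3^m} ≠ c), F is PcN: for all a, b ∈ F_q, the equation F(x+a) − c·F(x) = b has exactly one solution x ∈ F_q. -/
/-! For `y = x^(3^m) - x + δ` the trace condition on `δ` gives `y^(3^m) = -y`, and on such `y`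
the exponent `d = 3^(2m-1) + 2·3^(m-1)` acts trivially: `3d = 3^(2m) + 2·3^m`, so
`(y^d)^3 = (y^(3^m))^(3^m) · (y^(3^m))^2 = y · y^2`, and cubing is injective in characteristic 3.
Hence `F(x) = x^(3^m) + δ`, and `F(x + a) - c F(x) = (1 - c) x^(3^m) + a^(3^m) + (1 - c) δ` is a
bijection in `x` as soon as `c ≠ 1`. -/

section CharThree

variable {K : Type*} [Field K] [CharP K 3]

theorem pow_exponent_eq_self_of_pow_eq_neg {m : ℕ} (hm : 0 < m) {y : K} (hy : y ^ 3 ^ m = -y) :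
    y ^ (3 ^ (2 * m - 1) + 2 * 3 ^ (m - 1)) = y := by
  have hexp : (3 ^ (2 * m - 1) + 2 * 3 ^ (m - 1)) * 3 = 3 ^ m * 3 ^ m + 3 ^ m * 2 := by
    obtain ⟨k, rfl⟩ := Nat.exists_eq_add_of_lt hm
    rw [show 2 * (0 + k + 1) - 1 = 2 * k + 1 by omega, show 0 + k + 1 - 1 = k by omega]
    ring
  apply frobenius_inj K 3
  calc (y ^ (3 ^ (2 * m - 1) + 2 * 3 ^ (m - 1))) ^ 3
      = (y ^ 3 ^ m) ^ 3 ^ m * (y ^ 3 ^ m) ^ 2 := by rw [← pow_mul, hexp, pow_add, pow_mul, pow_mul]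
    _ = y ^ 3 := by rw [hy, Odd.neg_pow (Odd.pow (by decide)), hy]; ring

theorem pow_sub_add_pow_eq_neg [Fintype K] {m : ℕ} (hK : Fintype.card K = 3 ^ (2 * m)) {δ : K}
    (hδ : δ + δ ^ 3 ^ m = 0) (x : K) :
    (x ^ 3 ^ m - x + δ) ^ 3 ^ m = -(x ^ 3 ^ m - x + δ) := by
  have hx : (x ^ 3 ^ m) ^ 3 ^ m = x := by
    rw [← pow_mul, ← pow_add, ← two_mul, ← hK, FiniteField.pow_card]
  rw [add_pow_char_pow, sub_pow_char_pow, hx]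
  linear_combination hδ

end CharThree

theorem bijective_add_map_add_sub_mul {K : Type*} [Field K] (σ : K ≃+ K) {c : K} (hc : c ≠ 1)
    (e a : K) : Function.Bijective fun x => (σ (x + a) + e) - c * (σ x + e) := by
  have hc' : 1 - c ≠ 0 := sub_ne_zero.mpr hc.symm
  convert (Equiv.addRight (σ a + (1 - c) * e)).bijective.comp
    ((mulLeft_bijective₀ _ hc').comp σ.bijective) using 1
  funext x
  simp only [Function.comp_apply, Equiv.coe_addRight, map_add]
  ring

theorem stmt_15 (m : ℕ) (hm : 0 < m) (F : Type*) [Field F] [Fintype F]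
    (hF : Fintype.card F = 3 ^ (2 * m)) (δ c : F)
    (hδ : δ + δ ^ (3 ^ m) = 0)
    (hc : c ^ (3 ^ m) ≠ c)
    (G : F → F)
    (hG : ∀ x, G x = (x ^ (3 ^ m) - x + δ) ^ (3 ^ (2 * m - 1) + 2 * 3 ^ (m - 1)) + x) :
    ∀ a b : F, ∃! x : F, G (x + a) - c * G x = b := by
  intro a b
  have : Fact (Nat.Prime 3) := ⟨Nat.prime_three⟩
  have : CharP F 3 := charP_of_card_eq_prime_pow hF
  have hG_frobenius : G = fun x => iterateFrobeniusEquiv F 3 m x + δ := by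
    funext x
    rw [hG, pow_exponent_eq_self_of_pow_eq_neg hm (pow_sub_add_pow_eq_neg hF hδ x),
      iterateFrobeniusEquiv_def]
    ring
  have hc_ne_one : c ≠ 1 := fun h => hc (by rw [h, one_pow])
  subst hG_frobenius
  exact (bijective_add_map_add_sub_mul (iterateFrobeniusEquiv F 3 m).toAddEquiv hc_ne_one δ a
    ).existsUnique b
end

section
/- Let m be a positive integer, n = 2m, q = 3^n, and let δ ∈ F_q satisfy Tr_m^{2m}(δ) ≠ 0. Define F : F_q → F_q by F(x) = (x^{3^m} − x + δ)^{3^{2m−1} + 2·3^{m−1}} + x. Then for every c ∈ F_q not in the subfield F_{3^m} (i.e., c^{3^m} ≠ c), the c-differential uniformity of F equals 3: for all a, b ∈ F_q the equation F(x+a) − c·F(x) = b has at most three solutions x ∈ F_q, and there exist a, b ∈ F_q for which it has exactly three solutions. -/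
/-!
Write `σ x = x ^ 3 ^ m`, an involution of `F`, and `u x = σ x - x + δ`, so that `σ (u x) = s - u x`
with `s = δ + σ δ`. The exponent of `G` is chosen so that `G x ^ 3 = u x * (s - u x) ^ 2 + x ^ 3`,
and cubing is additive and injective in characteristic 3, so it suffices to study the cubed
equation. It expresses `(1 - c ^ 3) * x ^ 3` through `t = u x`; eliminating `x ^ 3` against its
image under `σ` leaves a cubic in `t` with leading coefficient `-(1 - c ^ 3) * (1 - σ c ^ 3) ≠ 0`,
and `t` determines `x`, so there are at most three solutions.

For the lower bound, put `g = σ c - c` and pick a `σ`-fixed cube root `η` of `s * g ^ 2`. The cubed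
difference of the equations at `x + d` and at `x` is an explicit expression in `u x`, `σ d - d`,
`d ^ 3` and `σ a - a`; for `d = g` and `d = η - g` it vanishes for one common choice of `u x` and
`σ a - a`. Both values are attained, since in characteristic 3 every `z` with `σ z = -z` satisfies
`σ z - z = z`. This gives the three solutions `x`, `x + g`, `x + η - g`.
-/

open Polynomial

section Involution

variable {F : Type*} [Field F] (σ : F →+* F)

def frobShift (δ x : F) : F := σ x - x + δ

lemma frobShift_add (δ x a : F) : frobShift σ δ (x + a) = frobShift σ δ x + (σ a - a) := by
  simp only [frobShift, map_add]; ring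

variable {σ}

lemma map_frobShift (hσ : Function.Involutive σ) (δ x : F) :
    σ (frobShift σ δ x) = δ + σ δ - frobShift σ δ x := by
  simp only [frobShift, map_add, map_sub, hσ x]; ring

lemma ne_one_and_map_ne_one (hσ : Function.Involutive σ) {c : F} (hc : σ c ≠ c) :
    c ≠ 1 ∧ σ c ≠ 1 :=
  ⟨by rintro rfl; exact hc (map_one σ), fun h => hc (by rw [h, ← hσ c, h, map_one])⟩

end Involution

section CharThree

variable {F : Type*} [Field F] [CharP F 3]

lemma one_sub_cube_ne_zero {c : F} (hc : c ≠ 1) : 1 - c ^ 3 ≠ 0 := by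
  rw [← one_pow 3, ← sub_pow_char]
  exact pow_ne_zero 3 (sub_ne_zero.mpr hc.symm)

lemma cube_eq_of_solution {G H : F → F} (hG : ∀ y, G y ^ 3 = H y + y ^ 3) {a b c x : F}
    (hx : G (x + a) - c * G x = b) :
    (1 - c ^ 3) * x ^ 3 = b ^ 3 - a ^ 3 - H (x + a) + c ^ 3 * H x := by
  have h := congrArg (· ^ 3) hx
  simp only [sub_pow_char, mul_pow, hG, add_pow_char] at h
  linear_combination h

variable {σ : F →+* F} {δ : F}

lemma frobShift_sub_of_add_map_eq {τ : F} (hτ : τ + σ τ = δ + σ δ) :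
    frobShift σ δ (τ - δ) = τ := by
  simp only [frobShift, map_sub]
  linear_combination hτ + (δ - τ) * CharP.ofNat_eq_zero F 3

lemma map_sub_self_of_map_eq_neg {z : F} (hz : σ z = -z) : σ z - z = z := by
  rw [hz]; linear_combination (-z) * CharP.ofNat_eq_zero F 3

lemma exists_cube_root_of_map_eq [Finite F] {z : F}
    (hz : σ z = z) : ∃ η : F, η ^ 3 = z ∧ σ η = η := by
  obtain ⟨η, hη⟩ := surjective_frobenius F 3 z
  rw [frobenius_def] at hη
  refine ⟨η, hη, frobenius_inj F 3 ?_⟩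
  change σ η ^ 3 = η ^ 3
  rw [← map_pow, hη, hz]

variable (σ δ) in
/-- Eliminating `x ^ 3` between the cubed equation `G (x + a) - c * G x = b` and its image under
`σ` leaves this cubic in `t = frobShift σ δ x`. -/
noncomputable def solutionPoly (c a b : F) : F[X] :=
  C (1 - σ c ^ 3) * (C (b ^ 3 - a ^ 3) - (X + C (σ a - a)) * (C (δ + σ δ) - X - C (σ a - a)) ^ 2
      + C (c ^ 3) * X * (C (δ + σ δ) - X) ^ 2)
  + C ((1 - c ^ 3) * (1 - σ c ^ 3)) * (X - C δ) ^ 3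
  - C (1 - c ^ 3) * (C (σ b ^ 3 - σ a ^ 3)
      - (C (δ + σ δ) - X - C (σ a - a)) * (X + C (σ a - a)) ^ 2
      + C (σ c ^ 3) * (C (δ + σ δ) - X) * X ^ 2)

lemma natDegree_solutionPoly (hσ : Function.Involutive σ) {c : F} (hc : σ c ≠ c) (a b : F) :
    (solutionPoly σ δ c a b).natDegree = 3 := by
  obtain ⟨hc₁, hc₂⟩ := ne_one_and_map_ne_one hσ hc
  unfold solutionPoly
  compute_degree!
  convert neg_ne_zero.mpr (mul_ne_zero (one_sub_cube_ne_zero hc₁) (one_sub_cube_ne_zero hc₂))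
    using 2
  push_cast; ring

variable {G : F → F}

lemma eval_solutionPoly (hσ : Function.Involutive σ)
    (hG : ∀ y, G y ^ 3 = frobShift σ δ y * σ (frobShift σ δ y) ^ 2 + y ^ 3) {a b c x : F}
    (hx : G (x + a) - c * G x = b) : (solutionPoly σ δ c a b).eval (frobShift σ δ x) = 0 := by
  have h := cube_eq_of_solution hG hx
  have hσh := congrArg σ h
  rw [frobShift_add] at h hσh
  have hσt := map_frobShift hσ δ x
  set t := frobShift σ δ x with ht
  have hσx : σ x = x + t - δ := by rw [ht, frobShift]; ring
  simp only [map_add, map_sub, map_mul, map_pow, map_one, hσ _, hσt, hσx, add_pow_char,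
    sub_pow_char] at h hσh
  simp only [solutionPoly, eval_add, eval_sub, eval_mul, eval_pow, eval_C, eval_X]
  linear_combination (1 - c ^ 3) * hσh - (1 - σ c ^ 3) * h
    + (1 - c ^ 3) * (1 - σ c ^ 3) * t * δ * (δ - t) * CharP.ofNat_eq_zero F 3

lemma ncard_solutions_le_three (hσ : Function.Involutive σ)
    (hG : ∀ y, G y ^ 3 = frobShift σ δ y * σ (frobShift σ δ y) ^ 2 + y ^ 3) {c : F}
    (hc : σ c ≠ c) (a b : F) : {x | G (x + a) - c * G x = b}.ncard ≤ 3 := by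
  have hdeg := natDegree_solutionPoly (δ := δ) hσ hc a b
  have hne : solutionPoly σ δ c a b ≠ 0 := by rintro h; simp [h] at hdeg
  calc {x | G (x + a) - c * G x = b}.ncard
      ≤ ((solutionPoly σ δ c a b).rootSet F).ncard := by
        refine Set.ncard_le_ncard_of_injOn (frobShift σ δ) (fun x hx => ?_) ?_
        · rw [mem_rootSet, coe_aeval_eq_eval]
          exact ⟨hne, eval_solutionPoly hσ hG hx⟩
        · intro x hx y hy hxy
          have hx' := cube_eq_of_solution hG hx
          have hy' := cube_eq_of_solution hG hy
          rw [frobShift_add] at hx' hy'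
          rw [hxy, ← hy'] at hx'
          exact frobenius_inj F 3
            (mul_left_cancel₀ (one_sub_cube_ne_zero (ne_one_and_map_ne_one hσ hc).1) hx')
    _ ≤ 3 := hdeg ▸ ncard_rootSet_le _ _

lemma shifted_solution_eq (hσ : Function.Involutive σ)
    (hG : ∀ y, G y ^ 3 = frobShift σ δ y * σ (frobShift σ δ y) ^ 2 + y ^ 3) {c x d a w : F}
    (hw : σ d - d = w)
    (h : (1 - c ^ 3) * (w ^ 3 + (δ + σ δ) * w ^ 2 + (δ + σ δ) ^ 2 * w + d ^ 3
      - (δ + σ δ) * w * frobShift σ δ x) = (δ + σ δ) * w * (σ a - a)) :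
    G (x + d + a) - c * G (x + d) = G (x + a) - c * G x := by
  apply frobenius_inj F 3
  simp only [frobenius_def, sub_pow_char, mul_pow, hG, map_frobShift hσ, add_pow_char]
  simp only [frobShift_add, hw]
  set s := δ + σ δ
  set A := σ a - a
  set t := frobShift σ δ x
  linear_combination h + (-s * t * w + t ^ 2 * w + t * w ^ 2 + 2 * A * t * w - s * w ^ 2
    - A * s * w + A * w ^ 2 + A ^ 2 * w + c ^ 3 * s * t * w - c ^ 3 * t ^ 2 * w
    - c ^ 3 * t * w ^ 2 + c ^ 3 * s * w ^ 2) * CharP.ofNat_eq_zero F 3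

/-- The last equation is the condition of `shifted_solution_eq` for `d = σ c - c`; the formulas
for `τ` and `A` come from solving it together with its image under `σ`. -/
lemma exists_solution_params (hσ : Function.Involutive σ) {s c : F} (hs : σ s = s) (hs0 : s ≠ 0)
    (hc : σ c ≠ c) : ∃ τ A : F, τ + σ τ = s ∧ σ A = -A ∧
      s * A = (1 - c ^ 3) * (s ^ 2 + s * (σ c - c) - (σ c - c) ^ 2 - s * τ) := by
  have h3 : (3 : F) = 0 := CharP.ofNat_eq_zero F 3
  set g := σ c - c
  have hσg : σ g = -g := by simp only [g, map_sub, hσ c]; ring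
  have hsg : s * g ^ 3 ≠ 0 := mul_ne_zero hs0 (pow_ne_zero 3 (sub_ne_zero.mpr hc))
  have hg3 : g ^ 3 = σ c ^ 3 - c ^ 3 := sub_pow_char (σ c) c
  set τ := ((1 - c ^ 3) * (g ^ 2 + s ^ 2) + g ^ 4 * (s + g)) / (s * g ^ 3)
  have hτ : s * g ^ 3 * τ = (1 - c ^ 3) * (g ^ 2 + s ^ 2) + g ^ 4 * (s + g) :=
    mul_div_cancel₀ _ hsg
  have hστ := congrArg σ hτ
  simp only [map_add, map_sub, map_mul, map_pow, map_one, hs, hσg] at hστ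
  have hτσ : τ + σ τ = s := mul_left_cancel₀ hsg <| by
    linear_combination hτ - hστ - (g ^ 2 + s ^ 2) * hg3 + g ^ 5 * h3
  set A := (1 - c ^ 3) * (s ^ 2 + s * g - g ^ 2 - s * τ) / s
  have hA : s * A = (1 - c ^ 3) * (s ^ 2 + s * g - g ^ 2 - s * τ) := mul_div_cancel₀ _ hs0
  have hσA := congrArg σ hA
  simp only [map_add, map_sub, map_mul, map_pow, map_one, hs, hσg] at hσA
  refine ⟨τ, A, hτσ, mul_left_cancel₀ hs0 ?_, hA⟩
  linear_combination hσA + hA - (1 - σ c ^ 3) * s * hτσ + (s * τ - (s * g + g ^ 2)) * hg3 - hτ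
    + (c ^ 3 - 1) * g ^ 2 * h3

lemma exists_three_le_ncard_solutions [Finite F] (hσ : Function.Involutive σ)
    (hG : ∀ y, G y ^ 3 = frobShift σ δ y * σ (frobShift σ δ y) ^ 2 + y ^ 3)
    (hδ : δ + σ δ ≠ 0) {c : F} (hc : σ c ≠ c) :
    ∃ a b : F, 3 ≤ {x | G (x + a) - c * G x = b}.ncard := by
  have h3 : (3 : F) = 0 := CharP.ofNat_eq_zero F 3
  have hσs : σ (δ + σ δ) = δ + σ δ := by rw [map_add, hσ δ, add_comm]
  obtain ⟨τ, A, hτ, hσA, hA⟩ := exists_solution_params hσ hσs hδ hc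
  set s := δ + σ δ
  set g := σ c - c
  have hσg : σ g = -g := by simp only [g, map_sub, hσ c]; ring
  have hg0 : g ≠ 0 := sub_ne_zero.mpr hc
  obtain ⟨η, hη, hση⟩ := exists_cube_root_of_map_eq (σ := σ) (z := s * g ^ 2) <| by
    rw [map_mul, map_pow, hσs, hσg, neg_sq]
  set e := η - g
  have hσe : σ e - e = -g := by
    simp only [e, map_sub, hση, hσg]; linear_combination g * h3
  have he3 : e ^ 3 = s * g ^ 2 - g ^ 3 := by rw [sub_pow_char, hη]
  have hx₀ : frobShift σ δ (τ - δ) = τ := frobShift_sub_of_add_map_eq hτ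
  have hAA : σ A - A = A := map_sub_self_of_map_eq_neg hσA
  have hsol_g := shifted_solution_eq hσ hG (a := A) (x := τ - δ) (c := c)
    (map_sub_self_of_map_eq_neg hσg) <| by
      rw [hx₀, hAA]
      linear_combination -g * hA + (1 - c ^ 3) * g ^ 3 * h3
  have hsol_e := shifted_solution_eq hσ hG (a := A) (x := τ - δ) (c := c) hσe <| by
    rw [hx₀, hAA]
    linear_combination g * hA + (1 - c ^ 3) * he3
      + (c ^ 3 * g ^ 3 - c ^ 3 * g ^ 2 * s - g ^ 3 + g ^ 2 * s) * h3
  have he0 : e ≠ 0 := fun h => hg0 (by simpa [h] using hσe)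
  have hge : g ≠ e := fun h => hg0 <| by
    have := map_sub_self_of_map_eq_neg hσg
    rw [h, hσe] at this
    linear_combination this - h + g * h3
  refine ⟨A, G (τ - δ + A) - c * G (τ - δ), ?_⟩
  calc 3 = ({τ - δ, τ - δ + g, τ - δ + e} : Set F).ncard := by
        refine (Set.ncard_eq_three.mpr ⟨_, _, _, ?_, ?_, ?_, rfl⟩).symm <;> simpa
    _ ≤ _ := Set.ncard_le_ncard <| by
        rintro y (rfl | rfl | rfl)
        exacts [rfl, hsol_g, hsol_e]

end CharThree

lemma pow_exponent_cube_eq {F : Type*} [Field F] [Fintype F] {m : ℕ} (hm : 0 < m)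
    (hF : Fintype.card F = 3 ^ (2 * m)) (x : F) :
    (x ^ (3 ^ (2 * m - 1) + 2 * 3 ^ (m - 1))) ^ 3 = x * (x ^ 3 ^ m) ^ 2 := by
  have h₁ : 3 ^ (2 * m - 1) * 3 = 3 ^ (2 * m) := by rw [← pow_succ]; congr 1; omega
  have h₂ : 3 ^ (m - 1) * 3 = 3 ^ m := by rw [← pow_succ]; congr 1; omega
  rw [← pow_mul, add_mul, h₁, mul_assoc, h₂, pow_add, ← hF, FiniteField.pow_card,
    mul_comm 2, pow_mul]

theorem stmt_16 (m : ℕ) (hm : 0 < m) (F : Type*) [Field F] [Fintype F]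
    (hF : Fintype.card F = 3 ^ (2 * m)) (δ c : F)
    (hδ : δ + δ ^ (3 ^ m) ≠ 0)
    (hc : c ^ (3 ^ m) ≠ c)
    (G : F → F)
    (hG : ∀ x, G x = (x ^ (3 ^ m) - x + δ) ^ (3 ^ (2 * m - 1) + 2 * 3 ^ (m - 1)) + x) :
    (∀ a b : F, {x : F | G (x + a) - c * G x = b}.ncard ≤ 3) ∧
    (∃ a b : F, {x : F | G (x + a) - c * G x = b}.ncard = 3) := by
  have : CharP F 3 := charP_of_card_eq_prime_pow hF
  let σ := iterateFrobenius F 3 m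
  have hσ : Function.Involutive σ := fun x => by
    change (x ^ 3 ^ m) ^ 3 ^ m = x
    rw [← pow_mul, ← pow_add, ← two_mul, ← hF, FiniteField.pow_card]
  have hGσ : ∀ y, G y ^ 3 = frobShift σ δ y * σ (frobShift σ δ y) ^ 2 + y ^ 3 := fun y => by
    rw [hG, add_pow_char, pow_exponent_cube_eq hm hF]; rfl
  have hle := ncard_solutions_le_three hσ hGσ hc
  obtain ⟨a, b, hab⟩ := exists_three_le_ncard_solutions hσ hGσ hδ hc
  exact ⟨hle, a, b, (hle a b).antisymm hab⟩
end
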